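/- arXiv:2411.14287 — 11 statements merged into one kernel-verified Lean document; each statement's English description precedes it below -/
import Mathlib

section
/- Let n ≥ 2 be an integer, let ε ∈ {±1}^{n-1} be a sign pattern, and let A = [c^1 | ⋯ | c^n] be an (n−1)×n real SSR(ε) matrix with columns c^1, …, c^n. Then for every k ∈ {1, …, n}, the k-th column of A can be expressed as a real linear combination of the remaining columns, c^k = Σ_{i=1, i≠k}^{n} x_i c^i, where for each i ≠ k the coefficient x_i is nonzero and sign(x_i) = (−1)^i if k is odd, and sign(x_i) = (−1)^{i−1} if k is even. -/
/-!
Let `d i` be the maximal minor of the `(n - 1) × n` matrix `A` obtained by deleting column `i`.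
Expanding along the first row the determinant of `A` with one of its rows repeated on top gives
`∑ i, (-1)^i d i c^i = 0`, so `c^k = ∑_{i ≠ k} (-1)^(i+k+1) (d i / d k) c^i` whenever
`d k ≠ 0` (indices from `0`). For an SSR matrix all the `d i` have the sign `ε_{n-1}` of the
`(n - 1) × (n - 1)` minors, hence each ratio `d i / d k` is positive and the coefficient of `c^i`
has sign `(-1)^(i+k+1)`.
-/

open Finset

/-- `A` is strictly sign regular of order `p` with sign pattern `ε` (`SSR_p(ε)`):
for every `k ∈ {1, …, p}` (here `k = kk.val + 1` for `kk : Fin p`), every `k × k` minor of `A`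
(the determinant of the submatrix on any `k` rows and `k` columns taken in increasing order)
has sign `ε k`, i.e. `ε k` times the minor is strictly positive. -/
def IsSSRp (p : ℕ) {m n : ℕ} (A : Matrix (Fin m) (Fin n) ℝ) (ε : Fin p → ℝ) : Prop :=
  ∀ (kk : Fin p) (r : Fin (kk.val + 1) → Fin m) (c : Fin (kk.val + 1) → Fin n),
    StrictMono r → StrictMono c → 0 < ε kk * (A.submatrix r c).det

namespace Matrix

variable {m : ℕ}

def delColMinor {R : Type*} [CommRing R] (A : Matrix (Fin m) (Fin (m + 1)) R)
    (j : Fin (m + 1)) : R :=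
  (A.submatrix id j.succAbove).det

theorem sum_neg_one_pow_mul_mul_delColMinor {R : Type*} [CommRing R]
    (A : Matrix (Fin m) (Fin (m + 1)) R) (r : Fin m) :
    ∑ j : Fin (m + 1), (-1) ^ (j : ℕ) * A r j * A.delColMinor j = 0 := by
  have hdet : (of (vecCons (A r) A)).det = 0 :=
    det_zero_of_row_eq (Fin.succ_ne_zero r).symm rfl
  rwa [det_succ_row_zero] at hdet

theorem col_eq_sum_of_delColMinor_ne_zero {K : Type*} [Field K]
    (A : Matrix (Fin m) (Fin (m + 1)) K) {k : Fin (m + 1)}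
    (hk : A.delColMinor k ≠ 0) (r : Fin m) :
    A r k = ∑ i ∈ univ.erase k, (-1) ^ ((i : ℕ) + k + 1) *
      (A.delColMinor i / A.delColMinor k) * A r i := by
  have hsum := sum_neg_one_pow_mul_mul_delColMinor A r
  rw [← add_sum_erase _ _ (mem_univ k)] at hsum
  have hrest := eq_neg_of_add_eq_zero_right hsum
  have hsq : ((-1 : K) ^ (k : ℕ)) * (-1) ^ (k : ℕ) = 1 := by rw [← mul_pow]; norm_num
  calc A r k
        = -((-1) ^ (k : ℕ) / A.delColMinor k) *
            -((-1) ^ (k : ℕ) * A r k * A.delColMinor k) := by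
          field_simp; linear_combination (-A r k) * hsq
    _ = ∑ i ∈ univ.erase k,
          (-1) ^ ((i : ℕ) + k + 1) * (A.delColMinor i / A.delColMinor k) * A r i := by
          rw [← hrest, mul_sum]
          refine sum_congr rfl fun i _ => ?_
          rw [pow_succ, pow_add]
          ring

end Matrix

theorem IsSSRp.delColMinor_mul_pos {p m : ℕ} {A : Matrix (Fin (m + 1)) (Fin (m + 2)) ℝ}
    {ε : Fin p → ℝ} (hA : IsSSRp p A ε) (hm : m < p) (i j : Fin (m + 2)) :
    0 < A.delColMinor i * A.delColMinor j := by
  have hi := hA ⟨m, hm⟩ id i.succAbove strictMono_id (Fin.strictMono_succAbove i)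
  have hj := hA ⟨m, hm⟩ id j.succAbove strictMono_id (Fin.strictMono_succAbove j)
  have hij : 0 < ε ⟨m, hm⟩ ^ 2 * (A.delColMinor i * A.delColMinor j) := by
    simpa only [Matrix.delColMinor, sq, mul_mul_mul_comm] using mul_pos hi hj
  exact pos_of_mul_pos_right hij (sq_nonneg _)

theorem ite_even_neg_one_pow {R : Type*} [Ring R] (i k : ℕ) :
    (if Even k then (-1 : R) ^ (i + 1) else (-1 : R) ^ i) = (-1) ^ (i + k + 1) := by
  rcases Nat.even_or_odd k with hk | hk
  · rw [if_pos hk, add_right_comm, pow_add _ _ k, hk.neg_one_pow, mul_one]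
  · rw [if_neg (Nat.not_even_iff_odd.mpr hk), pow_succ, pow_add, hk.neg_one_pow,
      mul_neg_one, mul_neg_one, neg_neg]

theorem stmt_0_general (n : ℕ) (ε : Fin (min (n - 1) n) → ℝ)
    (A : Matrix (Fin (n - 1)) (Fin n) ℝ) (hA : IsSSRp (min (n - 1) n) A ε)
    (k : Fin n) :
    ∃ x : Fin n → ℝ,
      (∀ r : Fin (n - 1), A r k = ∑ i ∈ Finset.univ.erase k, x i * A r i) ∧
      ∀ i : Fin n, i ≠ k →
        0 < (if Even k.val then (-1 : ℝ) ^ (i.val + 1) else (-1 : ℝ) ^ i.val) * x i := by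
  obtain _ | _ | m := n
  · exact k.elim0
  · exact ⟨0, fun r => r.elim0, fun i hi => absurd (Subsingleton.elim (α := Fin 1) i k) hi⟩
  have hpos := hA.delColMinor_mul_pos (m := m) (by omega)
  have hk : A.delColMinor k ≠ 0 := left_ne_zero_of_mul (hpos k k).ne'
  refine ⟨fun i => (-1) ^ ((i : ℕ) + k + 1) * (A.delColMinor i / A.delColMinor k),
    A.col_eq_sum_of_delColMinor_ne_zero hk, fun i _ => ?_⟩
  rw [ite_even_neg_one_pow, ← mul_assoc, ← mul_pow, neg_one_mul, neg_neg, one_pow, one_mul,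
    ← mul_div_mul_right _ _ hk]
  exact div_pos (hpos i k) (hpos k k)

theorem stmt_0 (n : ℕ) (hn : 2 ≤ n) (ε : Fin (min (n - 1) n) → ℝ)
    (hε : ∀ i, ε i = 1 ∨ ε i = -1)
    (A : Matrix (Fin (n - 1)) (Fin n) ℝ) (hA : IsSSRp (min (n - 1) n) A ε)
    (k : Fin n) :
    ∃ x : Fin n → ℝ,
      (∀ r : Fin (n - 1), A r k = ∑ i ∈ Finset.univ.erase k, x i * A r i) ∧
      ∀ i : Fin n, i ≠ k →
        0 < (if Even k.val then (-1 : ℝ) ^ (i.val + 1) else (-1 : ℝ) ^ i.val) * x i :=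
  stmt_0_general n ε A hA k
end

section
/- Suppose m, n ≥ p ≥ 1 are integers, ε = (ε_1, …, ε_p) ∈ {±1}^p, and A is an m×n real matrix. Then A is SSR_p(ε) if and only if for every k ∈ {1, …, p}, every k×k contiguous minor of A has sign ε_k. -/
theorem Pi.single_comp_of_injective {α β R : Type*} [DecidableEq α] [DecidableEq β] [Zero R]
    {f : α → β} (hf : f.Injective) (i : α) (x : R) :
    Pi.single (f i) x ∘ f = Pi.single i x := by
  funext j
  simp [Pi.single_apply, hf.eq_iff]

def Fin.consecutive {k n : ℕ} (a : ℕ) (h : a + k ≤ n) : Fin k → Fin n :=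
  fun i => ⟨a + i, by omega⟩

theorem Fin.consecutive_strictMono {k n a : ℕ} (h : a + k ≤ n) :
    StrictMono (Fin.consecutive a h) :=
  fun _ _ hij => Nat.add_lt_add_left hij a

namespace Matrix

section Cofactor

variable {R : Type*} {n : ℕ}

theorem submatrix_of_cons {m l : ℕ} (u : Fin l → R) (N : Fin n → Fin l → R)
    (f : Fin m → Fin l) :
    (of (Fin.cons u N)).submatrix id f = of (Fin.cons (u ∘ f) fun i => N i ∘ f) := by
  ext i j
  refine Fin.cases ?_ (fun i => ?_) i <;> rfl

/-- The generalized cross product of the vectors `N i`. -/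
def cofactorVec [CommRing R] (N : Fin n → Fin (n + 1) → R) : Fin (n + 1) → R :=
  fun j => (-1) ^ (j : ℕ) * ((of N).submatrix id j.succAbove).det

theorem det_of_cons [CommRing R] (u : Fin (n + 1) → R) (N : Fin n → Fin (n + 1) → R) :
    (of (Fin.cons u N)).det = u ⬝ᵥ cofactorVec N := by
  rw [det_succ_row_zero, dotProduct]
  refine Finset.sum_congr rfl fun j _ => ?_
  rw [cofactorVec, mul_left_comm, ← mul_assoc]
  rfl

theorem det_of_cons_single [CommRing R] (t : Fin (n + 1)) (N : Fin n → Fin (n + 1) → R) :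
    (of (Fin.cons (Pi.single t 1) N)).det =
      (-1) ^ (t : ℕ) * ((of N).submatrix id t.succAbove).det := by
  rw [det_of_cons, single_one_dotProduct, cofactorVec]

end Cofactor

theorem det_eq_zero_of_rows_mem {ι K : Type*} [Fintype ι] [DecidableEq ι] [Field K]
    (A : Matrix ι ι K) {U : Submodule K (ι → K)} (hU : U ≠ ⊤) (hA : ∀ i, A i ∈ U) :
    A.det = 0 := by
  by_contra hdet
  have hspan := (linearIndependent_rows_of_det_ne_zero hdet).span_eq_top_of_card_eq_finrank'
    (by simp)
  exact hU (eq_top_iff.2 (hspan ▸ Submodule.span_le.2 (Set.range_subset_iff.2 hA)))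

section Plucker

variable {K : Type*} [Field K] {j : ℕ} (C : Fin j → Fin (j + 2) → K)

def detCons₂ (x y : Fin (j + 2) → K) : K :=
  (of (Fin.cons x (Fin.cons y C))).det

theorem detCons₂_eq_dotProduct (x y : Fin (j + 2) → K) :
    detCons₂ C x y = x ⬝ᵥ cofactorVec (Fin.cons y C) :=
  det_of_cons _ _

theorem detCons₂_self (x : Fin (j + 2) → K) : detCons₂ C x x = 0 :=
  det_zero_of_row_eq (i := 0) (j := 1) (by simp) rfl

theorem detCons₂_row (i : Fin j) (y : Fin (j + 2) → K) : detCons₂ C (C i) y = 0 :=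
  det_zero_of_row_eq (i := 0) (j := i.succ.succ) (Fin.succ_ne_zero _).symm rfl

theorem detCons₂_swap (x y : Fin (j + 2) → K) : detCons₂ C x y = -detCons₂ C y x := by
  have hswap : of (Fin.cons x (Fin.cons y C)) =
      (of (Fin.cons y (Fin.cons x C))).submatrix (Equiv.swap 0 1) id := by
    ext i l
    refine Fin.cases ?_ (Fin.cases ?_ fun i => ?_) i
    · rfl
    · rfl
    · rw [submatrix_apply, Equiv.swap_apply_of_ne_of_ne (Fin.succ_ne_zero _)
        (by simp [Fin.ext_iff])]
      rfl
  rw [detCons₂, hswap, det_permute, Equiv.Perm.sign_swap zero_ne_one]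
  simp [detCons₂]

theorem detCons₂_eq_zero_of_mem {U : Submodule K (Fin (j + 2) → K)} (hU : U ≠ ⊤)
    (hC : ∀ i, C i ∈ U) {x y : Fin (j + 2) → K} (hx : x ∈ U) (hy : y ∈ U) :
    detCons₂ C x y = 0 :=
  det_eq_zero_of_rows_mem _ hU (Fin.cases hx (Fin.cases hy hC))

theorem detCons₂_plucker (w x y z : Fin (j + 2) → K) :
    detCons₂ C x w * detCons₂ C y z - detCons₂ C y w * detCons₂ C x z
      + detCons₂ C z w * detCons₂ C x y = 0 := by
  set U := Submodule.span K (Set.range C ∪ {w, y, z})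
  have hC : ∀ i, C i ∈ U := fun i => Submodule.subset_span (Or.inl ⟨i, rfl⟩)
  have hw : w ∈ U := Submodule.subset_span (Or.inr (by simp))
  have hy : y ∈ U := Submodule.subset_span (Or.inr (by simp))
  have hz : z ∈ U := Submodule.subset_span (Or.inr (by simp))
  by_cases hU : U = ⊤
  · -- the relation is linear in `x`, so it suffices to check it on the spanning set
    have hx : x ∈ U := hU ▸ Submodule.mem_top
    induction hx using Submodule.span_induction with
    | mem s hs =>
      rcases hs with ⟨i, rfl⟩ | rfl | rfl | rfl
      · simp only [detCons₂_row]; ring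
      · rw [detCons₂_self, detCons₂_swap C z s, detCons₂_swap C s y]; ring
      · rw [detCons₂_self]; ring
      · rw [detCons₂_self, detCons₂_swap C s y]; ring
    | zero => simp only [detCons₂_eq_dotProduct, zero_dotProduct]; ring
    | add a b _ _ ha hb =>
      simp only [detCons₂_eq_dotProduct, add_dotProduct] at ha hb ⊢
      linear_combination ha + hb
    | smul t a _ ha =>
      simp only [detCons₂_eq_dotProduct, smul_dotProduct, smul_eq_mul] at ha ⊢
      linear_combination t * ha
  · rw [detCons₂_eq_zero_of_mem C hU hC hy hz, detCons₂_eq_zero_of_mem C hU hC hy hw,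
      detCons₂_eq_zero_of_mem C hU hC hz hw]
    ring

theorem detCons₂_tail_single {k : ℕ} (W : Fin (k + 1) → Fin (k + 2) → K) (t : Fin (k + 2)) :
    detCons₂ (Fin.tail W) (Pi.single t 1) (W 0) =
      (-1) ^ (t : ℕ) * ((of W).submatrix id t.succAbove).det := by
  have hW : (Fin.cons (W 0) (Fin.tail W) : Fin (k + 1) → Fin (k + 2) → K) = W :=
    Fin.cons_self_tail _
  rw [detCons₂, hW]
  exact det_of_cons_single t W

theorem detCons₂_single_single (s : Fin (j + 2)) (y : Fin (j + 1)) :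
    detCons₂ C (Pi.single s 1) (Pi.single (s.succAbove y) 1) =
      (-1) ^ (s : ℕ) * (-1) ^ (y : ℕ) *
        ((of C).submatrix id (s.succAbove ∘ y.succAbove)).det := by
  rw [detCons₂, det_of_cons_single, submatrix_of_cons,
    Pi.single_comp_of_injective Fin.succAbove_right_injective, det_of_cons_single, mul_assoc]
  rfl

end Plucker

section Positivity

variable {K : Type*} [Field K] [LinearOrder K] [IsStrictOrderedRing K]

theorem pos_det_submatrix_succAbove {k : ℕ} (W : Fin (k + 1) → Fin (k + 2) → K) {u v : K}
    (htail : ∀ e : Fin k → Fin (k + 2), StrictMono e →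
      0 < v * ((of W).submatrix Fin.succ e).det)
    {a b c : Fin (k + 2)} (hab : a < b) (hbc : b < c)
    (ha : 0 < u * ((of W).submatrix id a.succAbove).det)
    (hc : 0 < u * ((of W).submatrix id c.succAbove).det) :
    0 < u * ((of W).submatrix id b.succAbove).det := by
  have hD : ∀ t : Fin (k + 2), ((of W).submatrix id t.succAbove).det =
      (-1) ^ (t : ℕ) * detCons₂ (Fin.tail W) (Pi.single t 1) (W 0) := by
    intro t
    rw [detCons₂_tail_single W t, ← mul_assoc, ← pow_add, Even.neg_one_pow ⟨t, rfl⟩,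
      one_mul]
  have hP : ∀ s t : Fin (k + 2), s < t → 0 < v *
      ((-1) ^ (s + t + 1 : ℕ) * detCons₂ (Fin.tail W) (Pi.single s 1) (Pi.single t 1)) := by
    intro s t hst
    obtain ⟨y, rfl⟩ : ∃ y, s.succAbove y = t := ⟨_, Fin.succAbove_pred_of_lt s t hst⟩
    have hy : (s.succAbove y : ℕ) = y + 1 := by
      rw [Fin.succAbove_of_le_castSucc _ _ ((Fin.lt_succAbove_iff_le_castSucc _ _).1 hst),
        Fin.val_succ]
    have hsign :
        (-1 : K) ^ (s + s.succAbove y + 1 : ℕ) * ((-1) ^ (s : ℕ) * (-1) ^ (y : ℕ)) = 1 := by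
      rw [← pow_add, ← pow_add, hy]
      exact Even.neg_one_pow ⟨s + y + 1, by ring⟩
    rw [detCons₂_single_single, ← mul_assoc (_ ^ _), hsign, one_mul]
    exact htail _ ((Fin.strictMono_succAbove _).comp (Fin.strictMono_succAbove _))
  set Φ := detCons₂ (Fin.tail W)
  rw [hD] at ha hc ⊢
  -- each product in the Plücker relation picks up the same sign `(-1) ^ (a + b + c + 1)`
  have key : (u * ((-1) ^ (b : ℕ) * Φ (Pi.single b 1) (W 0))) *
        (v * ((-1) ^ (a + c + 1 : ℕ) * Φ (Pi.single a 1) (Pi.single c 1))) =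
      (u * ((-1) ^ (a : ℕ) * Φ (Pi.single a 1) (W 0))) *
          (v * ((-1) ^ (b + c + 1 : ℕ) * Φ (Pi.single b 1) (Pi.single c 1))) +
        (u * ((-1) ^ (c : ℕ) * Φ (Pi.single c 1) (W 0))) *
          (v * ((-1) ^ (a + b + 1 : ℕ) * Φ (Pi.single a 1) (Pi.single b 1))) := by
    linear_combination (-(u * v * (-1) ^ (a + b + c + 1 : ℕ))) *
      detCons₂_plucker (Fin.tail W) (W 0) (Pi.single a 1) (Pi.single b 1) (Pi.single c 1)
  refine pos_of_mul_pos_left (key ▸ add_pos ?_ ?_) (hP a c (hab.trans hbc)).le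
  · exact mul_pos ha (hP b c hbc)
  · exact mul_pos hc (hP a b hab)

theorem pos_det_submatrix_of_consecutive {k n : ℕ} (N : Matrix (Fin (k + 1)) (Fin n) K)
    {u v : K}
    (hcons : ∀ b (hb : b + (k + 1) ≤ n), 0 < u * (N.submatrix id (Fin.consecutive b hb)).det)
    (htail : ∀ e : Fin k → Fin n, StrictMono e → 0 < v * (N.submatrix Fin.succ e).det)
    {c : Fin (k + 1) → Fin n} (hc : StrictMono c) : 0 < u * (N.submatrix id c).det := by
  induction hd : (c (Fin.last k) : ℕ) - c 0 using Nat.strong_induction_on generalizing c with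
  | _ d ih =>
  by_cases hgap : ∃ s : Fin k, (c s.castSucc : ℕ) + 1 < c s.succ
  · obtain ⟨s, hs⟩ := hgap
    set q : Fin n := ⟨c s.castSucc + 1, by omega⟩
    set c' : Fin (k + 2) → Fin n := Fin.insertNth (α := fun _ => Fin n) s.castSucc.succ q c
    have hc' : StrictMono c' := Fin.strictMono_insertNth hc s q (Nat.lt_succ_self _) hs
    have hc'c : c' ∘ s.castSucc.succ.succAbove = c := Fin.insertNth_comp_succAbove _ _ _
    have hfirst : c' 0 = c 0 := by
      rw [← Fin.succAbove_ne_zero_zero (Fin.succ_ne_zero _)]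
      exact congrFun hc'c 0
    have hlast : c' (Fin.last (k + 1)) = c (Fin.last k) := by
      rw [← Fin.succAbove_ne_last_last (a := s.castSucc.succ) (by simp [Fin.ext_iff]; omega)]
      exact congrFun hc'c _
    have h01 := hc' (show (0 : Fin (k + 2)) < 1 from Fin.zero_lt_one)
    have h1l := hc'.monotone (show (1 : Fin (k + 2)) ≤ Fin.castSucc (Fin.last k) by
      rw [Fin.le_def, Fin.val_one, Fin.val_castSucc, Fin.val_last]
      exact s.pos)
    have hpre := hc' (Fin.castSucc_lt_last (Fin.last k))
    rw [Fin.lt_def, hfirst] at h01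
    rw [Fin.lt_def, hlast] at hpre
    rw [Fin.le_def] at h1l
    have hspread₁ : (c' (Fin.last (k + 1)) : ℕ) - c' 1 < d := by rw [hlast]; omega
    have hspread₂ : (c' (Fin.castSucc (Fin.last k)) : ℕ) - c' 0 < d := by rw [hfirst]; omega
    have hsucc := ih _ hspread₁ (hc'.comp Fin.strictMono_succ) rfl
    have hcast := ih _ hspread₂ (hc'.comp Fin.strictMono_castSucc) rfl
    rw [← hc'c]
    refine pos_det_submatrix_succAbove (fun i => N i ∘ c')
      (fun e he => htail _ (hc'.comp he)) (a := 0) (c := Fin.last (k + 1))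
      (Fin.succ_pos _) (by simp [Fin.lt_def]) ?_ ?_
    · rwa [Fin.succAbove_zero]
    · rwa [Fin.succAbove_last]
  · push Not at hgap
    have hval : ∀ i, (c i : ℕ) = c 0 + i := by
      intro i
      induction i using Fin.induction with
      | zero => simp
      | succ i ih =>
        have := hc (Fin.castSucc_lt_succ (i := i))
        rw [Fin.lt_def] at this
        have := hgap i
        simp only [Fin.val_castSucc, Fin.val_succ] at *
        omega
    have hn : (c 0 : ℕ) + (k + 1) ≤ n := by
      have := (c (Fin.last k)).isLt
      rw [hval, Fin.val_last] at this
      omega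
    convert hcons _ hn
    funext i
    exact Fin.ext (hval i)

variable {m n : ℕ}

def HasMinorSign (A : Matrix (Fin m) (Fin n) K) (k : ℕ) (u : K) : Prop :=
  ∀ (r : Fin k → Fin m) (c : Fin k → Fin n), StrictMono r → StrictMono c →
    0 < u * (A.submatrix r c).det

def HasContiguousMinorSign (A : Matrix (Fin m) (Fin n) K) (k : ℕ) (u : K) : Prop :=
  ∀ (a b : ℕ) (ha : a + k ≤ m) (hb : b + k ≤ n),
    0 < u * (A.submatrix (Fin.consecutive a ha) (Fin.consecutive b hb)).det

theorem hasMinorSign_zero (A : Matrix (Fin m) (Fin n) K) : A.HasMinorSign 0 1 := by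
  intro r c _ _
  simp

theorem HasMinorSign.succ {A : Matrix (Fin m) (Fin n) K} {k : ℕ} {u v : K}
    (hk : A.HasMinorSign k v) (hcont : A.HasContiguousMinorSign (k + 1) u) :
    A.HasMinorSign (k + 1) u := by
  have hrows : ∀ b (hb : b + (k + 1) ≤ n) (r : Fin (k + 1) → Fin m), StrictMono r →
      0 < u * (A.submatrix r (Fin.consecutive b hb)).det := by
    intro b hb r hr
    rw [← det_transpose, transpose_submatrix]
    refine pos_det_submatrix_of_consecutive (Aᵀ.submatrix (Fin.consecutive b hb) id) (v := v)
      (fun a ha => ?_) (fun e he => ?_) hr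
    · rw [submatrix_submatrix, ← transpose_submatrix, det_transpose]
      exact hcont a b ha hb
    · rw [submatrix_submatrix, ← transpose_submatrix, det_transpose]
      exact hk e _ he ((Fin.consecutive_strictMono hb).comp Fin.strictMono_succ)
  intro r c hr hc
  exact pos_det_submatrix_of_consecutive (A.submatrix r id) (fun b hb => hrows b hb r hr)
    (fun e he => hk _ e (hr.comp Fin.strictMono_succ) he) hc

end Positivity

end Matrix

theorem stmt_1 (m n p : ℕ) (ε : Fin p → ℝ) (A : Matrix (Fin m) (Fin n) ℝ) :
    IsSSRp p A ε ↔
      ∀ (kk : Fin p) (a b : ℕ) (ha : a + (kk.val + 1) ≤ m) (hb : b + (kk.val + 1) ≤ n),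
        0 < ε kk *
          (A.submatrix (fun i : Fin (kk.val + 1) => (⟨a + i.val, by omega⟩ : Fin m))
            (fun j : Fin (kk.val + 1) => (⟨b + j.val, by omega⟩ : Fin n))).det := by
  refine ⟨fun h kk a b ha hb =>
    h kk _ _ (Fin.consecutive_strictMono ha) (Fin.consecutive_strictMono hb), fun h => ?_⟩
  suffices ∀ k (hk : k < p), A.HasMinorSign (k + 1) (ε ⟨k, hk⟩) from
    fun kk => this kk kk.isLt
  intro k
  induction k with
  | zero => exact fun hk => (Matrix.hasMinorSign_zero A).succ (h ⟨0, hk⟩)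
  | succ k ih => exact fun hk => (ih (by omega)).succ (h ⟨k + 1, hk⟩)
end

section
/- Let n ≥ 1 be an integer, ε = (ε_1, …, ε_n) ∈ {±1}^n, and let A be an n×n real SSR(ε) matrix. Then there exists a column vector c ∈ ℝ^n such that the n×(n+1) matrix [c | A], obtained by adjoining c as a new first column to the left border of A, is SSR(ε). -/
open Matrix Filter Topology

/-- Laplace expansion along the `cons` first column. -/
private lemma det_cons_expand {k : ℕ} (v : Fin (k+1) → ℝ) (w : Fin (k+1) → Fin k → ℝ) :
    (Matrix.of fun i j => Fin.cons (v i) (w i) j).det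
      = ∑ i : Fin (k+1), (-1)^(i:ℕ) * v i
          * (Matrix.of fun a b => w (i.succAbove a) b).det := by
  rw [Matrix.det_succ_column_zero]
  refine Finset.sum_congr rfl fun i _ => ?_
  have h1 : (Matrix.of fun i j => Fin.cons (v i) (w i) j) i 0 = v i := by simp
  have h2 : (Matrix.of fun i j => Fin.cons (v i) (w i) j).submatrix i.succAbove Fin.succ
      = Matrix.of fun a b => w (i.succAbove a) b := by ext a b; simp
  rw [h1, h2]

private lemma strictMono_le_val {k n : ℕ} {J : Fin k → Fin n} (hJ : StrictMono J) :
    ∀ m : ℕ, ∀ hm : m < k, m ≤ ((J ⟨m, hm⟩ : Fin n) : ℕ) := by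
  intro m
  induction m with
  | zero => intro _; exact Nat.zero_le _
  | succ m ih =>
    intro hm
    have h1 : m < k := Nat.lt_of_succ_lt hm
    have h2 : J ⟨m, h1⟩ < J ⟨m+1, hm⟩ := hJ (by simp [Fin.lt_def])
    have := ih h1
    have h3 := Fin.lt_def.mp h2
    omega

private lemma sorted_det {n kk : ℕ} (A : Matrix (Fin n) (Fin n) ℝ)
    (ε : ℝ) (r : Fin (kk+1) → Fin n)
    (J : Fin kk → Fin n) (hJ : StrictMono J)
    (L : Fin n) (hL : L ∉ Set.range J)
    (hmin : ∀ x : Fin n, (x:ℕ) < (L:ℕ) → x ∈ Set.range J)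
    (hA : ∀ g : Fin (kk+1) → Fin n, StrictMono g → 0 < ε * (A.submatrix r g).det) :
    0 < ε * ((-1:ℝ)^(L:ℕ) * (A.submatrix r (Fin.cons L J)).det) := by
  -- J is the identity below L
  have J_eq : ∀ m : ℕ, m < (L:ℕ) → ∃ hm : m < kk, ((J ⟨m, hm⟩ : Fin n) : ℕ) = m := by
    intro m
    induction m using Nat.strong_induction_on with
    | _ m ih =>
      intro hmL
      obtain ⟨j, hj⟩ := hmin ⟨m, hmL.trans L.isLt⟩ (by simpa using hmL)
      rcases lt_trichotomy (j:ℕ) m with h | h | h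
      · obtain ⟨hm', hval⟩ := ih (j:ℕ) h (h.trans hmL)
        have hjj : (⟨(j:ℕ), hm'⟩ : Fin kk) = j := Fin.ext rfl
        rw [hjj, hj] at hval
        simp at hval
        omega
      · refine ⟨h ▸ j.isLt, ?_⟩
        have hjj : (⟨m, h ▸ j.isLt⟩ : Fin kk) = j := Fin.ext h.symm
        rw [hjj, hj]
      · have hmkk : m < kk := h.trans j.isLt
        have hlt : J ⟨m, hmkk⟩ < J j := hJ (by simpa [Fin.lt_def] using h)
        rw [hj] at hlt
        have hpm : ((J ⟨m, hmkk⟩ : Fin n) : ℕ) < m := Fin.lt_def.mp hlt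
        obtain ⟨hp', hval⟩ := ih _ hpm (hpm.trans hmL)
        have heq : J ⟨((J ⟨m, hmkk⟩ : Fin n) : ℕ), hp'⟩ = J ⟨m, hmkk⟩ := Fin.ext hval
        have h2 := congrArg Fin.val (hJ.injective heq)
        simp only [] at h2
        omega
  have hLkk : (L:ℕ) ≤ kk := by
    by_contra hc
    obtain ⟨hm, _⟩ := J_eq kk (by omega)
    omega
  set p : Fin (kk+1) := ⟨(L:ℕ), Nat.lt_succ_of_le hLkk⟩ with hp
  set σ : Equiv.Perm (Fin (kk+1)) := p.cycleRange with hσdef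
  set g : Fin (kk+1) → Fin n := fun j => (Fin.cons L J : Fin (kk+1) → Fin n) (σ j) with hgdef
  -- values of g
  have hgv1 : ∀ j : Fin (kk+1), (j:ℕ) < (L:ℕ) → ((g j : Fin n) : ℕ) = (j:ℕ) := by
    intro j hj
    have hjp : j < p := by rw [Fin.lt_def]; exact hj
    have hjkk : (j:ℕ) < kk := lt_of_lt_of_le hj hLkk
    have hσj : σ j = j + 1 := Fin.cycleRange_of_lt hjp
    have hsucc : j + 1 = Fin.succ (⟨(j:ℕ), hjkk⟩ : Fin kk) := by
      apply Fin.ext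
      rw [Fin.val_add_one_of_lt (by rw [Fin.lt_def]; simp; omega)]
      simp
    obtain ⟨hm, hval⟩ := J_eq (j:ℕ) hj
    rw [hgdef]
    simp only [hσj, hsucc, Fin.cons_succ]
    exact hval
  have hgv2 : g p = L := by
    rw [hgdef]; simp only [hσdef, Fin.cycleRange_self, Fin.cons_zero]
  have hgv3 : ∀ j : Fin (kk+1), (L:ℕ) < (j:ℕ) →
      ∃ h1 : (j:ℕ) - 1 < kk, g j = J ⟨(j:ℕ)-1, h1⟩ := by
    intro j hj
    have hpj : p < j := by rw [Fin.lt_def]; exact hj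
    have h1 : (j:ℕ) - 1 < kk := by have := j.isLt; omega
    refine ⟨h1, ?_⟩
    have hσj : σ j = j := Fin.cycleRange_of_gt hpj
    have hjs : j = Fin.succ (⟨(j:ℕ)-1, h1⟩ : Fin kk) := by
      apply Fin.ext; simp; omega
    rw [hgdef]
    simp only [hσj]
    conv_lhs => rw [hjs]
    rw [Fin.cons_succ]
  -- g is strictly monotone
  have hg : StrictMono g := by
    rw [Fin.strictMono_iff_lt_succ]
    intro i
    rcases lt_trichotomy ((i.succ : Fin (kk+1)) : ℕ) ((L:ℕ)) with h | h | h
    · rw [Fin.lt_def]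
      rw [hgv1 _ h, hgv1 _ (by simp only [Fin.coe_castSucc, Fin.val_succ] at h ⊢; omega)]
      simp only [Fin.coe_castSucc, Fin.val_succ]
      omega
    · have hcast : ((i.castSucc : Fin (kk+1)) : ℕ) < (L:ℕ) := by
        simp only [Fin.coe_castSucc, Fin.val_succ] at h ⊢; omega
      have hps : i.succ = p := Fin.ext (by rw [h])
      rw [Fin.lt_def, hps, hgv2, hgv1 _ hcast]
      exact hcast
    · obtain ⟨h1, hval⟩ := hgv3 i.succ h
      rw [Fin.lt_def, hval]
      rcases lt_trichotomy ((i.castSucc : Fin (kk+1)) : ℕ) ((L:ℕ)) with h' | h' | h'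
      · exfalso
        simp only [Fin.coe_castSucc, Fin.val_succ] at h h'
        omega
      · have hps : i.castSucc = p := Fin.ext h'
        rw [hps, hgv2]
        have hle := strictMono_le_val hJ ((i.succ:ℕ)-1) h1
        have hne : ((J ⟨(i.succ:ℕ)-1, h1⟩ : Fin n) : ℕ) ≠ (L:ℕ) := by
          intro hc
          exact hL ⟨⟨(i.succ:ℕ)-1, h1⟩, Fin.ext hc⟩
        simp only [Fin.coe_castSucc, Fin.val_succ] at h h' hle hne ⊢
        omega
      · obtain ⟨h2, hval2⟩ := hgv3 i.castSucc h'
        rw [hval2]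
        have := hJ (show (⟨(i.castSucc:ℕ)-1, h2⟩ : Fin kk) < ⟨(i.succ:ℕ)-1, h1⟩ by
          rw [Fin.lt_def]
          simp only [Fin.coe_castSucc, Fin.val_succ] at h' ⊢
          omega)
        exact Fin.lt_def.mp this
  -- determinant identity
  have hmat : A.submatrix r g = (A.submatrix r (Fin.cons L J)).submatrix id σ := by
    rw [Matrix.submatrix_submatrix]
    rfl
  have hdet : (A.submatrix r g).det = (-1:ℝ)^(L:ℕ) * (A.submatrix r (Fin.cons L J)).det := by
    rw [hmat, Matrix.det_permute', hσdef, Fin.sign_cycleRange]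
    norm_num [hp]
  have := hA g hg
  rw [hdet] at this
  exact this

theorem stmt_2 (n : ℕ) (hn : 1 ≤ n) (ε : Fin n → ℝ) (hε : ∀ i, ε i = 1 ∨ ε i = -1)
    (A : Matrix (Fin n) (Fin n) ℝ) (hA : IsSSRp n A ε) :
    ∃ c : Fin n → ℝ,
      IsSSRp n ((Matrix.of fun i => Fin.cons (c i) (A i)) : Matrix (Fin n) (Fin (n + 1)) ℝ) ε := by
  classical
  set B : ℝ → Matrix (Fin n) (Fin (n+1)) ℝ :=
    fun t => Matrix.of fun i => Fin.cons (∑ l : Fin n, (-1)^(l:ℕ) * t^((l:ℕ)+1) * A i l) (A i)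
    with hB
  suffices h : ∀ᶠ t in 𝓝[>] (0:ℝ), IsSSRp n (B t) ε by
    obtain ⟨t, ht⟩ := h.exists
    exact ⟨fun i => ∑ l : Fin n, (-1)^(l:ℕ) * t^((l:ℕ)+1) * A i l, ht⟩
  have key : ∀ (kk : Fin n) (r : Fin (kk.val+1) → Fin n) (col : Fin (kk.val+1) → Fin (n+1)),
      StrictMono r → StrictMono col →
      ∀ᶠ t in 𝓝[>] (0:ℝ), 0 < ε kk * ((B t).submatrix r col).det := by
    intro kk r col hr hcol
    by_cases h0 : col 0 = 0
    · -- the new column participates in the minor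
      have hne : ∀ j : Fin kk.val, col j.succ ≠ 0 := by
        intro j hc
        have h1 : col 0 < col j.succ := hcol (Fin.succ_pos j)
        rw [h0, hc] at h1
        exact lt_irrefl _ h1
      set J : Fin kk.val → Fin n := fun j => (col j.succ).pred (hne j) with hJdef
      have hcolJ : ∀ j : Fin kk.val, col j.succ = Fin.succ (J j) :=
        fun j => (Fin.succ_pred _ _).symm
      have hJ : StrictMono J := fun a b hab => by
        rw [hJdef]
        simp only []
        rw [Fin.pred_lt_pred_iff]
        exact hcol (by rwa [Fin.succ_lt_succ_iff])
      set d : Fin n → ℝ := fun l => (A.submatrix r (Fin.cons l J)).det with hd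
      have expand : ∀ t : ℝ, ((B t).submatrix r col).det
          = ∑ l : Fin n, (-1)^(l:ℕ) * t^((l:ℕ)+1) * d l := by
        intro t
        have h1 : (B t).submatrix r col
            = Matrix.of fun i j => Fin.cons (∑ l : Fin n, (-1)^(l:ℕ) * t^((l:ℕ)+1) * A (r i) l)
                (fun j' => A (r i) (J j')) j := by
          ext i j
          induction j using Fin.cases with
          | zero => simp [hB, h0]
          | succ j' => simp [hB, hcolJ j']
        rw [h1, det_cons_expand]
        have h2 : ∀ i : Fin (kk.val+1),
            (-1:ℝ)^(i:ℕ) * (∑ l : Fin n, (-1)^(l:ℕ) * t^((l:ℕ)+1) * A (r i) l)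
              * (Matrix.of fun a b => A (r (i.succAbove a)) (J b)).det
            = ∑ l : Fin n, (-1:ℝ)^(l:ℕ) * t^((l:ℕ)+1) *
                ((-1:ℝ)^(i:ℕ) * A (r i) l
                  * (Matrix.of fun a b => A (r (i.succAbove a)) (J b)).det) := by
          intro i
          rw [Finset.mul_sum, Finset.sum_mul]
          exact Finset.sum_congr rfl fun l _ => by ring
        rw [Finset.sum_congr rfl fun i _ => h2 i, Finset.sum_comm]
        refine Finset.sum_congr rfl fun l _ => ?_
        rw [← Finset.mul_sum]
        congr 1
        rw [hd]
        simp only []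
        rw [← det_cons_expand (fun i => A (r i) l) (fun i j' => A (r i) (J j'))]
        congr 1
        ext i j
        induction j using Fin.cases with
        | zero => simp
        | succ j' => simp
      -- the smallest column index not used by J
      have hexists : ∃ x : Fin n, x ∉ Set.range J := by
        by_contra hc
        push_neg at hc
        have hsurj : Function.Surjective J := fun x => hc x
        have hcard := Fintype.card_le_of_surjective J hsurj
        simp only [Fintype.card_fin] at hcard
        have := kk.isLt
        omega
      set S : Finset (Fin n) := Finset.univ.filter (fun x => x ∉ Set.range J) with hS
      have hSne : S.Nonempty := by
        obtain ⟨x, hx⟩ := hexists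
        exact ⟨x, Finset.mem_filter.mpr ⟨Finset.mem_univ x, hx⟩⟩
      set L : Fin n := S.min' hSne with hLdef
      have hL1 : L ∉ Set.range J := by
        have h' : L ∈ Finset.filter (fun x => x ∉ Set.range J) Finset.univ := S.min'_mem hSne
        exact (Finset.mem_filter.mp h').2
      have hmin : ∀ x : Fin n, (x:ℕ) < (L:ℕ) → x ∈ Set.range J := by
        intro x hx
        by_contra hc
        have hLx : L ≤ x := S.min'_le x (Finset.mem_filter.mpr ⟨Finset.mem_univ x, hc⟩)
        rw [Fin.le_def] at hLx
        omega
      have hδ := sorted_det A (ε kk) r J hJ L hL1 hmin (fun g hg => hA kk r g hr hg)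
      have hdzero : ∀ l : Fin n, (l:ℕ) < (L:ℕ) → d l = 0 := by
        intro l hl
        obtain ⟨j, hj⟩ := hmin l hl
        rw [hd]
        refine Matrix.det_zero_of_column_eq (Ne.symm (Fin.succ_ne_zero j)) fun k => ?_
        simp [Matrix.submatrix_apply, hj]
      set G : ℝ → ℝ := fun t => ∑ l : Fin n,
          (if (L:ℕ) ≤ (l:ℕ) then (-1:ℝ)^(l:ℕ) * t^((l:ℕ)-(L:ℕ)) * (ε kk * d l) else 0) with hG
      have hFG : ∀ t : ℝ, ε kk * ((B t).submatrix r col).det = t^((L:ℕ)+1) * G t := by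
        intro t
        rw [expand t, Finset.mul_sum, hG]
        simp only []
        rw [Finset.mul_sum]
        refine Finset.sum_congr rfl fun l _ => ?_
        by_cases hl : (L:ℕ) ≤ (l:ℕ)
        · rw [if_pos hl]
          have hpow : t^((L:ℕ)+1) * t^((l:ℕ)-(L:ℕ)) = t^((l:ℕ)+1) := by
            rw [← pow_add]
            congr 1
            omega
          calc ε kk * ((-1:ℝ)^(l:ℕ) * t^((l:ℕ)+1) * d l)
              = (-1:ℝ)^(l:ℕ) * (t^((L:ℕ)+1) * t^((l:ℕ)-(L:ℕ))) * (ε kk * d l) := by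
                rw [hpow]; ring
            _ = t^((L:ℕ)+1) * ((-1:ℝ)^(l:ℕ) * t^((l:ℕ)-(L:ℕ)) * (ε kk * d l)) := by ring
        · rw [if_neg hl, hdzero l (by omega)]
          ring
      have hG0 : G 0 = ε kk * ((-1:ℝ)^(L:ℕ) * d L) := by
        rw [hG]
        simp only []
        rw [Finset.sum_eq_single L]
        · rw [if_pos le_rfl, Nat.sub_self, pow_zero]
          ring
        · intro b _ hb
          by_cases hbL : (L:ℕ) ≤ (b:ℕ)
          · rw [if_pos hbL]
            have hne' : (b:ℕ) - (L:ℕ) ≠ 0 := by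
              have : (L:ℕ) ≠ (b:ℕ) := fun hc => hb (Fin.ext hc.symm)
              omega
            rw [zero_pow hne']
            ring
          · rw [if_neg hbL]
        · intro hLn
          exact absurd (Finset.mem_univ L) hLn
      have hGpos : 0 < G 0 := by
        rw [hG0, hd]
        exact hδ
      have hGcont : Continuous G := by
        rw [hG]
        apply continuous_finset_sum
        intro l _
        by_cases hl : (L:ℕ) ≤ (l:ℕ)
        · simp only [if_pos hl]
          fun_prop
        · simp only [if_neg hl]
          exact continuous_const
      have hev1 : ∀ᶠ t in 𝓝 (0:ℝ), 0 < G t :=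
        (hGcont.tendsto 0).eventually (eventually_gt_nhds hGpos)
      have hev2 : ∀ᶠ t in 𝓝[>] (0:ℝ), 0 < G t := hev1.filter_mono nhdsWithin_le_nhds
      have hev3 : ∀ᶠ t in 𝓝[>] (0:ℝ), 0 < t := eventually_mem_nhdsWithin
      filter_upwards [hev2, hev3] with t hGt ht
      rw [hFG t]
      exact mul_pos (pow_pos ht _) hGt
    · -- the minor is a minor of A
      have hne : ∀ j, col j ≠ 0 := by
        intro j
        rcases eq_or_ne j 0 with rfl | hj
        · exact h0
        · intro hc
          have h1 : col 0 < col j := hcol (Fin.pos_iff_ne_zero.mpr hj)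
          rw [hc] at h1
          exact Fin.not_lt_zero _ h1
      have hcc : StrictMono (fun j => (col j).pred (hne j)) := fun a b hab => by
        simp only []
        rw [Fin.pred_lt_pred_iff]
        exact hcol hab
      have hmat : ∀ t : ℝ, (B t).submatrix r col
          = A.submatrix r (fun j => (col j).pred (hne j)) := by
        intro t
        ext i j
        have hcj : col j = Fin.succ ((col j).pred (hne j)) := (Fin.succ_pred _ _).symm
        conv_lhs => rw [Matrix.submatrix_apply, hcj]
        rw [Matrix.submatrix_apply]
        simp only [hB, Matrix.of_apply, Fin.cons_succ]
      refine Filter.Eventually.of_forall fun t => ?_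
      rw [hmat t]
      exact hA kk r _ hr hcc
  have H : ∀ (kk : Fin n) (r : Fin (kk.val+1) → Fin n) (col : Fin (kk.val+1) → Fin (n+1)),
      ∀ᶠ t in 𝓝[>] (0:ℝ), StrictMono r → StrictMono col →
        0 < ε kk * ((B t).submatrix r col).det := by
    intro kk r col
    by_cases hr : StrictMono r
    · by_cases hcol : StrictMono col
      · exact (key kk r col hr hcol).mono fun t ht _ _ => ht
      · exact Filter.Eventually.of_forall fun t h1 h2 => absurd h2 hcol
    · exact Filter.Eventually.of_forall fun t h1 _ => absurd h1 hr
  have H2 : ∀ᶠ t in 𝓝[>] (0:ℝ), ∀ (kk : Fin n) (r : Fin (kk.val+1) → Fin n)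
      (col : Fin (kk.val+1) → Fin (n+1)), StrictMono r → StrictMono col →
        0 < ε kk * ((B t).submatrix r col).det := by
    rw [Filter.eventually_all]
    intro kk
    rw [Filter.eventually_all]
    intro r
    rw [Filter.eventually_all]
    exact H kk r
  exact H2.mono fun t ht => by
    intro kk r cc hr hc
    exact ht kk r cc hr hc
end

section
/- Let n ≥ 1 be an integer, ε = (ε_1, …, ε_n) ∈ {±1}^n, and let A be an n×n real SSR(ε) matrix. Then there exists a column vector c ∈ ℝ^n such that the n×(n+1) matrix [A | c], obtained by adjoining c as a new last column to the right border of A, is SSR(ε). -/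
open Matrix Finset Filter Topology

theorem eventually_pos_sum_pow_mul {ι : Type*} {s : Finset ι} {e : ι → ℕ} {a : ι → ℝ} {i₀ : ι}
    (hi₀ : i₀ ∈ s) (he : ∀ i ∈ s, i ≠ i₀ → e i₀ < e i) (ha : 0 < a i₀) :
    ∀ᶠ δ in 𝓝[>] (0 : ℝ), 0 < ∑ i ∈ s, δ ^ e i * a i := by
  have hle : ∀ i ∈ s, e i₀ ≤ e i := fun i hi => by
    rcases eq_or_ne i i₀ with rfl | hne
    exacts [le_rfl, (he i hi hne).le]
  have hfactor : ∀ δ : ℝ, ∑ i ∈ s, δ ^ e i * a i = δ ^ e i₀ * ∑ i ∈ s, δ ^ (e i - e i₀) * a i :=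
    fun δ => by
      rw [mul_sum]
      refine sum_congr rfl fun i hi => ?_
      rw [← mul_assoc, ← pow_add, Nat.add_sub_cancel' (hle i hi)]
  have hat0 : ∑ i ∈ s, (0 : ℝ) ^ (e i - e i₀) * a i = a i₀ := by
    rw [sum_eq_single_of_mem i₀ hi₀ fun i hi hne => by
      rw [zero_pow (Nat.sub_ne_zero_of_lt (he i hi hne)), zero_mul]]
    simp
  have hcont : Continuous fun δ : ℝ => ∑ i ∈ s, δ ^ (e i - e i₀) * a i := by fun_prop
  have hnear : ∀ᶠ δ in 𝓝 (0 : ℝ), 0 < ∑ i ∈ s, δ ^ (e i - e i₀) * a i :=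
    (hcont.tendsto 0).eventually_const_lt (hat0 ▸ ha)
  filter_upwards [nhdsWithin_le_nhds hnear, self_mem_nhdsWithin] with δ hpos hδ
  rw [hfactor]
  exact mul_pos (pow_pos hδ _) hpos

namespace Fin

variable {k : ℕ} {β : Type*} [LinearOrder β]

theorem strictMono_insertNth_of_lt {u : Fin k → β} (hu : StrictMono u) {p : Fin (k + 1)} {x : β}
    (hlt : ∀ l, castSucc l < p → u l < x) (hgt : ∀ l, p ≤ castSucc l → x < u l) :
    StrictMono (p.insertNth x u) := by
  intro a b hab
  rcases eq_self_or_eq_succAbove p a with ha | ⟨a, rfl⟩ <;>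
    rcases eq_self_or_eq_succAbove p b with hb | ⟨b, rfl⟩
  · exact absurd (ha ▸ hb ▸ hab) (lt_irrefl _)
  · subst ha
    rw [insertNth_apply_same, insertNth_apply_succAbove]
    exact hgt b ((lt_succAbove_iff_le_castSucc _ _).1 hab)
  · subst hb
    rw [insertNth_apply_same, insertNth_apply_succAbove]
    exact hlt a ((succAbove_lt_iff_castSucc_lt _ _).1 hab)
  · simpa using hu (succAbove_lt_succAbove_iff.1 hab)

theorem lt_card_filter_lt_iff {u : Fin k → β} (hu : Monotone u) (x : β) (l : Fin k) :
    (l : ℕ) < #{l' | u l' < x} ↔ u l < x := by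
  constructor
  · intro hl
    by_contra hxl
    have hsub : univ.filter (fun l' => u l' < x) ⊆ Iio l := fun l' hl' =>
      mem_Iio.2 (hu.reflect_lt ((mem_filter.1 hl').2.trans_le (not_lt.1 hxl)))
    have hcard := card_le_card hsub
    rw [Fin.card_Iio] at hcard
    exact hl.not_ge hcard
  · intro hl
    have hsub : Iic l ⊆ univ.filter (fun l' => u l' < x) := fun l' hl' =>
      mem_filter.2 ⟨mem_univ _, (hu (mem_Iic.1 hl')).trans_lt hl⟩
    have hcard := card_le_card hsub
    rw [Fin.card_Iic] at hcard
    exact hcard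

theorem snoc_eq_insertNth_comp_cycleIcc {α : Type*} (u : Fin k → α) (x : α) (p : Fin (k + 1)) :
    snoc u x = p.insertNth x u ∘ cycleIcc p (last k) := by
  funext l
  rcases l.eq_castSucc_or_eq_last with ⟨l, rfl⟩ | rfl
  · have := congrFun (cycleIcc_comp_succAbove p (last k) p.le_last) l
    simp only [Function.comp_apply, succAbove_last] at this
    simp [this]
  · simp [cycleIcc_of_last p.le_last]

theorem card_filter_lt_of_Ioi_subset_range {n : ℕ} {u : Fin k → Fin n}
    (hu : Function.Injective u) {j : Fin n} (hj : ∀ x, j < x → x ∈ Set.range u) :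
    #{l | j < u l} = n - 1 - j := by
  rw [← Fin.card_Ioi, ← card_image_of_injective _ hu]
  congr 1
  ext x
  simp only [mem_image, mem_filter, mem_univ, true_and, mem_Ioi]
  constructor
  · rintro ⟨l, hl, rfl⟩
    exact hl
  · intro hx
    obtain ⟨l, rfl⟩ := hj x hx
    exact ⟨l, hx, rfl⟩

end Fin

theorem StrictMono.eq_castSucc_or_eq_snoc_last {k n : ℕ} {c : Fin (k + 1) → Fin (n + 1)}
    (hc : StrictMono c) :
    (∃ v : Fin (k + 1) → Fin n, StrictMono v ∧ c = Fin.castSucc ∘ v) ∨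
      ∃ u : Fin k → Fin n, StrictMono u ∧ c = Fin.snoc (Fin.castSucc ∘ u) (Fin.last n) := by
  by_cases hlast : c (Fin.last k) = Fin.last n
  · have hne : ∀ l : Fin k, c l.castSucc ≠ Fin.last n := fun l =>
      hlast ▸ (hc (Fin.castSucc_lt_last l)).ne
    refine Or.inr ⟨fun l => (c l.castSucc).castPred (hne l),
      fun a b hab => Fin.castPred_lt_castPred_iff.2 (hc (Fin.castSucc_lt_castSucc_iff.2 hab)), ?_⟩
    funext l
    rcases l.eq_castSucc_or_eq_last with ⟨l, rfl⟩ | rfl <;> simp [hlast]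
  · have hne : ∀ l : Fin (k + 1), c l ≠ Fin.last n := fun l =>
      ((hc.monotone (Fin.le_last l)).trans_lt (Fin.lt_last_iff_ne_last.2 hlast)).ne
    refine Or.inl ⟨fun l => (c l).castPred (hne l),
      fun a b hab => Fin.castPred_lt_castPred_iff.2 (hc hab), ?_⟩
    funext l
    simp

namespace Matrix

theorem exists_strictMono_det_submatrix_snoc {k : ℕ} {R ι β : Type*} [CommRing R]
    [LinearOrder β] (M : Matrix ι β R) (r : Fin (k + 1) → ι) {u : Fin k → β} (hu : StrictMono u)
    {x : β} (hx : ∀ l, u l ≠ x) :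
    ∃ w, StrictMono w ∧
      (M.submatrix r (Fin.snoc u x)).det = (-1) ^ #{l | x < u l} * (M.submatrix r w).det := by
  have hbelow : #{l | u l < x} < k + 1 :=
    Nat.lt_succ_of_le ((card_filter_le _ _).trans (card_fin k).le)
  set p : Fin (k + 1) := ⟨_, hbelow⟩
  have hp : ∀ l, u l < x ↔ l.castSucc < p := fun l =>
    (Fin.lt_card_filter_lt_iff hu.monotone x l).symm
  have habove : k - p = #{l | x < u l} := by
    have hsplit := card_filter_add_card_filter_not (s := univ) (fun l => u l < x)
    have hnot : univ.filter (fun l => ¬u l < x) = univ.filter (fun l => x < u l) :=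
      filter_congr fun l _ => by rw [not_lt, le_iff_lt_or_eq, or_iff_left (hx l).symm]
    rw [hnot, card_univ, Fintype.card_fin] at hsplit
    change k - #{l | u l < x} = _
    omega
  refine ⟨p.insertNth x u, Fin.strictMono_insertNth_of_lt hu (fun l hl => (hp l).2 hl)
    (fun l hl => lt_of_le_of_ne (not_lt.1 fun h => not_le.2 ((hp l).1 h) hl) (hx l).symm), ?_⟩
  rw [Fin.snoc_eq_insertNth_comp_cycleIcc u x p,
    show M.submatrix r (p.insertNth x u ∘ Fin.cycleIcc p (Fin.last k))
      = (M.submatrix r (p.insertNth x u)).submatrix id (Fin.cycleIcc p (Fin.last k)) from rfl,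
    det_permute', Fin.sign_cycleIcc_of_le p.le_last]
  simp [habove]

variable {R ι : Type*} {k : ℕ}

def snocCol (B : Matrix ι (Fin k) R) (v : ι → R) : Matrix ι (Fin (k + 1)) R :=
  of fun i => Fin.snoc (B i) (v i)

theorem submatrix_snocCol_castSucc {κ : Type*} {m : ℕ} (B : Matrix ι (Fin k) R) (v : ι → R)
    (r : κ → ι) (w : Fin m → Fin k) :
    (snocCol B v).submatrix r (Fin.castSucc ∘ w) = B.submatrix r w := by
  ext i l
  simp [snocCol]

theorem submatrix_snocCol_snoc_last {κ : Type*} {m : ℕ} (B : Matrix ι (Fin k) R) (v : ι → R)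
    (r : κ → ι) (u : Fin m → Fin k) :
    (snocCol B v).submatrix r (Fin.snoc (Fin.castSucc ∘ u) (Fin.last k))
      = snocCol (B.submatrix r u) (v ∘ r) := by
  ext i l
  rcases l.eq_castSucc_or_eq_last with ⟨l, rfl⟩ | rfl <;> simp [snocCol]

theorem submatrix_snoc {κ β : Type*} (B : Matrix ι β R) (r : κ → ι) (u : Fin k → β) (j : β) :
    B.submatrix r (Fin.snoc u j) = snocCol (B.submatrix r u) (fun i => B (r i) j) := by
  ext i l
  rcases l.eq_castSucc_or_eq_last with ⟨l, rfl⟩ | rfl <;> simp [snocCol]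

theorem det_snocCol_mulVec [CommRing R] {β : Type*} [Fintype β]
    (B : Matrix (Fin (k + 1)) (Fin k) R) (M : Matrix (Fin (k + 1)) β R) (x : β → R) :
    (snocCol B (M *ᵥ x)).det = ∑ j, x j * (snocCol B (fun i => M i j)).det := by
  have hupdate : ∀ v, snocCol B v = (snocCol B 0).updateCol (Fin.last k) v := fun v => by
    ext i l
    rcases l.eq_castSucc_or_eq_last with ⟨l, rfl⟩ | rfl <;> simp [snocCol]
  have hsum : M *ᵥ x = ∑ j, x j • fun i => M i j := by
    ext i
    simp [mulVec, dotProduct, mul_comm]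
  rw [hupdate, ← cramer_apply, hsum, map_sum, Finset.sum_apply]
  refine sum_congr rfl fun j _ => ?_
  rw [map_smul, Pi.smul_apply, smul_eq_mul, cramer_apply, ← hupdate]

end Matrix

theorem IsSSRp.eventually_pos_det_snocCol {n : ℕ} {A : Matrix (Fin n) (Fin n) ℝ} {ε : Fin n → ℝ}
    (hA : IsSSRp n A ε) (kk : Fin n) {r : Fin (kk + 1) → Fin n} (hr : StrictMono r)
    {u : Fin kk → Fin n} (hu : StrictMono u) :
    ∀ᶠ δ in 𝓝[>] (0 : ℝ),
      0 < ε kk * (snocCol (A.submatrix r u) ((A *ᵥ fun j => (-δ) ^ (n - 1 - j)) ∘ r)).det := by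
  set D : Fin n → ℝ := fun j => (A.submatrix r (Fin.snoc u j)).det
  have hexpand : ∀ δ : ℝ, (snocCol (A.submatrix r u) ((A *ᵥ fun j => (-δ) ^ (n - 1 - j)) ∘ r)).det
      = ∑ j : Fin n, (-δ) ^ (n - 1 - (j : ℕ)) * D j := fun δ => by
    rw [show (A *ᵥ _) ∘ r = A.submatrix r id *ᵥ _ from rfl, det_snocCol_mulVec]
    simp only [D, submatrix_snoc, submatrix_apply, id]
  set S : Finset (Fin n) := (univ.image u)ᶜ
  have hD : ∀ j ∉ S, D j = 0 := fun j hj => by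
    obtain ⟨l, -, rfl⟩ := mem_image.1 (not_not.1 (mt mem_compl.2 hj))
    exact det_zero_of_column_eq (Fin.castSucc_lt_last l).ne fun i => by simp
  have hS : S.Nonempty := by
    rw [← card_pos, card_compl, Fintype.card_fin]
    have := (card_image_le (s := univ) (f := u)).trans_eq (card_fin _)
    omega
  set j₀ := S.max' hS
  have hj₀ : ∀ l, u l ≠ j₀ := fun l hl =>
    mem_compl.1 (S.max'_mem hS) (mem_image.2 ⟨l, mem_univ l, hl⟩)
  have habove : ∀ x, j₀ < x → x ∈ Set.range u := fun x hx => by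
    by_contra hxu
    exact (S.le_max' x (mem_compl.2 fun h => hxu (by simpa using h))).not_gt hx
  obtain ⟨w, hw, hdet⟩ := exists_strictMono_det_submatrix_snoc A r hu hj₀
  rw [Fin.card_filter_lt_of_Ioi_subset_range hu.injective habove] at hdet
  have hlead : 0 < ε kk * ((-1) ^ (n - 1 - j₀) * D j₀) := by
    rw [show D j₀ = _ from hdet, ← mul_assoc ((-1 : ℝ) ^ _), ← mul_pow, neg_one_mul, neg_neg,
      one_pow, one_mul]
    exact hA kk r w hr hw
  have hlower : ∀ j ∈ S, j ≠ j₀ → n - 1 - j₀ < n - 1 - j := fun j hj hne => by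
    have := lt_of_le_of_ne (S.le_max' j hj) hne
    have := j₀.isLt
    rw [Fin.lt_def] at *
    omega
  filter_upwards [eventually_pos_sum_pow_mul (e := fun j : Fin n => n - 1 - (j : ℕ))
    (a := fun j => ε kk * ((-1) ^ (n - 1 - (j : ℕ)) * D j)) (S.max'_mem hS) hlower hlead] with δ hδ
  rw [hexpand, mul_sum, ← sum_subset (subset_univ S) fun j _ hj => by rw [hD j hj, mul_zero,
    mul_zero]]
  refine hδ.trans_eq (sum_congr rfl fun j _ => ?_)
  rw [neg_pow]
  ring

theorem stmt_3_general (n : ℕ) (ε : Fin n → ℝ)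
    (A : Matrix (Fin n) (Fin n) ℝ) (hA : IsSSRp n A ε) :
    ∃ c : Fin n → ℝ,
      IsSSRp n ((Matrix.of fun i => Fin.snoc (A i) (c i)) : Matrix (Fin n) (Fin (n + 1)) ℝ) ε := by
  have hsmall : ∀ᶠ δ in 𝓝[>] (0 : ℝ),
      IsSSRp n (A.snocCol (A *ᵥ fun j => (-δ) ^ (n - 1 - j))) ε := by
    simp only [IsSSRp, eventually_all]
    intro kk r c hr hc
    rcases hc.eq_castSucc_or_eq_snoc_last with ⟨v, hv, rfl⟩ | ⟨u, hu, rfl⟩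
    · simp only [Matrix.submatrix_snocCol_castSucc]
      exact .of_forall fun _ => hA kk r v hr hv
    · simp only [Matrix.submatrix_snocCol_snoc_last]
      exact hA.eventually_pos_det_snocCol kk hr hu
  obtain ⟨δ, hδ⟩ := hsmall.exists
  exact ⟨_, hδ⟩

theorem stmt_3 (n : ℕ) (hn : 1 ≤ n) (ε : Fin n → ℝ) (hε : ∀ i, ε i = 1 ∨ ε i = -1)
    (A : Matrix (Fin n) (Fin n) ℝ) (hA : IsSSRp n A ε) :
    ∃ c : Fin n → ℝ,
      IsSSRp n ((Matrix.of fun i => Fin.snoc (A i) (c i)) : Matrix (Fin n) (Fin (n + 1)) ℝ) ε :=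
  stmt_3_general n ε A hA
end

section
/- Let n ≥ 1 be an integer, ε = (ε_1, …, ε_n) ∈ {±1}^n, and let A be an n×n real SSR(ε) matrix. Then there exists a row vector r ∈ ℝ^n such that the (n+1)×n matrix obtained by adjoining r as a new first row above the top border of A is SSR(ε). -/
open Filter Topology Matrix

theorem Fin.val_le_val_of_strictMono {k m : ℕ} {t : Fin k → Fin m} (ht : StrictMono t)
    (i : Fin k) : (i : ℕ) ≤ t i := by
  obtain ⟨i, hi⟩ := i
  induction i with
  | zero => exact Nat.zero_le _
  | succ i ih => exact (ih (by omega)).trans_lt (ht (Fin.mk_lt_mk.mpr i.lt_succ_self))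

theorem Fin.exists_first_gap_of_strictMono {k m : ℕ} {t : Fin k → Fin m} (ht : StrictMono t) :
    ∃ p ≤ k, (∀ i : Fin k, (i : ℕ) < p → (t i : ℕ) = i) ∧ ∀ i : Fin k, p ≤ i → p < t i := by
  classical
  have hex : ∃ p, ∀ h : p < k, (t ⟨p, h⟩ : ℕ) ≠ p := ⟨k, fun h => absurd h (lt_irrefl k)⟩
  refine ⟨Nat.find hex, ?_, fun i hi => ?_, fun i hi => ?_⟩
  · exact Nat.find_min' hex fun h => absurd h (lt_irrefl k)
  · by_contra hne
    exact Nat.find_min hex hi fun _ => hne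
  · refine lt_of_le_of_ne (hi.trans (Fin.val_le_val_of_strictMono ht i)) fun h => ?_
    have hip : (i : ℕ) = Nat.find hex := le_antisymm (h ▸ Fin.val_le_val_of_strictMono ht i) hi
    exact Nat.find_spec hex (hip ▸ i.isLt) (by simp only [← hip, ← h])

theorem Fin.strictMono_eq_succ_comp_or_eq_cons_zero {k m : ℕ} {rr : Fin (k + 1) → Fin (m + 1)}
    (hrr : StrictMono rr) :
    (∃ t : Fin (k + 1) → Fin m, StrictMono t ∧ rr = Fin.succ ∘ t) ∨
      ∃ t : Fin k → Fin m, StrictMono t ∧ rr = Fin.cons 0 (Fin.succ ∘ t) := by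
  by_cases h0 : rr 0 = 0
  · have hne : ∀ i : Fin k, rr i.succ ≠ 0 := fun i => by
      rw [← h0]; exact (hrr i.succ_pos).ne'
    refine Or.inr ⟨fun i => (rr i.succ).pred (hne i), fun i j hij => ?_, ?_⟩
    · exact Fin.pred_lt_pred_iff.mpr (hrr (Fin.succ_lt_succ_iff.mpr hij))
    · ext i : 1
      refine Fin.cases h0 (fun i => ?_) i
      simp
  · have hne : ∀ i, rr i ≠ 0 := fun i h => h0 <|
      le_antisymm (h ▸ hrr.monotone (Fin.zero_le i)) (Fin.zero_le _)
    refine Or.inl ⟨fun i => (rr i).pred (hne i), fun i j hij => ?_, ?_⟩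
    · exact Fin.pred_lt_pred_iff.mpr (hrr hij)
    · ext i : 1
      simp

theorem Matrix.det_submatrix_cons_eq_insertNth {R : Type*} [CommRing R] {k m n : ℕ}
    (A : Matrix (Fin m) (Fin n) R) (q : Fin (k + 1)) (a : Fin m) (t : Fin k → Fin m)
    (c : Fin (k + 1) → Fin n) :
    (A.submatrix (Fin.cons a t) c).det =
      (-1) ^ (q : ℕ) * (A.submatrix (q.insertNth a t) c).det := by
  have hperm : A.submatrix (Fin.cons a t) c =
      (A.submatrix (q.insertNth a t) c).submatrix q.cycleRange.symm id := by
    rw [submatrix_submatrix, Fin.insertNth_comp_cycleRange_symm, Function.comp_id]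
  rw [hperm, det_permute, Equiv.Perm.sign_symm, Fin.sign_cycleRange]
  simp

theorem Matrix.det_submatrix_cons_sum_smul {R : Type*} [CommRing R] {k m n : ℕ}
    (A : Matrix (Fin m) (Fin n) R) (w : Fin m → R) (t : Fin k → Fin m)
    (c : Fin (k + 1) → Fin n) :
    ((of (Fin.cons (∑ j, w j • A j) A)).submatrix (Fin.cons 0 (Fin.succ ∘ t)) c).det =
      ∑ j, w j * (A.submatrix (Fin.cons j t) c).det := by
  have hrow : ∀ i, (of (Fin.cons (∑ j, w j • A j) A)).submatrix (Fin.cons 0 (Fin.succ ∘ t)) c 0 i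
      = ∑ j, w j * A j (c i) := fun i => by
    show (∑ j, w j • A j) (c i) = _
    simp [Finset.sum_apply]
  have hminor : ∀ c' : Fin k → Fin n,
      (of (Fin.cons (∑ j, w j • A j) A)).submatrix (Fin.succ ∘ t) c' = A.submatrix t c' :=
    fun _ => rfl
  simp only [det_succ_row_zero, hrow, submatrix_submatrix, Fin.cons_comp_succ, hminor,
    submatrix_apply, Fin.cons_zero, Finset.sum_mul, Finset.mul_sum]
  rw [Finset.sum_comm]
  exact Finset.sum_congr rfl fun i _ => Finset.sum_congr rfl fun j _ => by ring

theorem eventually_pos_sum_mul_pow {N : ℕ} (a : Fin N → ℝ) (p : Fin N)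
    (hlow : ∀ j < p, a j = 0) (hp : 0 < a p) :
    ∀ᶠ δ in 𝓝[>] 0, 0 < ∑ j, a j * δ ^ (j : ℕ) := by
  set g : ℝ → ℝ := fun δ => ∑ j, a j * δ ^ ((j : ℕ) - p)
  have hg0 : g 0 = a p := by
    refine (Finset.sum_eq_single p (fun j _ hj => ?_) (by simp)).trans (by simp)
    rcases lt_or_gt_of_ne hj with h | h
    · simp [hlow j h]
    · simp [Nat.sub_ne_zero_of_lt (Fin.lt_def.mp h)]
  have hfac : ∀ δ, ∑ j, a j * δ ^ (j : ℕ) = δ ^ (p : ℕ) * g δ := fun δ => by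
    rw [Finset.mul_sum]
    refine Finset.sum_congr rfl fun j _ => ?_
    rcases lt_or_ge j p with h | h
    · simp [hlow j h]
    · rw [mul_left_comm, ← pow_add, Nat.add_sub_cancel' (Fin.le_def.mp h)]
  have hg : ∀ᶠ δ in 𝓝 0, 0 < g δ :=
    (continuous_finsetSum _ fun j _ => by fun_prop).continuousAt.eventually
      (eventually_gt_nhds (hp.trans_eq hg0.symm))
  filter_upwards [nhdsWithin_le_nhds hg, self_mem_nhdsWithin] with δ hgδ hδ
  rw [hfac]
  exact mul_pos (pow_pos hδ _) hgδ

def borderRow {m n : ℕ} (A : Matrix (Fin m) (Fin n) ℝ) (δ : ℝ) : Fin n → ℝ :=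
  ∑ j : Fin m, (-δ) ^ (j : ℕ) • A j

namespace IsSSRp

variable {p m n : ℕ} {A : Matrix (Fin m) (Fin n) ℝ} {ε : Fin p → ℝ}

theorem eventually_pos_minor_borderRow (hA : IsSSRp p A ε) (kk : Fin p) (hkm : (kk : ℕ) < m)
    {t : Fin kk → Fin m} (ht : StrictMono t) {c : Fin (kk + 1) → Fin n} (hc : StrictMono c) :
    ∀ᶠ δ in 𝓝[>] 0, 0 < ε kk *
      ((of (Fin.cons (borderRow A δ) A)).submatrix (Fin.cons 0 (Fin.succ ∘ t)) c).det := by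
  obtain ⟨q, hqk, hbelow, habove⟩ := Fin.exists_first_gap_of_strictMono ht
  set D : Fin m → ℝ := fun j => (A.submatrix (Fin.cons j t) c).det
  have hexpand : ∀ δ, ε kk * ((of (Fin.cons (borderRow A δ) A)).submatrix
      (Fin.cons 0 (Fin.succ ∘ t)) c).det =
      ∑ j : Fin m, ε kk * (-1) ^ (j : ℕ) * D j * δ ^ (j : ℕ) := fun δ => by
    rw [borderRow, det_submatrix_cons_sum_smul, Finset.mul_sum]
    exact Finset.sum_congr rfl fun j _ => by rw [neg_pow]; ring
  simp only [hexpand]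
  have hqm : q < m := hqk.trans_lt hkm
  let q₀ : Fin (kk + 1) := ⟨q, Nat.lt_succ_of_le hqk⟩
  let j₀ : Fin m := ⟨q, hqm⟩
  refine eventually_pos_sum_mul_pow _ j₀ (fun j hj => ?_) ?_
  · have hjk : (j : ℕ) < kk := (Fin.lt_def.mp hj).trans_le hqk
    have hrep : t ⟨j, hjk⟩ = j := Fin.ext (hbelow ⟨j, hjk⟩ hj)
    have hD : D j = 0 := det_zero_of_row_eq (Fin.succ_ne_zero ⟨j, hjk⟩).symm <| by
      funext col
      simp only [submatrix_apply, Fin.cons_zero, Fin.cons_succ, hrep]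
    simp [hD]
  · have hsorted : StrictMono (q₀.insertNth j₀ t) :=
      (Fin.strictMono_insertNth_iff _ _ _).mpr
        ⟨ht, fun i hi => Fin.lt_def.mpr ((hbelow i hi).trans_lt hi), fun i hi => habove i hi⟩
    calc 0 < ε kk * (A.submatrix (q₀.insertNth j₀ t) c).det := hA kk _ c hsorted hc
      _ = ε kk * (-1) ^ q * ((-1) ^ q * (A.submatrix (q₀.insertNth j₀ t) c).det) := by
        rw [mul_assoc, ← mul_assoc ((-1 : ℝ) ^ q), ← mul_pow]
        norm_num
      _ = ε kk * (-1) ^ q * D j₀ :=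
        congrArg _ (det_submatrix_cons_eq_insertNth A q₀ j₀ t c).symm

theorem eventually_borderRow (hpm : p ≤ m) (hA : IsSSRp p A ε) :
    ∀ᶠ δ in 𝓝[>] 0, IsSSRp p (of (Fin.cons (borderRow A δ) A)) ε := by
  simp only [IsSSRp, eventually_all]
  intro kk rr c hrr hc
  rcases Fin.strictMono_eq_succ_comp_or_eq_cons_zero hrr with ⟨t, ht, rfl⟩ | ⟨t, ht, rfl⟩
  · exact Eventually.of_forall fun _ => hA kk t c ht hc
  · exact hA.eventually_pos_minor_borderRow kk (by omega) ht hc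

end IsSSRp

theorem stmt_4_general (n : ℕ) (ε : Fin n → ℝ)
    (A : Matrix (Fin n) (Fin n) ℝ) (hA : IsSSRp n A ε) :
    ∃ r : Fin n → ℝ,
      IsSSRp n ((Matrix.of (Fin.cons r (fun i => A i))) : Matrix (Fin (n + 1)) (Fin n) ℝ) ε := by
  obtain ⟨δ, hδ⟩ := (hA.eventually_borderRow le_rfl).exists
  exact ⟨borderRow A δ, hδ⟩

theorem stmt_4 (n : ℕ) (hn : 1 ≤ n) (ε : Fin n → ℝ) (hε : ∀ i, ε i = 1 ∨ ε i = -1)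
    (A : Matrix (Fin n) (Fin n) ℝ) (hA : IsSSRp n A ε) :
    ∃ r : Fin n → ℝ,
      IsSSRp n ((Matrix.of (Fin.cons r (fun i => A i))) : Matrix (Fin (n + 1)) (Fin n) ℝ) ε :=
  stmt_4_general n ε A hA
end

section
/- Let n ≥ 1 be an integer, ε = (ε_1, …, ε_n) ∈ {±1}^n, and let A be an n×n real SSR(ε) matrix. Then there exists a row vector r ∈ ℝ^n such that the (n+1)×n matrix obtained by adjoining r as a new last row below the bottom border of A is SSR(ε). -/
open Matrix in
lemma my_det_updateRow_sum {p : ℕ} {ι : Type*} [DecidableEq ι] (M : Matrix (Fin p) (Fin p) ℝ) (j : Fin p)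
    (s : Finset ι) (c : ι → ℝ) (v : ι → Fin p → ℝ) :
    (M.updateRow j (∑ i ∈ s, c i • v i)).det = ∑ i ∈ s, c i * (M.updateRow j (v i)).det := by
  induction s using Finset.induction_on with
  | empty =>
      simp only [Finset.sum_empty]
      exact det_eq_zero_of_row_eq_zero j (by simp)
  | @insert a s hk ih =>
      rw [Finset.sum_insert hk, Finset.sum_insert hk, det_updateRow_add, det_updateRow_smul, ← ih]

open Matrix Equiv in
lemma my_key {n : ℕ} {ε : Fin n → ℝ} {A : Matrix (Fin n) (Fin n) ℝ} (hA : IsSSRp n A ε)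
    (kk : Fin n) (s : Fin kk.val → Fin n) (hs : StrictMono s)
    (cc : Fin (kk.val + 1) → Fin n) (hcc : StrictMono cc) (i : Fin n)
    (hi : ∀ t, s t ≠ i) (hmax : ∀ j : Fin n, i < j → ∃ t, s t = j) :
    0 < ε kk * ((-1 : ℝ) ^ (n - 1 - i.val) * (A.submatrix (Fin.snoc s i) cc).det) := by
  have hkn : kk.val < n := kk.isLt
  set m := n - 1 - i.val with hm
  -- the set of positions where s exceeds i
  have hPimage : (Finset.univ.filter (fun t => i < s t)).image s = Finset.Ioi i := by
    ext j
    simp only [Finset.mem_image, Finset.mem_filter, Finset.mem_univ, true_and, Finset.mem_Ioi]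
    constructor
    · rintro ⟨t, ht, rfl⟩; exact ht
    · intro hj
      obtain ⟨t, rfl⟩ := hmax j hj
      exact ⟨t, hj, rfl⟩
  have hPcard : (Finset.univ.filter (fun t => i < s t)).card = m := by
    have h1 := Finset.card_image_of_injective (Finset.univ.filter (fun t => i < s t)) hs.injective
    rw [hPimage, Fin.card_Ioi] at h1
    omega
  have hmk : m ≤ kk.val := by
    have := Finset.card_filter_le Finset.univ (fun t => i < s t)
    rw [hPcard, Finset.card_univ, Fintype.card_fin] at this
    exact this
  have F2 : ∀ t : Fin kk.val, kk.val - m ≤ t.val → i < s t := by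
    intro t ht
    by_contra hc
    have htP : t ∉ Finset.univ.filter (fun t => i < s t) := by simp [hc]
    have hsub : Finset.univ.filter (fun t => i < s t) ⊆ Finset.Ioi t := by
      intro t' ht'
      rw [Finset.mem_Ioi]
      have ht'P : i < s t' := by simpa using ht'
      rcases lt_trichotomy t t' with h | h | h
      · exact h
      · exact absurd (h ▸ ht') htP
      · exact absurd (lt_of_lt_of_le ht'P (hs.monotone h.le)) hc
    have := Finset.card_le_card hsub
    rw [hPcard, Fin.card_Ioi] at this
    have := t.isLt
    omega
  have F1 : ∀ t : Fin kk.val, t.val < kk.val - m → s t < i := by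
    intro t ht
    rcases lt_trichotomy (s t) i with h | h | h
    · exact h
    · exact absurd h (hi t)
    · exfalso
      have hsub : Finset.Ici t ⊆ Finset.univ.filter (fun t => i < s t) := by
        intro t' ht'
        rw [Finset.mem_Ici] at ht'
        simp only [Finset.mem_filter, Finset.mem_univ, true_and]
        exact lt_of_lt_of_le h (hs.monotone ht')
      have := Finset.card_le_card hsub
      rw [hPcard, Fin.card_Ici] at this
      omega
  -- the sorted insertion
  have hq3 : ∀ j : Fin (kk.val+1), ¬ (j:ℕ) < kk.val - m → (j:ℕ) ≠ kk.val - m →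
      (j:ℕ) - 1 < kk.val := by
    intro j h1 h2
    have := j.isLt
    omega
  set u : Fin (kk.val+1) → Fin n :=
    fun j => if h : (j : ℕ) < kk.val - m then s ⟨j, by omega⟩
      else if h2 : (j:ℕ) = kk.val - m then i else s ⟨(j:ℕ) - 1, hq3 j h h2⟩ with hu
  have hu_lt : ∀ (j : Fin (kk.val+1)) (h : (j:ℕ) < kk.val - m), u j = s ⟨j, by omega⟩ := by
    intro j h; simp only [hu]; rw [dif_pos h]
  have hu_eq : ∀ (j : Fin (kk.val+1)), (j:ℕ) = kk.val - m → u j = i := by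
    intro j h; simp only [hu]; rw [dif_neg (by omega), dif_pos h]
  have hu_gt : ∀ (j : Fin (kk.val+1)) (h1 : ¬ (j:ℕ) < kk.val - m) (h2 : (j:ℕ) ≠ kk.val - m),
      u j = s ⟨(j:ℕ) - 1, hq3 j h1 h2⟩ := by
    intro j h1 h2; simp only [hu]; rw [dif_neg h1, dif_neg h2]
  have humono : StrictMono u := by
    intro a b hab
    have hab' : (a:ℕ) < (b:ℕ) := hab
    have hbk := b.isLt
    rcases lt_trichotomy ((a:ℕ)) (kk.val - m) with ha | ha | ha
    · rcases lt_trichotomy ((b:ℕ)) (kk.val - m) with hb | hb | hb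
      · rw [hu_lt a ha, hu_lt b hb]; exact hs (Fin.mk_lt_mk.mpr hab')
      · rw [hu_lt a ha, hu_eq b hb]; exact F1 _ (by simpa using ha)
      · rw [hu_lt a ha, hu_gt b (by omega) (by omega)]
        exact hs (Fin.mk_lt_mk.mpr (by omega))
    · rcases lt_trichotomy ((b:ℕ)) (kk.val - m) with hb | hb | hb
      · omega
      · omega
      · rw [hu_eq a ha, hu_gt b (by omega) (by omega)]
        exact F2 _ (by simp; omega)
    · rw [hu_gt a (by omega) (by omega), hu_gt b (by omega) (by omega)]
      exact hs (Fin.mk_lt_mk.mpr (by omega))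
  -- the permutation
  have hmk1 : m < kk.val + 1 := by omega
  set mF : Fin (kk.val+1) := ⟨m, hmk1⟩ with hmF
  set π : Perm (Fin (kk.val+1)) := Fin.revPerm * mF.cycleRange * Fin.revPerm with hπ
  have hsign : Perm.sign π = (-1 : ℤˣ)^m := by
    have h1 : Perm.sign π = Perm.sign (Fin.revPerm : Perm (Fin (kk.val+1)))
        * Perm.sign mF.cycleRange * Perm.sign (Fin.revPerm : Perm (Fin (kk.val+1))) := by
      simp [hπ]
    rw [h1, mul_comm (Perm.sign (Fin.revPerm : Perm (Fin (kk.val+1)))), mul_assoc, ← sq,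
      Int.units_sq, mul_one, Fin.sign_cycleRange]
  have hπval : ∀ x : Fin (kk.val+1), ((π x : Fin (kk.val+1)) : ℕ)
      = if (x:ℕ) < kk.val - m then (x:ℕ)
        else if (x:ℕ) = kk.val - m then kk.val else (x:ℕ) - 1 := by
    intro x
    have hx := x.isLt
    have hrev : ∀ y : Fin (kk.val+1), ((Fin.revPerm y : Fin (kk.val+1)) : ℕ) = kk.val - (y:ℕ) := by
      intro y; rw [Fin.revPerm_apply, Fin.val_rev]; omega
    simp only [hπ, Perm.mul_apply]
    rcases lt_trichotomy ((x:ℕ)) (kk.val - m) with h | h | h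
    · have hgt : mF < Fin.revPerm x := by
        rw [Fin.lt_iff_val_lt_val, hrev]; simp only [hmF]; omega
      rw [Fin.cycleRange_of_gt hgt, hrev, hrev, if_pos h]
      omega
    · have heq : Fin.revPerm x = mF := by
        apply Fin.ext; rw [hrev]; simp only [hmF]; omega
      rw [heq, Fin.cycleRange_self, hrev]
      rw [if_neg (by omega), if_pos h]
      simp
    · have hlt : Fin.revPerm x < mF := by
        rw [Fin.lt_iff_val_lt_val, hrev]; simp only [hmF]; omega
      have hcyc : ((mF.cycleRange (Fin.revPerm x) : Fin (kk.val+1)) : ℕ) = kk.val - (x:ℕ) + 1 := by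
        rw [Fin.coe_cycleRange_of_lt hlt, hrev]
      rw [hrev, hcyc, if_neg (by omega), if_neg (by omega)]
      omega
  -- snoc as dite
  have hsnoc : ∀ j : Fin (kk.val+1), (Fin.snoc s i : Fin (kk.val+1) → Fin n) j
      = if h : (j:ℕ) < kk.val then s ⟨j, h⟩ else i := by
    intro j
    by_cases h : (j:ℕ) < kk.val
    · have h2 : (Fin.snoc s i : Fin (kk.val+1) → Fin n) (Fin.castSucc ⟨(j:ℕ), h⟩) = s ⟨(j:ℕ), h⟩ := by rw [Fin.snoc_castSucc]
      rw [dif_pos h, ← h2]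
      congr 1
    · have hj : j = Fin.last kk.val := by apply Fin.ext; simp; omega
      rw [dif_neg h, hj, Fin.snoc_last]
  have hperm : ∀ x : Fin (kk.val+1), (Fin.snoc s i : Fin (kk.val+1) → Fin n) (π x) = u x := by
    intro x
    have hx := x.isLt
    rw [hsnoc (π x)]
    have hπx := hπval x
    rcases lt_trichotomy ((x:ℕ)) (kk.val - m) with h | h | h
    · rw [if_pos h] at hπx
      rw [dif_pos (by omega : ((π x : Fin (kk.val+1)) : ℕ) < kk.val), hu_lt x h]
      congr 1
      apply Fin.ext
      simpa using hπx
    · rw [if_neg (by omega), if_pos h] at hπx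
      rw [dif_neg (by omega), hu_eq x h]
    · rw [if_neg (by omega), if_neg (by omega)] at hπx
      rw [dif_pos (by omega : ((π x : Fin (kk.val+1)) : ℕ) < kk.val),
        hu_gt x (by omega) (by omega)]
      congr 1
      apply Fin.ext
      simpa using hπx
  -- determinant identity
  have hdet : (A.submatrix (Fin.snoc s i) cc).det
      = ((-1 : ℝ))^m * (A.submatrix u cc).det := by
    have hmat : A.submatrix (Fin.snoc s i) cc = (A.submatrix u cc).submatrix (π.symm) id := by
      ext x j
      simp only [Matrix.submatrix_apply, id_eq]
      have := hperm (π.symm x)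
      rw [Equiv.apply_symm_apply] at this
      rw [this]
    rw [hmat, Matrix.det_permute]
    have : Perm.sign π.symm = (-1 : ℤˣ)^m := by
      rw [Equiv.Perm.sign_symm, hsign]
    rw [this]
    push_cast
    ring
  rw [hdet]
  have h1 := hA kk u cc humono hcc
  have h2 : ((-1:ℝ))^m * (((-1:ℝ))^m * (A.submatrix u cc).det) = (A.submatrix u cc).det := by
    rw [← mul_assoc, ← mul_pow]
    norm_num
  rw [h2]
  exact h1

open Matrix Equiv Filter Topology in
theorem stmt_5 (n : ℕ) (hn : 1 ≤ n) (ε : Fin n → ℝ) (hε : ∀ i, ε i = 1 ∨ ε i = -1)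
    (A : Matrix (Fin n) (Fin n) ℝ) (hA : IsSSRp n A ε) :
    ∃ r : Fin n → ℝ,
      IsSSRp n ((Matrix.of (Fin.snoc (fun i => A i) r)) : Matrix (Fin (n + 1)) (Fin n) ℝ) ε := by
  have hA' := hA
  rw [IsSSRp] at hA'
  have my_key' := fun kk s hs cc hcc i hi hmax => my_key hA kk s hs cc hcc i hi hmax
  have my_det' : ∀ {p : ℕ} (M : Matrix (Fin p) (Fin p) ℝ) (j : Fin p)
      (S : Finset (Fin n)) (c : Fin n → ℝ) (v : Fin n → Fin p → ℝ),
      (M.updateRow j (∑ i ∈ S, c i • v i)).det = ∑ i ∈ S, c i * (M.updateRow j (v i)).det :=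
    fun M j S c v => my_det_updateRow_sum M j S c v
  simp only [IsSSRp]
  classical
  set R : ℝ → Fin n → ℝ := fun δ j => ∑ t : Fin n, (-δ)^(t:ℕ) * A t.rev j with hR
  set B : ℝ → Matrix (Fin (n+1)) (Fin n) ℝ :=
    fun δ => Matrix.of (Fin.snoc (fun i => A i) (R δ)) with hB
  suffices H : ∀ᶠ δ in 𝓝[>] (0:ℝ), ∀ (kk : Fin n) (rr : Fin (kk.val + 1) → Fin (n+1))
      (c : Fin (kk.val + 1) → Fin n), StrictMono rr → StrictMono c →
      0 < ε kk * ((B δ).submatrix rr c).det by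
    obtain ⟨δ, hδ⟩ := H.exists
    exact ⟨R δ, hδ⟩
  -- evaluation of B
  have hBapp : ∀ (δ : ℝ) (p : Fin (n+1)), B δ p
      = if h : (p:ℕ) < n then A ⟨p, h⟩ else R δ := by
    intro δ p
    by_cases h : (p:ℕ) < n
    · have h2 : (Fin.snoc (fun i => A i) (R δ) : Fin (n+1) → Fin n → ℝ)
          (Fin.castSucc ⟨(p:ℕ), h⟩) = A ⟨(p:ℕ), h⟩ := by rw [Fin.snoc_castSucc]
      rw [dif_pos h, ← h2]
      rfl
    · have hp : p = Fin.last n := by apply Fin.ext; simp; omega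
      rw [dif_neg h, hp]
      show (Fin.snoc (fun i => A i) (R δ) : Fin (n+1) → Fin n → ℝ) (Fin.last n) = R δ
      rw [Fin.snoc_last]
  refine Filter.eventually_all.2 fun kk => ?_
  refine Filter.eventually_all.2 fun rr => ?_
  refine Filter.eventually_all.2 fun cc => ?_
  by_cases h1 : StrictMono rr
  swap
  · exact Filter.Eventually.of_forall (fun δ hh => absurd hh h1)
  by_cases h2 : StrictMono cc
  swap
  · exact Filter.Eventually.of_forall (fun δ _ hh => absurd hh h2)
  suffices main : ∀ᶠ δ in 𝓝[>] (0:ℝ), 0 < ε kk * ((B δ).submatrix rr cc).det by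
    exact main.mono fun δ h _ _ => h
  by_cases hlast : rr (Fin.last kk.val) = Fin.last n
  case neg =>
    -- all rows come from A; determinant does not depend on δ
    have hrlt : ∀ p : Fin (kk.val + 1), (rr p : ℕ) < n := by
      intro p
      have hle : rr p ≤ rr (Fin.last kk.val) := h1.monotone (Fin.le_last p)
      have hll : rr (Fin.last kk.val) ≤ Fin.last n := Fin.le_last _
      have : rr (Fin.last kk.val) < Fin.last n := lt_of_le_of_ne hll hlast
      have := lt_of_le_of_lt hle this
      simpa [Fin.lt_iff_val_lt_val] using this
    set s' : Fin (kk.val + 1) → Fin n := fun p => ⟨rr p, hrlt p⟩ with hs'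
    have hs'mono : StrictMono s' := fun a b hab => Fin.mk_lt_mk.mpr (h1 hab)
    have hsub : ∀ δ, (B δ).submatrix rr cc = A.submatrix s' cc := by
      intro δ
      ext p j
      simp only [Matrix.submatrix_apply]
      rw [hBapp δ (rr p), dif_pos (hrlt p)]
    refine Filter.Eventually.of_forall (fun δ => ?_)
    rw [hsub δ]
    exact hA' kk s' cc hs'mono h2
  case pos =>
    have hkn : kk.val < n := kk.isLt
    -- the top rows of the minor, inside A
    have hslt : ∀ t : Fin kk.val, (rr t.castSucc : ℕ) < n := by
      intro t
      have : rr t.castSucc < rr (Fin.last kk.val) := h1 (Fin.castSucc_lt_last t)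
      rw [hlast] at this
      simpa [Fin.lt_iff_val_lt_val] using this
    set s : Fin kk.val → Fin n := fun t => ⟨rr t.castSucc, hslt t⟩ with hs
    have hsmono : StrictMono s := fun a b hab =>
      Fin.mk_lt_mk.mpr (h1 (Fin.castSucc_lt_castSucc_iff.mpr hab))
    -- the maximal index not in the range of s
    have hex : ∃ j : Fin n, j ∉ Finset.univ.image s := by
      by_contra hc
      push_neg at hc
      have : (Finset.univ : Finset (Fin n)) ⊆ Finset.univ.image s := fun j _ => hc j
      have hcard := Finset.card_le_card this
      have := Finset.card_image_le (s := (Finset.univ : Finset (Fin kk.val))) (f := s)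
      simp [Finset.card_univ] at hcard this
      omega
    set T : Finset (Fin n) := Finset.univ.filter (fun j => j ∉ Finset.univ.image s) with hT
    have hTne : T.Nonempty := by
      obtain ⟨j, hj⟩ := hex
      refine ⟨j, ?_⟩
      rw [hT]
      exact Finset.mem_filter.mpr ⟨Finset.mem_univ j, hj⟩
    set i : Fin n := T.max' hTne with hi
    have hinotin : ∀ t, s t ≠ i := by
      intro t ht
      have hmem := T.max'_mem hTne
      rw [← hi, hT, Finset.mem_filter] at hmem
      exact hmem.2 (Finset.mem_image.mpr ⟨t, Finset.mem_univ t, ht⟩)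
    have hmax : ∀ j : Fin n, i < j → ∃ t, s t = j := by
      intro j hj
      by_contra hc
      push_neg at hc
      have hjT : j ∈ T := by
        have hnot : j ∉ Finset.univ.image s := by
          intro hmem
          obtain ⟨t, -, ht⟩ := Finset.mem_image.mp hmem
          exact hc t ht
        rw [hT]
        exact Finset.mem_filter.mpr ⟨Finset.mem_univ j, hnot⟩
      have := T.le_max' j hjT
      rw [← hi] at this
      exact absurd hj (not_lt.mpr this)
    set m : ℕ := n - 1 - i.val with hm
    have hmn : m < n := by omega
    -- the matrices C w
    set C : Fin n → Matrix (Fin (kk.val+1)) (Fin (kk.val+1)) ℝ :=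
      fun w => A.submatrix (Fin.snoc s w) cc with hC
    have hsnocval : ∀ (w : Fin n) (p : Fin (kk.val+1)),
        (Fin.snoc s w : Fin (kk.val+1) → Fin n) p
          = if h : (p:ℕ) < kk.val then s ⟨p, h⟩ else w := by
      intro w p
      by_cases h : (p:ℕ) < kk.val
      · have h2 : (Fin.snoc s w : Fin (kk.val+1) → Fin n) (Fin.castSucc ⟨(p:ℕ), h⟩)
            = s ⟨(p:ℕ), h⟩ := by rw [Fin.snoc_castSucc]
        rw [dif_pos h, ← h2]
        congr 1
      · have hp : p = Fin.last kk.val := by apply Fin.ext; simp; omega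
        rw [dif_neg h, hp, Fin.snoc_last]
    have hCup : ∀ (w w' : Fin n),
        (C w).updateRow (Fin.last kk.val) (fun j => A w' (cc j)) = C w' := by
      intro w w'
      ext p j
      rcases eq_or_ne p (Fin.last kk.val) with hp | hp
      · subst hp
        rw [Matrix.updateRow_self]
        simp only [hC, Matrix.submatrix_apply]
        rw [hsnocval w' (Fin.last kk.val), dif_neg (by simp)]
      · rw [Matrix.updateRow_ne hp]
        simp only [hC, Matrix.submatrix_apply]
        rw [hsnocval w p, hsnocval w' p,
          dif_pos (by have := Fin.val_lt_last hp; omega), dif_pos (by have := Fin.val_lt_last hp; omega)]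
    -- expansion of the determinant
    have hdetN : ∀ δ : ℝ, ((B δ).submatrix rr cc).det
        = ∑ t : Fin n, (-δ)^(t:ℕ) * (C t.rev).det := by
      intro δ
      have hNeq : (B δ).submatrix rr cc
          = (C i).updateRow (Fin.last kk.val)
              (∑ t : Fin n, (-δ)^(t:ℕ) • (fun j => A t.rev (cc j))) := by
        ext p j
        rcases eq_or_ne p (Fin.last kk.val) with hp | hp
        · subst hp
          rw [Matrix.updateRow_self]
          simp only [Matrix.submatrix_apply, Finset.sum_apply, Pi.smul_apply, smul_eq_mul]
          rw [hlast, hBapp δ (Fin.last n), dif_neg (by simp)]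
        · rw [Matrix.updateRow_ne hp]
          simp only [Matrix.submatrix_apply, hC]
          have hplt : (p : ℕ) < kk.val := by have := Fin.val_lt_last hp; omega
          have hcast : Fin.castSucc ⟨(p:ℕ), hplt⟩ = p := Fin.ext rfl
          rw [hBapp δ (rr p), hsnocval i p, dif_pos hplt]
          have hrrp : (rr p : ℕ) < n := by
            rw [← hcast]
            exact hslt _
          rw [dif_pos hrrp]
          have harg : s ⟨(p:ℕ), hplt⟩ = ⟨(rr p : ℕ), hrrp⟩ := by
            apply Fin.ext
            show ((rr (Fin.castSucc ⟨(p:ℕ), hplt⟩)) : ℕ) = ((rr p) : ℕ)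
            rw [hcast]
          rw [harg]
      rw [hNeq, my_det' (C i) (Fin.last kk.val) Finset.univ
        (fun t => (-δ)^(t:ℕ)) (fun t j => A t.rev (cc j))]
      apply Finset.sum_congr rfl
      intro t _
      rw [hCup i t.rev]
    -- vanishing coefficients
    have hdet0 : ∀ t : Fin n, (t:ℕ) < m → (C t.rev).det = 0 := by
      intro t ht
      have hrev : i < t.rev := by
        rw [Fin.lt_iff_val_lt_val, Fin.val_rev]
        omega
      obtain ⟨t0, ht0⟩ := hmax t.rev hrev
      apply Matrix.det_zero_of_row_eq (i := Fin.castSucc t0) (j := Fin.last kk.val)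
        (Fin.ne_of_lt (Fin.castSucc_lt_last t0))
      funext j
      simp only [hC, Matrix.submatrix_apply, Fin.snoc_castSucc, Fin.snoc_last]
      rw [ht0]
    -- positivity of the leading coefficient
    have hlead : 0 < ε kk * ((-1:ℝ)^m * (C ((⟨m, hmn⟩ : Fin n).rev)).det) := by
      have hrevm : (⟨m, hmn⟩ : Fin n).rev = i := by
        have hi2 := i.isLt
        apply Fin.ext
        rw [Fin.val_rev]
        simp only []
        omega
      rw [hrevm]
      have := my_key' kk s hsmono cc h2 i hinotin hmax
      simpa [hC, hm] using this
    -- the auxiliary continuous function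
    set g : ℝ → ℝ := fun δ => ∑ t : Fin n,
      (ε kk * ((-1:ℝ)^(t:ℕ) * (C t.rev).det)) * δ^((t:ℕ) - m) with hg
    have hgcont : Continuous g := by
      apply continuous_finset_sum
      intro t _
      exact continuous_const.mul (continuous_pow _)
    have hg0 : g 0 = ε kk * ((-1:ℝ)^m * (C ((⟨m, hmn⟩ : Fin n).rev)).det) := by
      show ∑ t : Fin n, (ε kk * ((-1:ℝ)^(t:ℕ) * (C t.rev).det)) * (0:ℝ)^((t:ℕ) - m)
          = ε kk * ((-1:ℝ)^m * (C ((⟨m, hmn⟩ : Fin n).rev)).det)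
      rw [Finset.sum_eq_single (⟨m, hmn⟩ : Fin n)]
      · simp
      · intro t _ htne
        rcases lt_trichotomy ((t:ℕ)) m with h | h | h
        · rw [hdet0 t h]; ring
        · exact absurd (Fin.ext h) htne
        · rw [zero_pow (by omega)]; ring
      · simp
    have hfactor : ∀ δ : ℝ, ε kk * ((B δ).submatrix rr cc).det = δ^m * g δ := by
      intro δ
      rw [hdetN δ, Finset.mul_sum, hg, Finset.mul_sum]
      apply Finset.sum_congr rfl
      intro t _
      by_cases ht : m ≤ (t:ℕ)
      · have hpow : δ^m * δ^((t:ℕ)-m) = δ^(t:ℕ) := by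
          rw [← pow_add]
          congr 1
          omega
        rw [neg_pow]
        calc ε kk * ((-1:ℝ)^(t:ℕ) * δ^(t:ℕ) * (C t.rev).det)
            = (ε kk * ((-1:ℝ)^(t:ℕ) * (C t.rev).det)) * δ^(t:ℕ) := by ring
          _ = (ε kk * ((-1:ℝ)^(t:ℕ) * (C t.rev).det)) * (δ^m * δ^((t:ℕ)-m)) := by rw [hpow]
          _ = δ^m * (ε kk * ((-1:ℝ)^(t:ℕ) * (C t.rev).det) * δ^((t:ℕ)-m)) := by ring
      · rw [hdet0 t (by omega)]
        ring
    have hgpos : ∀ᶠ δ in 𝓝 (0:ℝ), 0 < g δ := by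
      have htend : Filter.Tendsto g (𝓝 0) (𝓝 (g 0)) := hgcont.continuousAt
      apply htend.eventually
      rw [hg0]
      exact eventually_gt_nhds hlead
    have hgpos' : ∀ᶠ δ in 𝓝[>] (0:ℝ), 0 < g δ := hgpos.filter_mono nhdsWithin_le_nhds
    filter_upwards [hgpos', self_mem_nhdsWithin] with δ hgδ hδ
    rw [hfactor δ]
    exact mul_pos (pow_pos hδ m) hgδ
end

section
/- Let 1 ≤ m ≤ n be integers, ε = (ε_1, …, ε_m) ∈ {±1}^m, and let A be an m×n real SSR(ε) matrix. Then there exists a column vector c ∈ ℝ^m such that the m×(n+1) matrix [c | A], obtained by adjoining c as a new first column to the left border of A, is SSR(ε). -/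
/-!
Take `c = A v` with `v = (1, -t, t², …, (-t)^(n-1))` and `t > 0` small. Minors of `[c | A]` not
using `c` are minors of `A`. A minor on rows `r` using `c` and the columns `d` of `A` is, by
linearity in its first column, `∑ⱼ (-t)^j det A[r, (j, d)]`. The terms with `j ∈ d` vanish; if
`j₀` is the least column not in `d`, then `d` begins with `0, …, j₀ - 1`, so sorting the columns
`(j₀, d)` costs exactly the sign `(-1)^j₀`. Hence the minor is `t^j₀ (det A[r, d ∪ {j₀}] + O(t))`,
of sign `ε_k` for small `t`. Such a `j₀` exists because `d` has fewer than `m ≤ n` entries.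
-/

open Filter Topology Matrix

section
variable {R : Type*} [CommRing R]

theorem Matrix.det_of_cons_mulVec {k : ℕ} {ι : Type*} [Fintype ι]
    (M : Matrix (Fin (k + 1)) ι R) (v : ι → R) (d : Fin k → ι) :
    (Matrix.of fun i => Fin.cons ((M *ᵥ v) i) fun s => M i (d s) :
        Matrix (Fin (k + 1)) (Fin (k + 1)) R).det =
      ∑ j, v j * (M.submatrix id (Fin.cons j d)).det := by
  have hminor_of (i : Fin (k + 1)) : (of fun i => Fin.cons ((M *ᵥ v) i) fun s => M i (d s) :
      Matrix (Fin (k + 1)) (Fin (k + 1)) R).submatrix i.succAbove Fin.succ =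
        M.submatrix i.succAbove d := rfl
  have hminor_cons (i : Fin (k + 1)) (j : ι) :
      (M.submatrix id (Fin.cons j d)).submatrix i.succAbove Fin.succ =
        M.submatrix i.succAbove d := rfl
  simp_rw [det_succ_column_zero, hminor_of, hminor_cons]
  simp only [of_apply, Fin.cons_zero, submatrix_apply, id, mulVec, dotProduct, Finset.sum_mul,
    Finset.mul_sum]
  rw [Finset.sum_comm]
  refine Finset.sum_congr rfl fun j _ => Finset.sum_congr rfl fun i _ => ?_
  ring

theorem Matrix.det_submatrix_insertNth {k : ℕ} {ι : Type*} (M : Matrix (Fin (k + 1)) ι R)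
    (p : Fin (k + 1)) (x : ι) (f : Fin k → ι) :
    (M.submatrix id (p.insertNth x f)).det =
      (-1) ^ (p : ℕ) * (M.submatrix id (Fin.cons x f)).det := by
  have hperm : M.submatrix id (p.insertNth x f) =
      (M.submatrix id (Fin.cons x f)).submatrix id p.cycleRange := by
    rw [← Fin.cons_comp_cycleRange]; rfl
  rw [hperm, det_permute', Fin.sign_cycleRange]
  push_cast
  rfl
end

theorem StrictMono.exists_fixed_initial_segment {k n : ℕ} {d : Fin k → Fin n}
    (hd : StrictMono d) :
    ∃ p : Fin (k + 1), (∀ s : Fin k, s.castSucc < p → (d s : ℕ) = s) ∧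
      ∀ s : Fin k, p ≤ s.castSucc → (p : ℕ) < d s := by
  by_cases hfix : ∀ s : Fin k, (d s : ℕ) = s
  · exact ⟨Fin.last k, fun s _ => hfix s, fun s hs => absurd hs (not_le.2 s.castSucc_lt_last)⟩
  push Not at hfix
  obtain ⟨q, hq⟩ := exists_minimal_of_wellFoundedLT _ hfix
  have below : ∀ s < q, (d s : ℕ) = s := fun s hs => by
    by_contra h
    exact hs.not_ge (hq.2 h hs.le)
  refine ⟨q.castSucc, fun s hs => below s (by simpa using hs), fun s hs => ?_⟩
  have hq_lt : (q : ℕ) < d q := by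
    refine lt_of_le_of_ne (not_lt.1 fun hlt => ?_) (Ne.symm hq.1)
    have hfix' : d ⟨d q, by omega⟩ = d q := Fin.ext (below _ hlt)
    exact hlt.ne (congrArg Fin.val (hd.injective hfix'))
  exact hq_lt.trans_le (hd.monotone (by simpa using hs))

theorem eventually_pos_sum_pow_of_lowest_pos {n : ℕ} (b : Fin n → ℝ) (p : Fin n)
    (hlow : ∀ j < p, b j = 0) (hp : 0 < b p) :
    ∀ᶠ t in 𝓝[>] (0 : ℝ), 0 < ∑ j : Fin n, t ^ (j : ℕ) * b j := by
  set g : ℝ → ℝ := fun t => ∑ j : Fin n, t ^ ((j : ℕ) - p) * b j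
  have hg0 : g 0 = b p := by
    refine (Finset.sum_eq_single p (fun j _ hj => ?_) (by simp)).trans (by simp)
    rcases lt_or_gt_of_ne hj with hlt | hgt
    · simp [hlow j hlt]
    · simp [Nat.sub_ne_zero_of_lt (Fin.lt_def.1 hgt)]
  have hfactor : ∀ t, ∑ j : Fin n, t ^ (j : ℕ) * b j = t ^ (p : ℕ) * g t := by
    intro t
    rw [Finset.mul_sum]
    refine Finset.sum_congr rfl fun j _ => ?_
    rcases lt_or_ge j p with hlt | hge
    · simp [hlow j hlt]
    · rw [← mul_assoc, ← pow_add, Nat.add_sub_cancel' (Fin.le_def.1 hge)]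
  have hg : Continuous g := by fun_prop
  have hgpos : ∀ᶠ t in 𝓝 (0 : ℝ), 0 < g t :=
    hg.continuousAt.eventually (eventually_gt_nhds (hg0 ▸ hp))
  filter_upwards [nhdsWithin_le_nhds hgpos, self_mem_nhdsWithin] with t hgt (ht : 0 < t)
  rw [hfactor]
  positivity

theorem StrictMono.eq_cons_zero_or_eq_succ_comp {k n : ℕ} {c : Fin (k + 1) → Fin (n + 1)}
    (hc : StrictMono c) :
    (∃ d : Fin k → Fin n, StrictMono d ∧ c = Fin.cons 0 (Fin.succ ∘ d)) ∨
      ∃ d : Fin (k + 1) → Fin n, StrictMono d ∧ c = Fin.succ ∘ d := by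
  by_cases h0 : c 0 = 0
  · have hne : ∀ s : Fin k, c s.succ ≠ 0 := fun s => h0 ▸ (hc (Fin.succ_pos s)).ne'
    refine Or.inl ⟨_, Fin.strictMono_pred_comp hne (hc.comp Fin.strictMono_succ), ?_⟩
    ext s
    cases s using Fin.cases <;> simp [h0]
  · have hne : ∀ s, c s ≠ 0 := fun s =>
      ((Fin.pos_iff_ne_zero.2 h0).trans_le (hc.monotone (Fin.zero_le s))).ne'
    exact Or.inr ⟨_, Fin.strictMono_pred_comp hne hc, by ext s; simp⟩

theorem eventually_pos_det_cons_mulVec_neg_pow {k n : ℕ} (hkn : k < n)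
    (M : Matrix (Fin (k + 1)) (Fin n) ℝ) (σ : ℝ)
    (hM : ∀ e : Fin (k + 1) → Fin n, StrictMono e → 0 < σ * (M.submatrix id e).det)
    {d : Fin k → Fin n} (hd : StrictMono d) :
    ∀ᶠ t in 𝓝[>] (0 : ℝ), 0 < σ * (Matrix.of fun i =>
      Fin.cons ((M *ᵥ fun j => (-t) ^ (j : ℕ)) i) fun s => M i (d s) :
        Matrix (Fin (k + 1)) (Fin (k + 1)) ℝ).det := by
  obtain ⟨p, hbelow, habove⟩ := hd.exists_fixed_initial_segment
  set j₀ : Fin n := ⟨p, by omega⟩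
  have hvanish : ∀ j < j₀, (M.submatrix id (Fin.cons j d)).det = 0 := fun j hj => by
    have hjp : (j : ℕ) < p := hj
    have hjd : d ⟨j, by omega⟩ = j := Fin.ext (hbelow _ (Fin.lt_def.2 hjp))
    exact det_zero_of_column_eq (i := 0) (j := Fin.succ ⟨j, by omega⟩) (Fin.succ_ne_zero _).symm
      fun i => by simp only [submatrix_apply, id, Fin.cons_zero, Fin.cons_succ, hjd]
  have hinsert : StrictMono (p.insertNth j₀ d) :=
    (Fin.strictMono_insertNth_iff _ _ _).2 ⟨hd, fun s hs => Fin.lt_def.2 (by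
      rw [hbelow s hs]; exact hs), fun s hs => habove s hs⟩
  have hlead := hM _ hinsert
  rw [M.det_submatrix_insertNth p j₀ d] at hlead
  refine (eventually_pos_sum_pow_of_lowest_pos
    (fun j => σ * ((-1) ^ (j : ℕ) * (M.submatrix id (Fin.cons j d)).det)) j₀
    (fun j hj => by simp [hvanish j hj]) hlead).mono fun t ht => ?_
  rw [det_of_cons_mulVec, Finset.mul_sum]
  convert ht using 2 with j
  rw [neg_pow]
  ring

theorem eventually_isSSRp_cons_mulVec_neg_pow {m n : ℕ} (hmn : m ≤ n) {ε : Fin m → ℝ}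
    {A : Matrix (Fin m) (Fin n) ℝ} (hA : IsSSRp m A ε) :
    ∀ᶠ t in 𝓝[>] (0 : ℝ), IsSSRp m ((Matrix.of fun i =>
      Fin.cons ((A *ᵥ fun j => (-t) ^ (j : ℕ)) i) (A i)) : Matrix (Fin m) (Fin (n + 1)) ℝ) ε := by
  simp only [IsSSRp, eventually_all]
  intro kk r c hr hc
  rcases hc.eq_cons_zero_or_eq_succ_comp with ⟨d, hd, rfl⟩ | ⟨d, hd, rfl⟩
  · refine (eventually_pos_det_cons_mulVec_neg_pow (kk.isLt.trans_le hmn) (A.submatrix r id)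
      (ε kk) (fun e he => hA kk r e hr he) hd).mono fun t ht => ?_
    convert ht using 3
    ext i s
    cases s using Fin.cases <;> rfl
  · exact Eventually.of_forall fun t => hA kk r d hr hd

theorem stmt_6_general (m n : ℕ) (hmn : m ≤ n) (ε : Fin m → ℝ)
    (A : Matrix (Fin m) (Fin n) ℝ) (hA : IsSSRp m A ε) :
    ∃ c : Fin m → ℝ,
      IsSSRp m ((Matrix.of fun i => Fin.cons (c i) (A i)) : Matrix (Fin m) (Fin (n + 1)) ℝ) ε := by
  obtain ⟨t, ht⟩ := (eventually_isSSRp_cons_mulVec_neg_pow hmn hA).exists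
  exact ⟨_, ht⟩

theorem stmt_6 (m n : ℕ) (hm : 1 ≤ m) (hmn : m ≤ n) (ε : Fin m → ℝ)
    (hε : ∀ i, ε i = 1 ∨ ε i = -1)
    (A : Matrix (Fin m) (Fin n) ℝ) (hA : IsSSRp m A ε) :
    ∃ c : Fin m → ℝ,
      IsSSRp m ((Matrix.of fun i => Fin.cons (c i) (A i)) : Matrix (Fin m) (Fin (n + 1)) ℝ) ε :=
  stmt_6_general m n hmn ε A hA
end

section
/- Let 1 ≤ m ≤ n be integers, ε = (ε_1, …, ε_m) ∈ {±1}^m, and let A be an m×n real SSR(ε) matrix. Then there exists a column vector c ∈ ℝ^m such that the m×(n+1) matrix [A | c], obtained by adjoining c as a new last column to the right border of A, is SSR(ε). -/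
open Matrix in
lemma det_updateCol_sum' {q : ℕ} (M : Matrix (Fin q) (Fin q) ℝ) (p : Fin q)
    {ι : Type*} (s : Finset ι) (w : ι → ℝ) (u : ι → Fin q → ℝ) :
    (M.updateCol p (fun i => ∑ j ∈ s, w j * u j i)).det
      = ∑ j ∈ s, w j * (M.updateCol p (u j)).det := by
  classical
  induction s using Finset.induction with
  | empty =>
      simp only [Finset.sum_empty]
      exact Matrix.det_eq_zero_of_column_eq_zero p (fun i => by simp)
  | @insert a t ha ih =>
      rw [Finset.sum_insert ha]
      have : (fun i => ∑ j ∈ insert a t, w j * u j i)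
          = (fun i => w a * u a i) + (fun i => ∑ j ∈ t, w j * u j i) := by
        funext i; simp [Finset.sum_insert ha]
      rw [this, Matrix.det_updateCol_add]
      have : (fun i => w a * u a i) = (w a) • (u a) := by funext i; simp [mul_comm]
      rw [this, Matrix.det_updateCol_smul, ih]



set_option maxHeartbeats 1000000 in
theorem stmt_7 (m n : ℕ) (hm : 1 ≤ m) (hmn : m ≤ n) (ε : Fin m → ℝ)
    (hε : ∀ i, ε i = 1 ∨ ε i = -1)
    (A : Matrix (Fin m) (Fin n) ℝ) (hA : IsSSRp m A ε) :
    ∃ c : Fin m → ℝ,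
      IsSSRp m ((Matrix.of fun i => Fin.snoc (A i) (c i)) : Matrix (Fin m) (Fin (n + 1)) ℝ) ε := by
  classical
  set cv : ℝ → Fin m → ℝ := fun x i => ∑ j : Fin n, (-x) ^ (n - 1 - j.val) * A i j with hcv
  have key : ∀ (kk : Fin m) (r : Fin (kk.val + 1) → Fin m) (col : Fin (kk.val + 1) → Fin (n + 1)),
      ∀ᶠ x in nhdsWithin (0:ℝ) (Set.Ioi 0), StrictMono r → StrictMono col →
        0 < ε kk * (((Matrix.of fun i => Fin.snoc (A i) (cv x i)) :
            Matrix (Fin m) (Fin (n+1)) ℝ).submatrix r col).det := by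
    intro kk r col
    obtain ⟨k, hkm⟩ := kk
    by_cases hr : StrictMono r
    case neg => exact Filter.Eventually.of_forall fun x h1 h2 => absurd h1 hr
    by_cases hcol : StrictMono col
    case neg => exact Filter.Eventually.of_forall fun x h1 h2 => absurd h2 hcol
    by_cases hlast : col (Fin.last k) = Fin.last n
    case neg =>
      -- Case A : the new column is not used
      have hcl : ∀ l, (col l).val < n := by
        intro l
        have h1 : col l ≤ col (Fin.last k) := hcol.monotone (Fin.le_last l)
        have h2 : (col (Fin.last k)).val < n := by
          rcases lt_or_eq_of_le (Nat.lt_succ_iff.mp (col (Fin.last k)).isLt) with h | h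
          · exact h
          · exact absurd (Fin.ext h) hlast
        exact lt_of_le_of_lt h1 h2
      set c0 : Fin (k + 1) → Fin n := fun l => ⟨(col l).val, hcl l⟩ with hc0
      have hc0m : StrictMono c0 := fun a b hab => hcol hab
      have heq : ∀ x : ℝ, (((Matrix.of fun i => Fin.snoc (A i) (cv x i)) :
          Matrix (Fin m) (Fin (n+1)) ℝ).submatrix r col) = A.submatrix r c0 := by
        intro x
        ext i l
        have : col l = Fin.castSucc (c0 l) := by
          apply Fin.ext; simp [hc0]
        simp only [Matrix.submatrix_apply, Matrix.of_apply, this, Fin.snoc_castSucc]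
      exact Filter.Eventually.of_forall fun x _ _ => by
        rw [heq x]; exact hA ⟨k, hkm⟩ r c0 hr hc0m
    -- Case B : the new column is the last column of the minor
    have hkn : k < n := lt_of_lt_of_le hkm hmn
    have hck : ∀ l : Fin k, (col l.castSucc).val < n := by
      intro l
      have h := hcol (Fin.castSucc_lt_last l)
      rw [hlast] at h
      exact h
    set c' : Fin k → Fin n := fun l => ⟨(col l.castSucc).val, hck l⟩ with hc'def
    have hc'm : StrictMono c' := fun a b hab => hcol (Fin.castSucc_lt_castSucc_iff.mpr hab)
    set T : Finset (Fin n) := (Finset.image c' Finset.univ)ᶜ with hT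
    have hTne : T.Nonempty := by
      rw [← Finset.card_pos, hT, Finset.card_compl]
      have h1 : (Finset.image c' Finset.univ).card ≤ k :=
        le_trans Finset.card_image_le (by simp)
      simp only [Fintype.card_fin]
      omega
    set js : Fin n := T.max' hTne with hjs
    have hjs_mem : js ∈ T := T.max'_mem hTne
    have hjs_not : ∀ i, c' i ≠ js := by
      intro i h
      rw [hT, Finset.mem_compl] at hjs_mem
      exact hjs_mem (Finset.mem_image.2 ⟨i, Finset.mem_univ i, h⟩)
    have hjs_max : ∀ j : Fin n, js < j → ∃ i, c' i = j := by
      intro j hj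
      by_contra h
      push_neg at h
      have hjT : j ∈ T := by
        rw [hT, Finset.mem_compl]
        intro hmem
        obtain ⟨i, _, hi⟩ := Finset.mem_image.1 hmem
        exact h i hi
      exact absurd (T.le_max' j hjT) (not_le.2 hj)
    set p : ℕ := (Finset.univ.filter (fun i : Fin k => c' i < js)).card with hp
    have hpk : p ≤ k := le_trans (Finset.card_filter_le _ _) (by simp)
    have hip : ∀ i : Fin k, c' i < js ↔ i.val < p := by
      intro i
      constructor
      · intro h
        have hsub : Finset.Iic i ⊆ Finset.univ.filter (fun i : Fin k => c' i < js) := by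
          intro i' hi'
          rw [Finset.mem_Iic] at hi'
          exact Finset.mem_filter.2 ⟨Finset.mem_univ _, lt_of_le_of_lt (hc'm.monotone hi') h⟩
        have := Finset.card_le_card hsub
        rw [Fin.card_Iic] at this
        omega
      · intro h
        by_contra hlt
        have hgt : js < c' i := by
          rcases lt_trichotomy (c' i) js with h' | h' | h'
          · exact absurd h' hlt
          · exact absurd h' (hjs_not i)
          · exact h'
        have hsub : Finset.univ.filter (fun i : Fin k => c' i < js) ⊆ Finset.Iio i := by
          intro i' hi'
          rw [Finset.mem_filter] at hi'
          rw [Finset.mem_Iio]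
          by_contra hge
          push_neg at hge
          exact absurd (lt_of_lt_of_le hgt (hc'm.monotone hge)) (not_lt.2 hi'.2.le)
        have := Finset.card_le_card hsub
        rw [Fin.card_Iio] at this
        omega
    have hip' : ∀ i : Fin k, p ≤ i.val → js < c' i := by
      intro i hi
      rcases lt_trichotomy (c' i) js with h | h | h
      · exact absurd ((hip i).1 h) (not_lt.2 hi)
      · exact absurd h (hjs_not i)
      · exact h
    set R : ℕ := n - 1 - js.val with hR
    have hjsn : js.val < n := js.isLt
    have hpR : p + R = k := by
      have hcards : (Finset.univ.filter (fun i : Fin k => js < c' i)).card = R := by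
        have himg : (Finset.univ.filter (fun i : Fin k => js < c' i)).image c'
            = Finset.Ioi js := by
          ext j
          simp only [Finset.mem_image, Finset.mem_filter, Finset.mem_univ, true_and,
            Finset.mem_Ioi]
          constructor
          · rintro ⟨i, hi, rfl⟩; exact hi
          · intro hj
            obtain ⟨i, rfl⟩ := hjs_max j hj
            exact ⟨i, hj, rfl⟩
        have := Finset.card_image_of_injective
          (Finset.univ.filter (fun i : Fin k => js < c' i)) hc'm.injective
        rw [himg, Fin.card_Ioi] at this
        omega
      have hsplit := Finset.card_filter_add_card_filter_not
        (s := (Finset.univ : Finset (Fin k))) (p := fun i => c' i < js)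
      have hneg : (Finset.univ.filter (fun i : Fin k => ¬ c' i < js))
          = Finset.univ.filter (fun i : Fin k => js < c' i) := by
        apply Finset.filter_congr
        intro i _
        constructor
        · intro h
          rcases lt_trichotomy (c' i) js with h' | h' | h'
          · exact absurd h' h
          · exact absurd h' (hjs_not i)
          · exact h'
        · intro h h'
          exact absurd (lt_trans h h') (lt_irrefl _)
      rw [hneg, hcards] at hsplit
      simp only [Finset.card_univ, Fintype.card_fin] at hsplit
      omega
    -- the sorted insertion s
    have hs1 : ∀ i : Fin (k+1), i.val < p → i.val < k := fun i hi => lt_of_lt_of_le hi hpk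
    have hs2 : ∀ i : Fin (k+1), ¬ i.val < p → ¬ i.val = p → i.val - 1 < k := by
      intro i h1 h2
      have := i.isLt
      omega
    set s : Fin (k+1) → Fin n := fun i =>
      if h : i.val < p then c' ⟨i.val, hs1 i h⟩
      else if h2 : i.val = p then js
      else c' ⟨i.val - 1, hs2 i h h2⟩ with hsdef
    have hsm : StrictMono s := by
      intro a b hab
      have habv : a.val < b.val := hab
      rw [hsdef]
      simp only
      by_cases ha1 : a.val < p
      · rw [dif_pos ha1]
        by_cases hb1 : b.val < p
        · rw [dif_pos hb1]
          exact hc'm (by exact habv)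
        · rw [dif_neg hb1]
          by_cases hb2 : b.val = p
          · rw [dif_pos hb2]
            exact (hip _).2 ha1
          · rw [dif_neg hb2]
            have h1 : c' ⟨a.val, hs1 a ha1⟩ < js := (hip _).2 ha1
            have h2 : js < c' ⟨b.val - 1, hs2 b hb1 hb2⟩ :=
              hip' ⟨b.val - 1, hs2 b hb1 hb2⟩ (by show p ≤ b.val - 1; omega)
            exact lt_trans h1 h2
      · rw [dif_neg ha1]
        have hb1 : ¬ b.val < p := by omega
        by_cases ha2 : a.val = p
        · rw [dif_pos ha2]
          have hb2 : ¬ b.val = p := by omega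
          rw [dif_neg hb1, dif_neg hb2]
          exact hip' ⟨b.val - 1, hs2 b hb1 hb2⟩ (by show p ≤ b.val - 1; omega)
        · rw [dif_neg ha2]
          have hb2 : ¬ b.val = p := by omega
          rw [dif_neg hb1, dif_neg hb2]
          exact hc'm (by show a.val - 1 < b.val - 1; omega)
    -- the permutation
    have hslt : ∀ (lv : ℕ) (h : lv < k+1) (hlt : lv < p) (h2 : lv < k),
        s ⟨lv, h⟩ = c' ⟨lv, h2⟩ := by
      intro lv h hlt h2
      rw [hsdef]
      simp only
      rw [dif_pos hlt]
    have hsp : ∀ (h : p < k+1), s ⟨p, h⟩ = js := by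
      intro h
      rw [hsdef]
      simp only
      simp
    have hsgt : ∀ (lv : ℕ) (h : lv < k+1) (hgt : p < lv) (h2 : lv - 1 < k),
        s ⟨lv, h⟩ = c' ⟨lv - 1, h2⟩ := by
      intro lv h hgt h2
      rw [hsdef]
      simp only
      rw [dif_neg (show ¬ (lv < p) by omega), dif_neg (show ¬ (lv = p) by omega)]
    have hRk : R < k + 1 := by omega
    set Rf : Fin (k+1) := ⟨R, hRk⟩ with hRf
    set σ : Equiv.Perm (Fin (k+1)) :=
      (Fin.revPerm.trans (Fin.cycleRange Rf)⁻¹).trans Fin.revPerm with hσ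
    have hσsign : Equiv.Perm.sign σ = (-1)^R := by
      rw [hσ]
      rw [Equiv.Perm.sign_trans, Equiv.Perm.sign_trans]
      have h1 : Equiv.Perm.sign (Fin.cycleRange Rf)⁻¹ = (-1)^R := by
        rw [Equiv.Perm.sign_inv, Fin.sign_cycleRange]
      rw [h1]
      have h2 : ∀ u v : ℤˣ, u * ((-1)^R * u) = (-1)^R := by
        intro u v
        rw [mul_comm ((-1:ℤˣ)^R) u, ← mul_assoc, Int.units_mul_self, one_mul]
      exact h2 _ 1
    have hσapp : ∀ l : Fin (k+1), σ l = Fin.rev ((Fin.cycleRange Rf)⁻¹ (Fin.rev l)) := by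
      intro l; rw [hσ]; simp only [Equiv.trans_apply, Fin.revPerm_apply]
    have hsnoc_gen : ∀ (j : Fin n) (l : Fin (k+1)) (h : l.val < k),
        (Fin.snoc c' j : Fin (k+1) → Fin n) l = c' ⟨l.val, h⟩ := by
      intro j l h
      obtain ⟨lv, hl2⟩ := l
      exact @Fin.snoc_castSucc k (fun _ => Fin n) j c' ⟨lv, h⟩
    have hsnoc_lt : ∀ (l : Fin (k+1)) (h : l.val < k),
        (Fin.snoc c' js : Fin (k+1) → Fin n) l = c' ⟨l.val, h⟩ := hsnoc_gen js
    have hcr0 : (Fin.cycleRange Rf)⁻¹ (0 : Fin (k+1)) = Rf := by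
      rw [Equiv.Perm.inv_def, Equiv.symm_apply_eq, Fin.cycleRange_self]
    have hσmid : ∀ (l : Fin (k+1)) (hpl : p ≤ l.val) (hlk : l.val < k), σ l = ⟨l.val + 1, by omega⟩ := by
      intro l hpl hlk
      rw [hσapp]
      have hcr : (Fin.cycleRange Rf)⁻¹ (Fin.rev l) = ⟨k - l.val - 1, by omega⟩ := by
        rw [Equiv.Perm.inv_def, Equiv.symm_apply_eq]
        rw [Fin.cycleRange_of_lt]
        · apply Fin.ext
          rw [Fin.val_rev, Fin.val_add_one_of_lt]
          · show k + 1 - (l.val + 1) = k - l.val - 1 + 1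
            omega
          · rw [Fin.lt_iff_val_lt_val]
            show k - l.val - 1 < k
            omega
        · rw [Fin.lt_iff_val_lt_val]
          show k - l.val - 1 < R
          omega
      rw [hcr]
      apply Fin.ext
      rw [Fin.val_rev]
      show k + 1 - (k - l.val - 1 + 1) = l.val + 1
      omega
    have hσlast : σ (Fin.last k) = ⟨p, by omega⟩ := by
      rw [hσapp]
      have hrl : Fin.rev (Fin.last k) = (0 : Fin (k+1)) := by
        apply Fin.ext
        rw [Fin.val_rev]
        simp
      rw [hrl, hcr0]
      apply Fin.ext
      rw [Fin.val_rev]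
      show k + 1 - (R + 1) = p
      omega
    have hσval : ∀ l : Fin (k+1), (Fin.snoc c' js : Fin (k+1) → Fin n) l = s (σ l) := by
      intro l
      have hlv := l.isLt
      by_cases hlk : l.val < k
      · rw [hsnoc_lt l hlk]
        by_cases h1 : l.val < p
        · -- σ l = l
          have hσl : σ l = l := by
            rw [hσapp]
            have hcr : (Fin.cycleRange Rf)⁻¹ (Fin.rev l) = Fin.rev l := by
              rw [Equiv.Perm.inv_def, Equiv.symm_apply_eq]
              rw [Fin.cycleRange_of_gt]
              rw [Fin.lt_iff_val_lt_val, Fin.val_rev]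
              show R < k + 1 - (l.val + 1)
              omega
            rw [hcr, Fin.rev_rev]
          rw [hσl]
          obtain ⟨lv, hl2⟩ := l
          rw [hslt lv hl2 h1 hlk]
        · have hσl : σ l = ⟨l.val + 1, by omega⟩ := hσmid l (by omega) hlk
          rw [hσl, hsgt (l.val + 1) (by omega) (by omega) (by omega)]
          congr 1
      · -- l = last
        have hlk' : l.val = k := by omega
        have hll : l = Fin.last k := by apply Fin.ext; simpa
        rw [hll, Fin.snoc_last, hσlast, hsp (by omega)]
    -- minors with one extra column from A
    set D : Fin n → ℝ := fun j => (A.submatrix r (Fin.snoc c' j : Fin (k+1) → Fin n)).det with hD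
    have hD0 : ∀ i : Fin k, D (c' i) = 0 := by
      intro i
      simp only [hD]
      apply Matrix.det_zero_of_column_eq (i := Fin.castSucc i) (j := Fin.last k)
      · exact Fin.ne_of_lt (Fin.castSucc_lt_last i)
      · intro row
        simp only [Matrix.submatrix_apply]
        rw [Fin.snoc_castSucc, Fin.snoc_last]
    have hDjs : 0 < ε ⟨k, hkm⟩ * ((-1:ℝ)^R * D js) := by
      have hsub : A.submatrix r (Fin.snoc c' js : Fin (k+1) → Fin n)
          = (A.submatrix r s).submatrix id ⇑σ := by
        ext i l
        simp only [Matrix.submatrix_apply, id_eq]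
        exact congrArg (A (r i)) (hσval l)
      have hdet : D js = ((-1:ℝ)^R) * (A.submatrix r s).det := by
        simp only [hD]
        rw [hsub, Matrix.det_permute' σ, hσsign]
        push_cast
        ring
      have hRR : (-1:ℝ)^R * (-1)^R = 1 := by
        rw [← mul_pow]
        norm_num
      rw [hdet, show ε ⟨k, hkm⟩ * ((-1:ℝ)^R * ((-1:ℝ)^R * (A.submatrix r s).det))
        = ((-1:ℝ)^R * (-1)^R) * (ε ⟨k, hkm⟩ * (A.submatrix r s).det) from by ring, hRR, one_mul]
      exact hA ⟨k, hkm⟩ r s hr hsm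
    -- determinant expansion
    have hBdet : ∀ x : ℝ, (((Matrix.of fun i => Fin.snoc (A i) (cv x i)) :
        Matrix (Fin m) (Fin (n+1)) ℝ).submatrix r col).det
        = ∑ j : Fin n, (-x)^(n - 1 - j.val) * D j := by
      intro x
      set B : Matrix (Fin (k+1)) (Fin (k+1)) ℝ :=
        ((Matrix.of fun i => Fin.snoc (A i) (cv x i)) :
          Matrix (Fin m) (Fin (n+1)) ℝ).submatrix r col with hB
      have hBlast : ∀ i, B i (Fin.last k) = ∑ j : Fin n, (-x)^(n - 1 - j.val) * A (r i) j := by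
        intro i
        simp only [hB, Matrix.submatrix_apply, Matrix.of_apply, hlast, Fin.snoc_last, hcv]
      have hBcol : ∀ i (l : Fin (k+1)) (h : l.val < k), B i l = A (r i) (c' ⟨l.val, h⟩) := by
        intro i l h
        obtain ⟨lv, hlv2⟩ := l
        simp only [hB, Matrix.submatrix_apply, Matrix.of_apply]
        have hl2 : col ⟨lv, hlv2⟩ = Fin.castSucc (c' ⟨lv, h⟩) := by
          apply Fin.ext
          rfl
        rw [hl2, Fin.snoc_castSucc]
      have hupd : ∀ j : Fin n, B.updateCol (Fin.last k) (fun i => A (r i) j)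
          = A.submatrix r (Fin.snoc c' j : Fin (k+1) → Fin n) := by
        intro j
        ext i l
        by_cases hl : l = Fin.last k
        · subst hl
          rw [Matrix.updateCol_self, Matrix.submatrix_apply, Fin.snoc_last]
        · have hlv := l.isLt
          have hlne : l.val ≠ k := fun h => hl (Fin.ext h)
          have hlk : l.val < k := by omega
          rw [Matrix.updateCol_ne hl, Matrix.submatrix_apply, hsnoc_gen j l hlk,
            hBcol i l hlk]
      have h1 : B.updateCol (Fin.last k)
          (fun i => ∑ j : Fin n, (-x)^(n - 1 - j.val) * A (r i) j) = B := by
        ext i l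
        by_cases hl : l = Fin.last k
        · subst hl
          rw [Matrix.updateCol_self]
          exact (hBlast i).symm
        · rw [Matrix.updateCol_ne hl]
      calc B.det
          = (B.updateCol (Fin.last k)
              (fun i => ∑ j : Fin n, (-x)^(n - 1 - j.val) * A (r i) j)).det := by rw [h1]
        _ = ∑ j : Fin n, (-x)^(n - 1 - j.val)
              * (B.updateCol (Fin.last k) (fun i => A (r i) j)).det :=
            det_updateCol_sum' B (Fin.last k) Finset.univ _ _
        _ = ∑ j : Fin n, (-x)^(n - 1 - j.val) * D j := by
            apply Finset.sum_congr rfl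
            intro j _
            rw [hupd j]
    -- the polynomial g
    set g : ℝ → ℝ := fun x => ∑ j ∈ Finset.univ.filter (fun j : Fin n => j.val ≤ js.val),
        (-1:ℝ)^(n - 1 - j.val) * x^(js.val - j.val) * D j with hg
    have hfg : ∀ x : ℝ, (∑ j : Fin n, (-x)^(n - 1 - j.val) * D j) = x^R * g x := by
      intro x
      simp only [hg]
      rw [Finset.mul_sum]
      rw [← Finset.sum_filter_add_sum_filter_not Finset.univ (fun j : Fin n => j.val ≤ js.val)
        (fun j => (-x)^(n - 1 - j.val) * D j)]
      have h2 : ∑ j ∈ Finset.univ.filter (fun j : Fin n => ¬ j.val ≤ js.val),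
          (-x)^(n - 1 - j.val) * D j = 0 := by
        apply Finset.sum_eq_zero
        intro j hj
        rw [Finset.mem_filter] at hj
        have hjgt : js < j := by
          rw [Fin.lt_iff_val_lt_val]
          omega
        obtain ⟨i, rfl⟩ := hjs_max j hjgt
        rw [hD0 i, mul_zero]
      rw [h2, add_zero]
      apply Finset.sum_congr rfl
      intro j hj
      rw [Finset.mem_filter] at hj
      have hje : n - 1 - j.val = R + (js.val - j.val) := by
        have := hj.2
        omega
      rw [hje, neg_pow]
      ring
    have hg0 : g 0 = (-1:ℝ)^R * D js := by
      have hmain : ∑ j ∈ Finset.univ.filter (fun j : Fin n => j.val ≤ js.val),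
          (-1:ℝ)^(n - 1 - j.val) * (0:ℝ)^(js.val - j.val) * D j
          = (-1:ℝ)^(n - 1 - js.val) * (0:ℝ)^(js.val - js.val) * D js := by
        apply Finset.sum_eq_single_of_mem js
        · exact Finset.mem_filter.2 ⟨Finset.mem_univ js, le_refl _⟩
        · intro j hjmem hne
          have hne' : js.val - j.val ≠ 0 := by
            rw [Finset.mem_filter] at hjmem
            have h2 : j.val ≠ js.val := fun h => hne (Fin.ext h)
            have h3 := hjmem.2
            omega
          rw [zero_pow hne', mul_zero, zero_mul]
      simp only [hg]
      rw [hmain, Nat.sub_self, pow_zero, mul_one, ← hR]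
    have hgc : Continuous g := by
      apply continuous_finset_sum
      intro j _
      exact (continuous_const.mul (continuous_pow _)).mul continuous_const
    have hev : ∀ᶠ x in nhds (0:ℝ), 0 < ε ⟨k, hkm⟩ * g x := by
      have hpos : 0 < ε ⟨k, hkm⟩ * g 0 := by rw [hg0]; exact hDjs
      have ht : Filter.Tendsto (fun x => ε ⟨k, hkm⟩ * g x) (nhds 0) (nhds (ε ⟨k, hkm⟩ * g 0)) :=
        (continuous_const.mul hgc).continuousAt
      exact ht.eventually (isOpen_Ioi.eventually_mem hpos)
    filter_upwards [hev.filter_mono nhdsWithin_le_nhds, self_mem_nhdsWithin] with x hx1 hx2 _ _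
    rw [hBdet x, hfg x]
    have : ε ⟨k, hkm⟩ * (x ^ R * g x) = x ^ R * (ε ⟨k, hkm⟩ * g x) := by ring
    rw [this]
    exact mul_pos (pow_pos hx2 R) hx1
  have all : ∀ᶠ x in nhdsWithin (0:ℝ) (Set.Ioi 0),
      ∀ t : (Σ kk : Fin m, (Fin (kk.val + 1) → Fin m) × (Fin (kk.val + 1) → Fin (n + 1))),
        StrictMono t.2.1 → StrictMono t.2.2 →
        0 < ε t.1 * (((Matrix.of fun i => Fin.snoc (A i) (cv x i)) :
            Matrix (Fin m) (Fin (n+1)) ℝ).submatrix t.2.1 t.2.2).det :=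
    Filter.eventually_all.2 fun t => key t.1 t.2.1 t.2.2
  obtain ⟨x, hx⟩ := all.exists
  exact ⟨cv x, fun kk r col hr hc => hx ⟨kk, r, col⟩ hr hc⟩
end

section
/- Let m > n ≥ 1 be integers, ε = (ε_1, …, ε_n) ∈ {±1}^n, and let A be an m×n real SSR(ε) matrix. Fix any η ∈ {±1}, and define ε′ = (ε_1, …, ε_n, η) ∈ {±1}^{n+1}. Then there exists a column vector c ∈ ℝ^m such that the m×(n+1) matrix [c | A], obtained by adjoining c as a new first column to the left border of A, is SSR(ε′). -/
open Matrix Filter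

private def Mb {m n : ℕ} (A : Matrix (Fin m) (Fin n) ℝ) (v : Fin m → ℝ) :
    Matrix (Fin m) (Fin (n + 1)) ℝ :=
  Matrix.of fun i => Fin.cons (v i) (A i)

private lemma Mb_zero {m n : ℕ} (A : Matrix (Fin m) (Fin n) ℝ) (v : Fin m → ℝ) (i : Fin m) :
    Mb A v i 0 = v i := rfl

private lemma Mb_succ {m n : ℕ} (A : Matrix (Fin m) (Fin n) ℝ) (v : Fin m → ℝ) (i : Fin m)
    (j : Fin n) : Mb A v i j.succ = A i j := by
  simp [Mb]

private lemma Mb_of_val {m n : ℕ} (A : Matrix (Fin m) (Fin n) ℝ) (v : Fin m → ℝ) (i : Fin m)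
    {dd : Fin (n + 1)} {s : ℕ} (hdd : (dd : ℕ) = s + 1) (hs : s < n) :
    Mb A v i dd = A i ⟨s, hs⟩ := by
  have h : dd = Fin.succ ⟨s, hs⟩ := Fin.ext (by simpa using hdd)
  rw [h, Mb_succ]

/-- gap lemma for strict mono maps of Fin -/
private lemma strictMono_gap {k l : ℕ} {d : Fin k → Fin l} (hd : StrictMono d) :
    ∀ (t : ℕ) (p : Fin k) (h : p.val + t < k), (d p).val + t ≤ (d ⟨p.val + t, h⟩).val := by
  intro t
  induction t with
  | zero => intro p h; simp
  | succ t ih =>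
    intro p h
    have h' : p.val + t < k := by omega
    have h1 := ih p h'
    have h2 : (d ⟨p.val + t, h'⟩ : Fin l) < d ⟨p.val + t + 1, by omega⟩ := by
      apply hd; simp [Fin.lt_def]
    have : (⟨p.val + (t+1), h⟩ : Fin k) = ⟨p.val + t + 1, by omega⟩ := by
      apply Fin.ext; simp; omega
    rw [this]
    have := Fin.lt_def.mp h2
    omega

private lemma exists_delta {ι : Type*} [Finite ι] (a b : ι → ℝ) (ha : ∀ i, 0 < a i) :
    ∃ δ : ℝ, 0 < δ ∧ ∀ i, 0 < a i + δ * b i := by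
  have h : ∀ᶠ δ in nhdsWithin (0:ℝ) (Set.Ioi 0), ∀ i, 0 < a i + δ * b i := by
    rw [eventually_all]
    intro i
    have hc : Tendsto (fun δ : ℝ => a i + δ * b i) (nhdsWithin 0 (Set.Ioi 0))
        (nhds (a i + 0 * b i)) := by
      apply Tendsto.mono_left _ nhdsWithin_le_nhds
      exact (Continuous.tendsto (by continuity) 0)
    rw [zero_mul, add_zero] at hc
    exact hc.eventually (eventually_gt_nhds (ha i))
  obtain ⟨δ, hδ, hmem⟩ := (h.and eventually_mem_nhdsWithin).exists
  exact ⟨δ, hmem, hδ⟩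

private lemma det_Mb_decomp {m n k : ℕ} (A : Matrix (Fin m) (Fin (n + 1)) ℝ)
    (x y : Fin m → ℝ) (s t : ℝ) (r : Fin (k + 1) → Fin m) (d : Fin (k + 1) → Fin (n + 2))
    (hd0 : d 0 = 0) (hdne : ∀ l, l ≠ 0 → d l ≠ 0) :
    ((Mb A (fun i => s * x i + t * y i)).submatrix r d).det
      = s * ((Mb A x).submatrix r d).det + t * ((Mb A y).submatrix r d).det := by
  have key : ∀ z : Fin m → ℝ, (Mb A z).submatrix r d
      = ((Mb A x).submatrix r d).updateCol 0 (fun i => z (r i)) := by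
    intro z
    ext i l
    rw [Matrix.updateCol_apply]
    by_cases hl : l = 0
    · subst hl
      simp [Matrix.submatrix_apply, hd0, Mb_zero]
    · rw [if_neg hl]
      have hdl := hdne l hl
      have h1 : (d l : ℕ) = ((d l).val - 1) + 1 := by
        have := Fin.pos_of_ne_zero hdl; omega
      have h2 : (d l).val - 1 < n + 1 := by have := (d l).isLt; omega
      simp only [Matrix.submatrix_apply]
      rw [Mb_of_val A z (r i) h1 h2, Mb_of_val A x (r i) h1 h2]
  rw [key (fun i => s * x i + t * y i)]
  have : (fun i => (fun i => s * x i + t * y i) (r i))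
      = (s • fun i => x (r i)) + (t • fun i => y (r i)) := by
    funext i; simp [mul_comm]
  rw [this, Matrix.det_updateCol_add, Matrix.det_updateCol_smul,
    Matrix.det_updateCol_smul]
  have hx : ((Mb A x).submatrix r d).updateCol 0 (fun i => x (r i))
      = (Mb A x).submatrix r d := by
    have : (fun i => x (r i)) = fun i => ((Mb A x).submatrix r d) i 0 := by
      funext i; simp [Matrix.submatrix_apply, hd0, Mb_zero]
    rw [this, Matrix.updateCol_eq_self]
  rw [hx, ← key y]

private def Pj {m n : ℕ} (A : Matrix (Fin m) (Fin (n + 1)) ℝ) (ε' : Fin (n + 2) → ℝ) (j : ℕ)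
    (v : Fin m → ℝ) : Prop :=
  ∀ kk : Fin (n + 2), j ≤ kk.val →
    ∀ (r : Fin (kk.val + 1) → Fin m) (d : Fin (kk.val + 1) → Fin (n + 2)),
      StrictMono r → StrictMono d → (∀ i : Fin (kk.val + 1), (i : ℕ) ≤ j → ((d i : ℕ) = i)) →
      0 < ε' kk * ((Mb A v).submatrix r d).det

private lemma base_case {m n : ℕ} (A : Matrix (Fin m) (Fin (n + 1)) ℝ) (ε : Fin (n + 1) → ℝ)
    (hA : IsSSRp (n + 1) A ε) (η : ℝ) (hη : η = 1 ∨ η = -1) :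
    ∃ w : Fin m → ℝ, Pj A (Fin.snoc ε η) (n + 1) w := by
  classical
  set εn := ε (Fin.last n) with hεn
  -- the minors D and their signed versions q
  set D : (Fin (n + 2) → Fin m) → Fin (n + 2) → ℝ :=
    fun r i => (A.submatrix (fun p => r (i.succAbove p)) id).det with hD
  set q : (Fin (n + 2) → Fin m) → Fin (n + 2) → ℝ := fun r i => εn * D r i with hq
  have hqpos : ∀ r : Fin (n + 2) → Fin m, StrictMono r → ∀ i, 0 < q r i := by
    intro r hr i
    exact hA (Fin.last n) (fun p => r (i.succAbove p)) id
      (hr.comp (Fin.strictMono_succAbove i)) strictMono_id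
  set g : (Fin (n + 2) → Fin m) → ℝ → ℝ :=
    fun r u => ∑ i : Fin (n + 2), (-1) ^ (i : ℕ) * u ^ ((r i : ℕ) - (r 0 : ℕ)) * q r i with hg
  have hgcont : ∀ r, Continuous (g r) := by
    intro r
    apply continuous_finset_sum
    intro i _
    exact (continuous_const.mul (continuous_pow _)).mul continuous_const
  have hg0 : ∀ r : Fin (n + 2) → Fin m, StrictMono r → g r 0 = q r 0 := by
    intro r hr
    show (∑ i : Fin (n + 2), (-1) ^ (i : ℕ) * (0:ℝ) ^ ((r i : ℕ) - (r 0 : ℕ)) * q r i) = q r 0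
    rw [Finset.sum_eq_single 0]
    · simp
    · intro i _ hi
      have h1 : (r 0 : ℕ) < (r i : ℕ) := hr (Fin.pos_of_ne_zero hi)
      rw [zero_pow (by omega)]
      ring
    · simp
  -- eventually all g r u > 0
  have hev : ∀ᶠ u in nhdsWithin (0:ℝ) (Set.Ioi 0),
      ∀ r : Fin (n + 2) → Fin m, StrictMono r → 0 < g r u := by
    rw [eventually_all]
    intro r
    by_cases hr : StrictMono r
    · have hc : Tendsto (g r) (nhdsWithin 0 (Set.Ioi 0)) (nhds (g r 0)) :=
        ((hgcont r).tendsto 0).mono_left nhdsWithin_le_nhds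
      rw [hg0 r hr] at hc
      filter_upwards [hc.eventually (eventually_gt_nhds (hqpos r hr 0))] with u hu
      exact fun _ => hu
    · exact Eventually.of_forall fun u h => absurd h hr
  obtain ⟨u, hall, hu⟩ := (hev.and eventually_mem_nhdsWithin).exists
  rw [Set.mem_Ioi] at hu
  -- the vector w
  refine ⟨fun i => η * εn * u ^ ((i : ℕ) + 1), ?_⟩
  intro kk hkk r d hr hd hdle
  obtain ⟨kv, hkv⟩ := kk
  have hkk' : n + 1 ≤ kv := by simpa using hkk
  have hkv' : kv = n + 1 := by omega
  subst hkv'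
  -- d = id
  have hdid : d = id := by
    funext i
    exact Fin.ext (hdle i (by omega))
  subst hdid
  -- ε' at last is η
  have hsn : (Fin.snoc ε η : Fin (n + 2) → ℝ) (⟨n + 1, hkv⟩ : Fin (n + 2)) = η := by
    rw [show (⟨n + 1, hkv⟩ : Fin (n + 2)) = Fin.last (n + 1) from rfl, Fin.snoc_last]
  rw [hsn]
  -- Laplace expansion
  set w : Fin m → ℝ := fun i => η * εn * u ^ ((i : ℕ) + 1) with hw
  have hlap : ((Mb A w).submatrix r id).det
      = ∑ i : Fin (n + 2), (-1) ^ (i : ℕ) * w (r i) * D r i := by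
    rw [Matrix.det_succ_column_zero]
    apply Finset.sum_congr rfl
    intro i _
    have h2 : ((Mb A w).submatrix r id).submatrix i.succAbove Fin.succ
        = A.submatrix (fun p => r (i.succAbove p)) id := by
      ext p s
      simp [Mb, Matrix.submatrix_apply]
    rw [show (Mb A w).submatrix r id i 0 = w (r i) from rfl, h2]
  rw [hlap, Finset.mul_sum]
  have hη2 : η * η = 1 := by rcases hη with h | h <;> rw [h] <;> norm_num
  have hterm : ∀ i : Fin (n + 2), η * ((-1) ^ (i : ℕ) * w (r i) * D r i)
      = u ^ ((r 0 : ℕ) + 1) * ((-1) ^ (i : ℕ) * u ^ ((r i : ℕ) - (r 0 : ℕ)) * q r i) := by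
    intro i
    have hle : (r 0 : ℕ) ≤ (r i : ℕ) := by
      rcases eq_or_ne i 0 with h | h
      · rw [h]
      · exact le_of_lt (hr (Fin.pos_of_ne_zero h))
    have hpow : u ^ ((r i : ℕ) + 1) = u ^ ((r 0 : ℕ) + 1) * u ^ ((r i : ℕ) - (r 0 : ℕ)) := by
      rw [← pow_add]
      congr 1
      omega
    rw [hw, hq]
    simp only []
    rw [hpow]
    rcases hη with h | h <;> subst h <;> ring
  rw [Finset.sum_congr rfl (fun i _ => hterm i), ← Finset.mul_sum]
  exact mul_pos (pow_pos hu _) (hall r hr)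

private lemma step_case {m n : ℕ} (A : Matrix (Fin m) (Fin (n + 1)) ℝ) (ε : Fin (n + 1) → ℝ)
    (hA : IsSSRp (n + 1) A ε) (η : ℝ) (j : ℕ) (hj : j ≤ n) (v : Fin m → ℝ)
    (hv : Pj A (Fin.snoc ε η) (j + 1) v) : ∃ v', Pj A (Fin.snoc ε η) j v' := by
  classical
  set ε' : Fin (n + 2) → ℝ := Fin.snoc ε η with hε'
  set colA : Fin m → ℝ := fun i => A i ⟨j, by omega⟩ with hcolA
  -- the key positivity in "case B"
  have keyB : ∀ (kk : Fin (n + 2)) (r : Fin (kk.val + 1) → Fin m)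
      (d : Fin (kk.val + 1) → Fin (n + 2)),
      j ≤ kk.val → StrictMono r → StrictMono d →
      (∀ i : Fin (kk.val + 1), (i : ℕ) ≤ j → ((d i : ℕ) = i)) →
      (¬ ∃ h : j + 1 < kk.val + 1, d ⟨j + 1, h⟩ = (⟨j + 1, by omega⟩ : Fin (n + 2))) →
      0 < ε' kk * ((-1 : ℝ) ^ j * ((Mb A colA).submatrix r d).det) := by
    intro kk r d hkk hr hd hdle hnot
    have hd0 : (d 0 : ℕ) = 0 := hdle 0 (by simp)
    have hgap : ∀ i : Fin (kk.val + 1), j < (i : ℕ) → (i : ℕ) + 1 ≤ (d i : ℕ) := by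
      intro i hi
      have hlt : j + 1 < kk.val + 1 := by have := i.isLt; omega
      have hdj : (d ⟨j, by omega⟩ : ℕ) = j := hdle _ (by simp)
      have hd1 : j + 2 ≤ (d ⟨j + 1, hlt⟩ : ℕ) := by
        have h1 : (d ⟨j, by omega⟩ : Fin (n + 2)) < d ⟨j + 1, hlt⟩ := by
          apply hd; simp [Fin.lt_def]
        rw [Fin.lt_def, hdj] at h1
        rcases Nat.lt_or_ge (j + 1) (d ⟨j + 1, hlt⟩ : ℕ) with h | h
        · omega
        · exact absurd ⟨hlt, Fin.ext (show (d ⟨j + 1, hlt⟩ : ℕ) = j + 1 by omega)⟩ hnot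
      have hh : ((⟨j + 1, hlt⟩ : Fin (kk.val + 1)) : ℕ) + ((i : ℕ) - (j + 1)) < kk.val + 1 := by
        have := i.isLt; simp; omega
      have hgl := strictMono_gap hd ((i : ℕ) - (j + 1)) ⟨j + 1, hlt⟩ hh
      have hmk : (⟨((⟨j + 1, hlt⟩ : Fin (kk.val + 1)) : ℕ) + ((i : ℕ) - (j + 1)), hh⟩
          : Fin (kk.val + 1)) = i := Fin.ext (by simp; omega)
      rw [hmk] at hgl
      omega
    set e : Fin (kk.val + 1) → Fin (n + 1) := fun i =>
      if h : (i : ℕ) ≤ j then ⟨(i : ℕ), by omega⟩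
      else ⟨(d i : ℕ) - 1, by have := (d i).isLt; have := hgap i (by omega); omega⟩ with he
    have hemono : StrictMono e := by
      intro p q hpq
      have hpq' : (p : ℕ) < (q : ℕ) := hpq
      rw [Fin.lt_def]
      by_cases hp : (p : ℕ) ≤ j <;> by_cases hq' : (q : ℕ) ≤ j
      · simpa [he, hp, hq']
      · have := hgap q (by omega)
        simp [he, hp, hq']; omega
      · omega
      · have h1 : (d p : ℕ) < (d q : ℕ) := hd hpq
        have := hgap p (by omega)
        simp [he, hp, hq']; omega
    have hjlt : j < kk.val + 1 := by omega
    have hsub : A.submatrix r e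
        = ((Mb A colA).submatrix r d).submatrix id (Fin.cycleRange ⟨j, hjlt⟩) := by
      ext p l
      simp only [Matrix.submatrix_apply, id_eq]
      rcases lt_trichotomy (l : ℕ) j with hl | hl | hl
      · have hlj : l < (⟨j, hjlt⟩ : Fin (kk.val + 1)) := by rw [Fin.lt_def]; exact hl
        rw [Fin.cycleRange_of_lt hlj]
        have hl1 : ((l + 1 : Fin (kk.val + 1)) : ℕ) = (l : ℕ) + 1 := by
          rw [Fin.val_add_one_of_lt]
          rw [Fin.lt_def]
          simp [Fin.last]
          omega
        have hd1 : (d (l + 1) : ℕ) = (l : ℕ) + 1 := by rw [hdle _ (by omega), hl1]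
        rw [Mb_of_val A colA (r p) hd1 (by omega)]
        have hel : e l = ⟨(l : ℕ), by omega⟩ := Fin.ext (by simp [he, le_of_lt hl])
        rw [hel]
      · have hlj : l = ⟨j, hjlt⟩ := Fin.ext hl
        rw [hlj, Fin.cycleRange_self]
        have hd0' : d 0 = 0 := Fin.ext (by simpa using hd0)
        rw [hd0']
        rw [show Mb A colA (r p) 0 = colA (r p) from rfl]
        have hel : e ⟨j, hjlt⟩ = ⟨j, by omega⟩ := Fin.ext (by simp [he])
        rw [hel, hcolA]
      · have hlj : (⟨j, hjlt⟩ : Fin (kk.val + 1)) < l := by rw [Fin.lt_def]; exact hl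
        rw [Fin.cycleRange_of_gt hlj]
        have hge := hgap l hl
        rw [Mb_of_val A colA (r p) (show (d l : ℕ) = ((d l : ℕ) - 1) + 1 by omega)
          (by have := (d l).isLt; omega)]
        have hel : e l = ⟨(d l : ℕ) - 1, by have := (d l).isLt; omega⟩ :=
          Fin.ext (by simp [he, not_le.mpr hl])
        rw [hel]
    have hperm := Matrix.det_permute' (Fin.cycleRange (⟨j, hjlt⟩ : Fin (kk.val + 1)))
      ((Mb A colA).submatrix r d)
    rw [← hsub] at hperm
    have hsign : (((Equiv.Perm.sign (Fin.cycleRange (⟨j, hjlt⟩ : Fin (kk.val + 1)))) : ℤ) : ℝ)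
        = (-1 : ℝ) ^ j := by
      rw [Fin.sign_cycleRange]
      push_cast
      norm_num
    rw [hsign] at hperm
    have hcard : kk.val + 1 ≤ n + 1 := by
      simpa using Fintype.card_le_of_injective e hemono.injective
    have hklt : kk.val < n + 1 := by omega
    have hεeq : ε' kk = ε ⟨kk.val, hklt⟩ :=
      Fin.snoc_castSucc (α := fun _ => ℝ) η ε ⟨kk.val, hklt⟩
    have hpos := hA ⟨kk.val, hklt⟩ r e hr hemono
    rw [hperm] at hpos
    rw [hεeq]
    exact hpos
  -- choose δ uniformly over the finitely many conditions
  set T := (kk : Fin (n + 2)) × ((Fin (kk.val + 1) → Fin m) × (Fin (kk.val + 1) → Fin (n + 2)))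
    with hT
  set cond : T → Prop := fun t =>
    j ≤ t.1.val ∧ StrictMono t.2.1 ∧ StrictMono t.2.2 ∧
      (∀ i : Fin (t.1.val + 1), (i : ℕ) ≤ j → ((t.2.2 i : ℕ) = i)) ∧
      ¬ ∃ h : j + 1 < t.1.val + 1, t.2.2 ⟨j + 1, h⟩ = (⟨j + 1, by omega⟩ : Fin (n + 2))
    with hcond
  set a : T → ℝ := fun t =>
    if cond t then ε' t.1 * ((-1 : ℝ) ^ j * ((Mb A colA).submatrix t.2.1 t.2.2).det) else 1
    with haa
  set b : T → ℝ := fun t =>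
    if cond t then ε' t.1 * ((Mb A v).submatrix t.2.1 t.2.2).det else 0 with hbb
  have ha : ∀ t, 0 < a t := by
    intro t
    by_cases hc : cond t
    · rw [haa]
      simp only []
      rw [if_pos hc]
      exact keyB t.1 t.2.1 t.2.2 hc.1 hc.2.1 hc.2.2.1 hc.2.2.2.1 hc.2.2.2.2
    · rw [haa]
      simp only []
      rw [if_neg hc]
      norm_num
  obtain ⟨δ, hδ, hab⟩ := exists_delta a b ha
  refine ⟨fun i => (-1 : ℝ) ^ j * colA i + δ * v i, ?_⟩
  intro kk hkk r d hr hd hdle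
  have hd0 : d 0 = 0 := Fin.ext (by simpa using hdle 0 (by simp))
  have hdne : ∀ l, l ≠ 0 → d l ≠ 0 := by
    intro l hl hcon
    have h2 := hd (Fin.pos_of_ne_zero hl)
    rw [hd0, hcon] at h2
    exact lt_irrefl _ h2
  rw [det_Mb_decomp A colA v ((-1 : ℝ) ^ j) δ r d hd0 hdne]
  by_cases hcase : ∃ h : j + 1 < kk.val + 1, d ⟨j + 1, h⟩ = (⟨j + 1, by omega⟩ : Fin (n + 2))
  · obtain ⟨hlt, hdj1⟩ := hcase
    have hzero : ((Mb A colA).submatrix r d).det = 0 := by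
      apply Matrix.det_zero_of_column_eq (i := (0 : Fin (kk.val + 1))) (j := ⟨j + 1, hlt⟩)
      · intro h
        have := congrArg Fin.val h
        simp at this
      · intro p
        simp only [Matrix.submatrix_apply]
        rw [hd0, hdj1]
        rw [show Mb A colA (r p) 0 = colA (r p) from rfl]
        rw [Mb_of_val A colA (r p)
          (show ((⟨j + 1, by omega⟩ : Fin (n + 2)) : ℕ) = j + 1 from rfl) (by omega)]
    rw [hzero]
    have heq : ε' kk * ((-1 : ℝ) ^ j * 0 + δ * ((Mb A v).submatrix r d).det)
        = δ * (ε' kk * ((Mb A v).submatrix r d).det) := by ring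
    rw [heq]
    refine mul_pos hδ (hv kk (by omega) r d hr hd ?_)
    intro i hi
    rcases Nat.lt_or_ge (i : ℕ) (j + 1) with h | h
    · exact hdle i (by omega)
    · have hieq : i = ⟨j + 1, hlt⟩ := Fin.ext (show (i : ℕ) = j + 1 by omega)
      rw [hieq, hdj1]
  · have hc : cond ⟨kk, (r, d)⟩ := ⟨hkk, hr, hd, hdle, hcase⟩
    have h2 := hab ⟨kk, (r, d)⟩
    rw [haa, hbb] at h2
    simp only [] at h2
    rw [if_pos hc, if_pos hc] at h2
    have heq : ε' kk * ((-1 : ℝ) ^ j * ((Mb A colA).submatrix r d).det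
          + δ * ((Mb A v).submatrix r d).det)
        = ε' kk * ((-1 : ℝ) ^ j * ((Mb A colA).submatrix r d).det)
          + δ * (ε' kk * ((Mb A v).submatrix r d).det) := by ring
    rw [heq]
    exact h2

private lemma chain_case {m n : ℕ} (A : Matrix (Fin m) (Fin (n + 1)) ℝ) (ε : Fin (n + 1) → ℝ)
    (hA : IsSSRp (n + 1) A ε) (η : ℝ) (hη : η = 1 ∨ η = -1) :
    ∃ v, Pj A (Fin.snoc ε η) 0 v := by
  have key : ∀ t : ℕ, t ≤ n + 1 → ∃ v, Pj A (Fin.snoc ε η) (n + 1 - t) v := by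
    intro t
    induction t with
    | zero => intro _; exact base_case A ε hA η hη
    | succ t ih =>
      intro ht
      obtain ⟨v, hvP⟩ := ih (by omega)
      have hvP' : Pj A (Fin.snoc ε η) ((n - t) + 1) v := by
        rw [show (n - t) + 1 = n + 1 - t by omega]; exact hvP
      obtain ⟨v', hv'⟩ := step_case A ε hA η (n - t) (by omega) v hvP'
      refine ⟨v', ?_⟩
      rw [show n + 1 - (t + 1) = n - t by omega]
      exact hv'
  obtain ⟨v, hv⟩ := key (n + 1) (le_refl _)
  refine ⟨v, ?_⟩
  rw [show (0 : ℕ) = n + 1 - (n + 1) by omega]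
  exact hv

private lemma final_case {m n : ℕ} (A : Matrix (Fin m) (Fin (n + 1)) ℝ) (ε : Fin (n + 1) → ℝ)
    (hA : IsSSRp (n + 1) A ε) (η : ℝ) (v : Fin m → ℝ) (hv : Pj A (Fin.snoc ε η) 0 v) :
    IsSSRp (n + 2) (Mb A v) (Fin.snoc ε η) := by
  intro kk r d hr hd
  by_cases h0 : d 0 = 0
  · apply hv kk (by omega) r d hr hd
    intro i hi
    have h1 : i = 0 := Fin.ext (by simp only [Fin.val_zero]; omega)
    rw [h1, h0]
    simp
  · have hne : ∀ i, d i ≠ 0 := by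
      intro i hcon
      rcases eq_or_ne i 0 with h | h
      · exact h0 (h ▸ hcon)
      · have h2 := hd (Fin.pos_of_ne_zero h)
        rw [hcon] at h2
        exact absurd h2 (Fin.not_lt_zero _)
    have hnev : ∀ i, 1 ≤ (d i : ℕ) := by
      intro i
      have : (d i : ℕ) ≠ 0 := fun hc => hne i (Fin.ext (by simpa using hc))
      omega
    set c' : Fin (kk.val + 1) → Fin (n + 1) := fun i =>
      ⟨(d i : ℕ) - 1, by have := (d i).isLt; omega⟩ with hc'
    have hc'mono : StrictMono c' := by
      intro p q hpq
      have h1 : (d p : ℕ) < (d q : ℕ) := hd hpq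
      have h2 := hnev p
      rw [Fin.lt_def]
      simp [hc']
      omega
    have hsub : (Mb A v).submatrix r d = A.submatrix r c' := by
      ext p l
      simp only [Matrix.submatrix_apply]
      rw [Mb_of_val A v (r p) (show (d l : ℕ) = ((d l : ℕ) - 1) + 1 by have := hnev l; omega)
        (by have := (d l).isLt; omega)]
    have hcard : kk.val + 1 ≤ n + 1 := by
      simpa using Fintype.card_le_of_injective c' hc'mono.injective
    have hklt : kk.val < n + 1 := by omega
    have hεeq : (Fin.snoc ε η : Fin (n + 2) → ℝ) kk = ε ⟨kk.val, hklt⟩ :=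
      Fin.snoc_castSucc (α := fun _ => ℝ) η ε ⟨kk.val, hklt⟩
    rw [hsub, hεeq]
    exact hA ⟨kk.val, hklt⟩ r c' hr hc'mono

theorem stmt_8 (m n : ℕ) (hn : 1 ≤ n) (hnm : n < m) (ε : Fin n → ℝ)
    (hε : ∀ i, ε i = 1 ∨ ε i = -1) (η : ℝ) (hη : η = 1 ∨ η = -1)
    (A : Matrix (Fin m) (Fin n) ℝ) (hA : IsSSRp n A ε) :
    ∃ c : Fin m → ℝ,
      IsSSRp (n + 1) ((Matrix.of fun i => Fin.cons (c i) (A i)) : Matrix (Fin m) (Fin (n + 1)) ℝ)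
        (Fin.snoc ε η) := by
  obtain ⟨n', rfl⟩ : ∃ n', n = n' + 1 := ⟨n - 1, by omega⟩
  obtain ⟨v, hv⟩ := chain_case A ε hA η hη
  exact ⟨v, final_case A ε hA η v hv⟩
end

section
/- Let m > n ≥ 1 be integers, ε = (ε_1, …, ε_n) ∈ {±1}^n, and let A be an m×n real SSR(ε) matrix. Fix any η ∈ {±1}, and define ε′ = (ε_1, …, ε_n, η) ∈ {±1}^{n+1}. Then there exists a column vector c ∈ ℝ^m such that the m×(n+1) matrix [A | c], obtained by adjoining c as a new last column to the right border of A, is SSR(ε′). -/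
open Filter Topology Finset Matrix Asymptotics

theorem eventually_pos_sum_of_isLittleO {α ι : Type*} {l : Filter α} {s : Finset ι}
    {u : ι → α → ℝ} {i₀ : ι} (hi₀ : i₀ ∈ s) (hpos : ∀ᶠ x in l, 0 < u i₀ x)
    (hsmall : ∀ i ∈ s, i ≠ i₀ → u i =o[l] u i₀) :
    ∀ᶠ x in l, 0 < ∑ i ∈ s, u i x := by
  classical
  have hrest : (fun x => ∑ i ∈ s.erase i₀, u i x) =o[l] u i₀ :=
    IsLittleO.fun_sum fun i hi => hsmall i (mem_of_mem_erase hi) (ne_of_mem_erase hi)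
  filter_upwards [hpos, hrest.def (by norm_num : (0 : ℝ) < 1 / 2)] with x hx hrest_le
  rw [Real.norm_eq_abs, Real.norm_eq_abs, abs_of_pos hx] at hrest_le
  rw [← add_sum_erase s _ hi₀]
  linarith [neg_abs_le (∑ i ∈ s.erase i₀, u i x)]

theorem eventually_pos_sum_mul_pow_atTop {ι : Type*} {s : Finset ι} {b : ι → ℝ} {e : ι → ℕ}
    {i₀ : ι} (hi₀ : i₀ ∈ s) (hb : 0 < b i₀) (he : ∀ i ∈ s, i ≠ i₀ → e i < e i₀) :
    ∀ᶠ T in atTop, 0 < ∑ i ∈ s, b i * T ^ e i := by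
  refine eventually_pos_sum_of_isLittleO hi₀ ?_ fun i hi hne => ?_
  · filter_upwards [eventually_gt_atTop 0] with T hT using by positivity
  · exact ((isLittleO_pow_pow_atTop_of_lt (he i hi hne)).const_mul_left (b i)).const_mul_right
      hb.ne'

theorem eventually_pos_sum_mul_pow_nhdsGT_zero {ι : Type*} {s : Finset ι} {b : ι → ℝ}
    {e : ι → ℕ} {i₀ : ι} (hi₀ : i₀ ∈ s) (hb : 0 < b i₀)
    (he : ∀ i ∈ s, i ≠ i₀ → b i = 0 ∨ e i₀ < e i) :
    ∀ᶠ t in 𝓝[>] 0, 0 < ∑ i ∈ s, b i * t ^ e i := by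
  refine eventually_pos_sum_of_isLittleO hi₀ ?_ fun i hi hne => ?_
  · filter_upwards [self_mem_nhdsWithin] with t (ht : 0 < t) using by positivity
  · rcases he i hi hne with h0 | hlt
    · simp [h0]
    · exact (((isLittleO_pow_pow hlt).mono nhdsWithin_le_nhds).const_mul_left _).const_mul_right
        hb.ne'

theorem exists_max_notMem_range {α β : Type*} [LinearOrder β] [Fintype β] {f : α → β} {p : β}
    (hp : p ∉ Set.range f) : ∃ p₀, p₀ ∉ Set.range f ∧ ∀ x, p₀ < x → x ∈ Set.range f := by
  classical
  have hmissing : ({x | x ∉ Set.range f} : Finset β).Nonempty := ⟨p, mem_filter.2 ⟨mem_univ p, hp⟩⟩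
  refine ⟨_, (mem_filter.1 (max'_mem _ hmissing)).2, fun x hx => ?_⟩
  by_contra h
  exact (le_max' _ x (mem_filter.2 ⟨mem_univ x, h⟩)).not_gt hx

theorem Fin.exists_strictMono_insertNth {α : Type*} [LinearOrder α] {q : ℕ} {f : Fin q → α}
    (hf : StrictMono f) {x : α} (hx : x ∉ Set.range f) :
    ∃ ℓ : Fin (q + 1), StrictMono (Fin.insertNth ℓ x f) ∧ (ℓ : ℕ) + #{j | x < f j} = q := by
  classical
  have hne : ∀ j, f j ≠ x := fun j h => hx ⟨j, h⟩
  set L : Finset (Fin q) := {j | f j < x}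
  have hL : ∀ j, f j < x ↔ (j : ℕ) < #L := by
    refine fun j => ⟨fun hj => ?_, fun hj => ?_⟩
    · have hsub : Iic j ⊆ L := fun j' hj' =>
        mem_filter.2 ⟨mem_univ _, (hf.monotone (mem_Iic.1 hj')).trans_lt hj⟩
      simpa [Fin.card_Iic] using card_le_card hsub
    · by_contra hj'
      have hsub : L ⊆ Iio j := fun j' hj'' => mem_Iio.2 <| lt_of_not_ge fun hle =>
        hj' ((hf.monotone hle).trans_lt (mem_filter.1 hj'').2)
      have := card_le_card hsub
      rw [Fin.card_Iio] at this
      omega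
  have hcompl : #{j | x < f j} = q - #L := by
    have := card_compl L
    rw [Fintype.card_fin] at this
    rw [← this]
    congr 1
    ext j
    simp [L, (hne j).symm.le_iff_lt]
  refine ⟨⟨#L, Nat.lt_succ_of_le ((card_le_univ L).trans_eq (Fintype.card_fin q))⟩, ?_, ?_⟩
  · rw [Fin.strictMono_insertNth_iff]
    refine ⟨hf, fun j hj => (hL j).2 hj, fun j hj => ?_⟩
    exact lt_of_le_of_ne (not_lt.1 fun h => (not_lt.2 hj) ((hL j).1 h)) (hne j).symm
  · have := (card_le_univ L).trans_eq (Fintype.card_fin q)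
    simp only [hcompl]
    omega

theorem Fin.card_filter_lt_eq_rev {q N : ℕ} {S : Fin q → Fin N} (hS : StrictMono S) {p : Fin N}
    (hmax : ∀ x, p < x → x ∈ Set.range S) : #{j | p < S j} = p.rev := by
  classical
  have himage : ({j | p < S j} : Finset (Fin q)).image S = Ioi p := by
    ext x
    simp only [mem_image, mem_filter, mem_univ, true_and, mem_Ioi]
    refine ⟨fun ⟨j, hj, hjx⟩ => hjx ▸ hj, fun hx => ?_⟩
    obtain ⟨j, rfl⟩ := hmax x hx
    exact ⟨j, hx, rfl⟩
  rw [← card_image_of_injective _ hS.injective, himage, Fin.card_Ioi, Fin.val_rev]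
  omega

section Laplace

variable {R β α : Type*} [CommRing R] {k : ℕ}

theorem Matrix.det_submatrix_insertNth_s9 (M : Matrix β α R) (r : Fin (k + 1) → β) (ℓ : Fin (k + 1))
    (p : α) (S : Fin k → α) :
    (M.submatrix r (Fin.insertNth ℓ p S)).det =
      ∑ i : Fin (k + 1),
        (-1) ^ ((i : ℕ) + ℓ) * M (r i) p * (M.submatrix (r ∘ i.succAbove) S).det := by
  rw [det_succ_column _ ℓ]
  simp [submatrix_submatrix, Fin.insertNth_comp_succAbove]

theorem Matrix.det_submatrix_snoc (M : Matrix β α R) (r : Fin (k + 1) → β) (p : α)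
    (S : Fin k → α) :
    (M.submatrix r (Fin.snoc S p)).det =
      ∑ i : Fin (k + 1),
        (-1) ^ ((i : ℕ) + k) * M (r i) p * (M.submatrix (r ∘ i.succAbove) S).det := by
  rw [← Fin.insertNth_last', det_submatrix_insertNth_s9, Fin.val_last]

theorem Matrix.det_submatrix_snoc_eq_neg_one_pow_mul (M : Matrix β α R) (r : Fin (k + 1) → β)
    (ℓ : Fin (k + 1)) (p : α) (S : Fin k → α) :
    (M.submatrix r (Fin.snoc S p)).det =
      (-1) ^ (ℓ + k : ℕ) * (M.submatrix r (Fin.insertNth ℓ p S)).det := by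
  rw [det_submatrix_snoc, det_submatrix_insertNth_s9, mul_sum]
  refine sum_congr rfl fun i _ => ?_
  have hsq : ((-1 : R) ^ (ℓ : ℕ)) * (-1) ^ (ℓ : ℕ) = 1 := by
    rw [← pow_add, Even.neg_one_pow ⟨ℓ, rfl⟩]
  linear_combination
    -((-1 : R) ^ ((i : ℕ) + k) * M (r i) p * (M.submatrix (r ∘ i.succAbove) S).det) * hsq

end Laplace

theorem StrictMono.eq_castSucc_comp_or_eq_snoc {k n : ℕ} {κ : Fin (k + 1) → Fin (n + 1)}
    (hκ : StrictMono κ) :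
    (∃ κ' : Fin (k + 1) → Fin n, StrictMono κ' ∧ κ = Fin.castSucc ∘ κ') ∨
      ∃ S : Fin k → Fin n, StrictMono S ∧ κ = Fin.snoc (Fin.castSucc ∘ S) (Fin.last n) := by
  by_cases hlast : κ (Fin.last k) = Fin.last n
  · have hne : ∀ j : Fin k, κ j.castSucc ≠ Fin.last n := fun j =>
      Fin.lt_last_iff_ne_last.1 (hlast ▸ hκ (Fin.castSucc_lt_last j))
    refine Or.inr ⟨fun j => (κ j.castSucc).castPred (hne j),
      fun a b hab => Fin.castPred_lt_castPred_iff.2 (hκ (Fin.castSucc_lt_castSucc_iff.2 hab)), ?_⟩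
    funext j
    induction j using Fin.lastCases <;> simp [hlast]
  · have hne : ∀ j, κ j ≠ Fin.last n := fun j =>
      Fin.lt_last_iff_ne_last.1 ((hκ.monotone (Fin.le_last j)).trans_lt
        (Fin.lt_last_iff_ne_last.2 hlast))
    exact Or.inl ⟨fun j => (κ j).castPred (hne j),
      fun a b hab => Fin.castPred_lt_castPred_iff.2 (hκ hab), by funext j; simp⟩

theorem IsSSRp.exists_maximal_minor_sign {m n : ℕ} {A : Matrix (Fin m) (Fin n) ℝ}
    {ε : Fin n → ℝ} (hA : IsSSRp n A ε) :
    ∃ δ : ℝ, ∀ r : Fin n → Fin m, StrictMono r → 0 < δ * (A.submatrix r id).det := by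
  cases n with
  | zero => exact ⟨1, fun r _ => by simp⟩
  | succ n => exact ⟨ε (Fin.last n), fun r hr => hA (Fin.last n) r id hr strictMono_id⟩

section Extension

variable {m n : ℕ}

def prependCol (w : Fin m → ℝ) (A : Matrix (Fin m) (Fin n) ℝ) : Matrix (Fin m) (Fin (n + 1)) ℝ :=
  of fun i => vecCons (w i) (A i)

@[simp]
theorem prependCol_apply_zero (w : Fin m → ℝ) (A : Matrix (Fin m) (Fin n) ℝ) (i : Fin m) :
    prependCol w A i 0 = w i := rfl

@[simp]
theorem prependCol_apply_succ (w : Fin m → ℝ) (A : Matrix (Fin m) (Fin n) ℝ) (i : Fin m)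
    (j : Fin n) : prependCol w A i j.succ = A i j := rfl

theorem exists_det_prependCol_pos {A : Matrix (Fin m) (Fin n) ℝ} {δ : ℝ}
    (hA : ∀ r : Fin n → Fin m, StrictMono r → 0 < δ * (A.submatrix r id).det) {η : ℝ}
    (hη : η ≠ 0) :
    ∃ w : Fin m → ℝ, ∀ r : Fin (n + 1) → Fin m, StrictMono r →
      0 < η * ((prependCol w A).submatrix r id).det := by
  set w : ℝ → Fin m → ℝ := fun T x => η * (-1) ^ n * δ * T ^ (x : ℕ)
  -- Expanding along the first column, for large `T` the term of the bottom row dominates.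
  have hT : ∀ r : Fin (n + 1) → Fin m, StrictMono r → ∀ᶠ T in atTop,
      0 < η * ((prependCol (w T) A).submatrix r id).det := by
    intro r hr
    have hexp : ∀ T : ℝ, η * ((prependCol (w T) A).submatrix r id).det =
        ∑ i : Fin (n + 1), η ^ 2 * (-1) ^ ((i : ℕ) + n) * δ *
          (A.submatrix (r ∘ i.succAbove) id).det * T ^ (r i : ℕ) := by
      intro T
      rw [det_succ_column_zero, mul_sum]
      refine sum_congr rfl fun i _ => ?_
      have hsub : ((prependCol (w T) A).submatrix r id).submatrix i.succAbove Fin.succ =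
          A.submatrix (r ∘ i.succAbove) id := by
        ext; simp
      rw [hsub]
      simp only [submatrix_apply, id, prependCol_apply_zero, w]
      ring
    simp_rw [hexp]
    refine eventually_pos_sum_mul_pow_atTop (mem_univ (Fin.last n)) ?_
      fun i _ hi => hr (Fin.lt_last_iff_ne_last.2 hi)
    have hlast := hA _ (hr.comp (Fin.strictMono_succAbove (Fin.last n)))
    rw [Fin.val_last, Even.neg_one_pow ⟨n, rfl⟩]
    nlinarith [sq_pos_of_ne_zero hη]
  obtain ⟨T, hT⟩ := (eventually_all.2 fun r => eventually_imp_distrib_left.2 (hT r)).exists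
  exact ⟨w T, hT⟩

theorem det_submatrix_prependCol_pos {A : Matrix (Fin m) (Fin n) ℝ} {ε : Fin n → ℝ} {η : ℝ}
    {w : Fin m → ℝ} (hA : IsSSRp n A ε)
    (hw : ∀ r : Fin (n + 1) → Fin m, StrictMono r → 0 < η * ((prependCol w A).submatrix r id).det)
    {kk : Fin (n + 1)} {r : Fin (kk + 1) → Fin m} {T : Fin (kk + 1) → Fin (n + 1)}
    (hr : StrictMono r) (hT : StrictMono T) (hT0 : kk = Fin.last n ∨ ∀ j, T j ≠ 0) :
    0 < (Fin.snoc ε η : Fin (n + 1) → ℝ) kk * ((prependCol w A).submatrix r T).det := by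
  induction kk using Fin.lastCases with
  | last =>
    obtain rfl : T = id := hT.eq_id
    simpa using hw r hr
  | cast k =>
    have hT0 := hT0.resolve_left (Fin.castSucc_ne_last k)
    set T' : Fin (k + 1) → Fin n := fun j => (T j).pred (hT0 j)
    have hT' : StrictMono T' := fun a b hab => Fin.pred_lt_pred_iff.2 (hT hab)
    have hsub : (prependCol w A).submatrix r T = A.submatrix r T' := by
      ext i j
      rw [submatrix_apply, submatrix_apply, ← Fin.succ_pred (T j) (hT0 j), prependCol_apply_succ]
    rw [hsub, Fin.snoc_castSucc]
    exact hA k r T' hr hT'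

def extensionCol (A : Matrix (Fin m) (Fin n) ℝ) (w : Fin m → ℝ) (t : ℝ) : Fin m → ℝ :=
  prependCol w A *ᵥ fun p => (-t) ^ (p.rev : ℕ)

theorem det_submatrix_snoc_extensionCol (A : Matrix (Fin m) (Fin n) ℝ) (w : Fin m → ℝ) (t : ℝ)
    {k : ℕ} (r : Fin (k + 1) → Fin m) (S : Fin k → Fin n) :
    ((of fun i => Fin.snoc (A i) (extensionCol A w t i)).submatrix r
        (Fin.snoc (Fin.castSucc ∘ S) (Fin.last n))).det =
      ∑ p, (-t) ^ (p.rev : ℕ) * ((prependCol w A).submatrix r (Fin.snoc (Fin.succ ∘ S) p)).det := by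
  simp only [det_submatrix_snoc, mul_sum]
  rw [sum_comm]
  refine sum_congr rfl fun i _ => ?_
  have hQ : (of fun i => Fin.snoc (A i) (extensionCol A w t i)).submatrix (r ∘ i.succAbove)
      (Fin.castSucc ∘ S) = A.submatrix (r ∘ i.succAbove) S := by
    ext; simp
  have hM : (prependCol w A).submatrix (r ∘ i.succAbove) (Fin.succ ∘ S) =
      A.submatrix (r ∘ i.succAbove) S := by
    ext; simp
  rw [hQ, hM]
  simp only [of_apply, Fin.snoc_last, extensionCol, mulVec, dotProduct, sum_mul, mul_sum]
  refine sum_congr rfl fun p _ => ?_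
  ring

theorem det_submatrix_snoc_max_notMem_pos {A : Matrix (Fin m) (Fin n) ℝ} {ε : Fin n → ℝ}
    {η : ℝ} {w : Fin m → ℝ} (hA : IsSSRp n A ε)
    (hw : ∀ r : Fin (n + 1) → Fin m, StrictMono r → 0 < η * ((prependCol w A).submatrix r id).det)
    {kk : Fin (n + 1)} {r : Fin (kk + 1) → Fin m} {S : Fin kk → Fin n} (hr : StrictMono r)
    (hS : StrictMono S) {p₀ : Fin (n + 1)} (hp₀ : p₀ ∉ Set.range (Fin.succ ∘ S))
    (hp₀max : ∀ x, p₀ < x → x ∈ Set.range (Fin.succ ∘ S)) :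
    0 < (Fin.snoc ε η : Fin (n + 1) → ℝ) kk * (-1) ^ (p₀.rev : ℕ) *
      ((prependCol w A).submatrix r (Fin.snoc (Fin.succ ∘ S) p₀)).det := by
  obtain ⟨ℓ, hT, hℓ⟩ := Fin.exists_strictMono_insertNth ((Fin.strictMono_succ).comp hS) hp₀
  rw [Fin.card_filter_lt_eq_rev ((Fin.strictMono_succ).comp hS) hp₀max] at hℓ
  have hT0 : kk = Fin.last n ∨
      ∀ j, Fin.insertNth (α := fun _ => Fin (n + 1)) ℓ p₀ (Fin.succ ∘ S) j ≠ 0 := by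
    by_cases hp₀0 : p₀ = 0
    · left
      ext
      rw [hp₀0, Fin.val_rev, Fin.val_zero] at hℓ
      simp only [Fin.val_last]
      omega
    · refine Or.inr fun j => ?_
      induction j using Fin.succAboveCases ℓ <;> simp [hp₀0, Fin.succ_ne_zero]
  have hpos := det_submatrix_prependCol_pos hA hw hr hT hT0
  have hsign : (-1 : ℝ) ^ (p₀.rev : ℕ) * (-1) ^ ((ℓ : ℕ) + kk) = 1 := by
    rw [← pow_add]
    exact Even.neg_one_pow ⟨kk, by omega⟩
  rw [det_submatrix_snoc_eq_neg_one_pow_mul _ _ ℓ]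
  convert hpos using 1
  linear_combination (Fin.snoc ε η : Fin (n + 1) → ℝ) kk *
      ((prependCol w A).submatrix r (Fin.insertNth ℓ p₀ (Fin.succ ∘ S))).det * hsign

theorem eventually_pos_det_snoc_extensionCol {A : Matrix (Fin m) (Fin n) ℝ} {ε : Fin n → ℝ}
    {η : ℝ} {w : Fin m → ℝ} (hA : IsSSRp n A ε)
    (hw : ∀ r : Fin (n + 1) → Fin m, StrictMono r → 0 < η * ((prependCol w A).submatrix r id).det)
    {kk : Fin (n + 1)} {r : Fin (kk + 1) → Fin m} {S : Fin kk → Fin n} (hr : StrictMono r)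
    (hS : StrictMono S) :
    ∀ᶠ t in 𝓝[>] 0, 0 < (Fin.snoc ε η : Fin (n + 1) → ℝ) kk *
      ((of fun i => Fin.snoc (A i) (extensionCol A w t i)).submatrix r
        (Fin.snoc (Fin.castSucc ∘ S) (Fin.last n))).det := by
  set E : Fin (n + 1) → ℝ := fun p => ((prependCol w A).submatrix r (Fin.snoc (Fin.succ ∘ S) p)).det
  have hexp : ∀ t, (Fin.snoc ε η : Fin (n + 1) → ℝ) kk *
      ((of fun i => Fin.snoc (A i) (extensionCol A w t i)).submatrix r
        (Fin.snoc (Fin.castSucc ∘ S) (Fin.last n))).det =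
      ∑ p, (Fin.snoc ε η : Fin (n + 1) → ℝ) kk * (-1) ^ (p.rev : ℕ) * E p * t ^ (p.rev : ℕ) := by
    intro t
    rw [det_submatrix_snoc_extensionCol, mul_sum]
    refine sum_congr rfl fun p _ => ?_
    rw [neg_pow]
    ring
  obtain ⟨p₀, hp₀, hp₀max⟩ := exists_max_notMem_range (f := Fin.succ ∘ S) (p := 0) <| by
    simp [Fin.succ_ne_zero]
  simp only [hexp]
  refine eventually_pos_sum_mul_pow_nhdsGT_zero (mem_univ p₀)
    (det_submatrix_snoc_max_notMem_pos hA hw hr hS hp₀ hp₀max) fun p _ hp => ?_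
  by_cases hmem : p ∈ Set.range (Fin.succ ∘ S)
  · left
    obtain ⟨j, rfl⟩ := hmem
    have hE : E ((Fin.succ ∘ S) j) = 0 :=
      det_zero_of_column_eq (Fin.castSucc_lt_last j).ne fun i => by simp
    rw [hE, mul_zero]
  · exact Or.inr (Fin.rev_lt_rev.2 (lt_of_le_of_ne (not_lt.1 fun h => hmem (hp₀max p h)) hp))

theorem eventually_isSSRp_snoc_extensionCol {A : Matrix (Fin m) (Fin n) ℝ} {ε : Fin n → ℝ}
    {η : ℝ} {w : Fin m → ℝ} (hA : IsSSRp n A ε)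
    (hw : ∀ r : Fin (n + 1) → Fin m, StrictMono r → 0 < η * ((prependCol w A).submatrix r id).det) :
    ∀ᶠ t in 𝓝[>] 0, IsSSRp (n + 1) (of fun i => Fin.snoc (A i) (extensionCol A w t i))
      (Fin.snoc ε η) := by
  simp only [IsSSRp, eventually_all]
  intro kk r κ hr hκ
  rcases hκ.eq_castSucc_comp_or_eq_snoc with ⟨κ', hκ', rfl⟩ | ⟨S, hS, rfl⟩
  · have hkk : (kk : ℕ) < n := by simpa using Fintype.card_le_of_injective κ' hκ'.injective
    obtain ⟨k, rfl⟩ : ∃ k : Fin n, k.castSucc = kk :=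
      Fin.exists_castSucc_eq.2 fun h => hkk.ne (congrArg Fin.val h)
    refine .of_forall fun t => ?_
    have hsub : (of fun i => Fin.snoc (A i) (extensionCol A w t i)).submatrix r
        (Fin.castSucc ∘ κ') = A.submatrix r κ' := by
      ext; simp
    rw [hsub, Fin.snoc_castSucc]
    exact hA k r κ' hr hκ'
  · exact eventually_pos_det_snoc_extensionCol hA hw hr hS

end Extension

theorem stmt_9_general (m n : ℕ) (ε : Fin n → ℝ) (η : ℝ) (hη : η = 1 ∨ η = -1)
    (A : Matrix (Fin m) (Fin n) ℝ) (hA : IsSSRp n A ε) :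
    ∃ c : Fin m → ℝ,
      IsSSRp (n + 1) ((Matrix.of fun i => Fin.snoc (A i) (c i)) : Matrix (Fin m) (Fin (n + 1)) ℝ)
        (Fin.snoc ε η) := by
  obtain ⟨δ, hδ⟩ := hA.exists_maximal_minor_sign
  have hη0 : η ≠ 0 := by rcases hη with rfl | rfl <;> norm_num
  obtain ⟨w, hw⟩ := exists_det_prependCol_pos hδ hη0
  obtain ⟨t, ht⟩ := (eventually_isSSRp_snoc_extensionCol hA hw).exists
  exact ⟨extensionCol A w t, ht⟩

theorem stmt_9 (m n : ℕ) (hn : 1 ≤ n) (hnm : n < m) (ε : Fin n → ℝ)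
    (hε : ∀ i, ε i = 1 ∨ ε i = -1) (η : ℝ) (hη : η = 1 ∨ η = -1)
    (A : Matrix (Fin m) (Fin n) ℝ) (hA : IsSSRp n A ε) :
    ∃ c : Fin m → ℝ,
      IsSSRp (n + 1) ((Matrix.of fun i => Fin.snoc (A i) (c i)) : Matrix (Fin m) (Fin (n + 1)) ℝ)
        (Fin.snoc ε η) :=
  stmt_9_general m n ε η hη A hA
end

section
/- Let n ≥ 1 be an integer, ε = (ε_1, …, ε_{2n}) ∈ {±1}^{2n}, and let A = [c^1 | ⋯ | c^{2n}] be a 2n×2n real SSR(ε) matrix with columns c^1, …, c^{2n}. Then there exists a column vector c ∈ ℝ^{2n} such that the 2n×(2n+1) matrix [c^1 | ⋯ | c^n | c | c^{n+1} | ⋯ | c^{2n}], obtained by inserting c between the n-th and (n+1)-th columns of A, is SSR(ε). -/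
open Finset Matrix Filter Topology

variable {R : Type*} [CommRing R]

lemma Matrix.det_updateCol_sum_smul {n ι : Type*} [Fintype n] [DecidableEq n] [Fintype ι]
    (M : Matrix n n R) (j : n) (v : ι → R) (w : ι → n → R) :
    (M.updateCol j (∑ q, v q • w q)).det = ∑ q, v q * (M.updateCol j (w q)).det := by
  simp_rw [← det_transpose (M.updateCol _ _), ← updateRow_transpose]
  have := map_sum
    ((detRowAlternating (n := n) (R := R)).toMultilinearMap.toLinearMap M.transpose j)
    (fun q => v q • w q) univ
  simp only [map_smul, smul_eq_mul] at this
  exact this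

lemma Matrix.det_submatrix_insertNth_s11 {m N k : ℕ} (A : Matrix (Fin m) (Fin N) R)
    (r : Fin (k + 1) → Fin m) (s : Fin (k + 1)) (q : Fin N) (g : Fin k → Fin N) :
    (A.submatrix r (s.insertNth q g)).det =
      (-1) ^ (s : ℕ) * (A.submatrix r (Fin.cons q g)).det := by
  have h : s.insertNth q g = Fin.cons q g ∘ s.cycleRange := by
    rw [← Fin.insertNth_comp_cycleRange_symm s q g, Function.comp_assoc,
      Equiv.symm_comp_self, Function.comp_id]
  rw [h, ← Function.comp_id r, ← Matrix.submatrix_submatrix, Matrix.det_permute',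
    Fin.sign_cycleRange]
  simp

lemma Fin.strictMono_insertNth_card_filter_lt {N k : ℕ} {g : Fin k → Fin N} (hg : StrictMono g)
    {q : Fin N} (hq : q ∉ Set.range g) :
    StrictMono (Fin.insertNth (⟨#{l | g l < q}, Nat.lt_succ_of_le (card_le_univ _ |>.trans
      (Fintype.card_fin k).le)⟩ : Fin (k + 1)) q g) := by
  have hlt (l : Fin k) : (l : ℕ) < #{l | g l < q} ↔ g l < q :=
    Fin.lt_card_filter_univ_iff_apply_of_imp _ fun i j hji hi => (hg.monotone hji).trans_lt hi
  refine (Fin.strictMono_insertNth_iff _ _ _).2 ⟨hg, fun l hl => (hlt l).1 hl, fun l hl => ?_⟩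
  have : ¬ g l < q := fun h => (Fin.le_iff_val_le_val.1 hl).not_gt ((hlt l).2 h)
  exact lt_of_le_of_ne (not_lt.1 this) fun h => hq ⟨l, h.symm⟩

lemma Fin.card_filter_val_lt_add {N k : ℕ} {g : Fin k → Fin N} (hg : Function.Injective g)
    {x y : ℕ} (hxy : x ≤ y) (hyN : y ≤ N)
    (hmem : ∀ v : Fin N, x ≤ v → (v : ℕ) < y → v ∈ Set.range g) :
    #{l | (g l : ℕ) < y} = #{l | (g l : ℕ) < x} + (y - x) := by
  have hIco : #{l | x ≤ (g l : ℕ) ∧ (g l : ℕ) < y} = y - x := by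
    rw [← Nat.card_Ico]
    refine card_bij (fun l _ => (g l : ℕ)) (by simp) (fun _ _ _ _ h => hg (Fin.ext h)) ?_
    intro v hv
    rw [Finset.mem_Ico] at hv
    obtain ⟨l, hl⟩ := hmem ⟨v, by omega⟩ hv.1 hv.2
    exact ⟨l, by simp [hl, hv.1, hv.2], by simp [hl]⟩
  rw [← hIco, ← card_filter_add_card_filter_not (fun l => (g l : ℕ) < x), filter_filter,
    filter_filter]
  congr 2 <;> ext l <;> simp only [mem_filter, mem_univ, true_and, not_lt] <;> omega

lemma Fin.exists_succAbove_comp_eq {α : Type*} {N : ℕ} {p : Fin (N + 1)} {h : α → Fin (N + 1)}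
    (hp : ∀ a, h a ≠ p) : ∃ g : α → Fin N, p.succAbove ∘ g = h := by
  choose g hg using fun a => Fin.exists_succAbove_eq (hp a)
  exact ⟨g, funext hg⟩

lemma Matrix.det_submatrix_insertNth_mulVec {m N k : ℕ} (A : Matrix (Fin m) (Fin N) R)
    (p : Fin (N + 1)) (v : Fin N → R) (r : Fin (k + 1) → Fin m) (s : Fin (k + 1))
    (g : Fin k → Fin N) :
    ((of fun i => p.insertNth ((A *ᵥ v) i) (A i)).submatrix r
      (s.insertNth p (p.succAbove ∘ g))).det =
      ∑ q, v q * (A.submatrix r (s.insertNth q g)).det := by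
  set B := (of fun i => p.insertNth ((A *ᵥ v) i) (A i)).submatrix r
    (s.insertNth p (p.succAbove ∘ g))
  have hcol : (fun i => B i s) = ∑ q, v q • fun i => A (r i) q := by
    ext i
    simp [B, mulVec, dotProduct, mul_comm]
  have hupdate (q : Fin N) :
      B.updateCol s (fun i => A (r i) q) = A.submatrix r (s.insertNth q g) := by
    ext i l
    cases l using Fin.succAboveCases s <;> simp [B]
  rw [← B.updateCol_eq_self s, hcol, det_updateCol_sum_smul]
  simp only [hupdate]

lemma eventually_pos_sum_mul_pow_s11 {ι : Type*} [Fintype ι] (a : ι → ℝ) {w : ι → ℕ}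
    (hw : Function.Injective w) {i₀ : ι} (hpos : 0 < a i₀) (hlow : ∀ i, w i < w i₀ → a i = 0) :
    ∀ᶠ t in 𝓝[>] 0, 0 < ∑ i, a i * t ^ w i := by
  set G : ℝ → ℝ := fun u => ∑ i, a i * u ^ (w i - w i₀)
  have hG0 : G 0 = a i₀ := by
    refine (Finset.sum_eq_single i₀ (fun i _ hi => ?_) (by simp)).trans (by simp)
    rcases lt_or_gt_of_ne (hw.ne hi) with h | h
    · simp [hlow i h]
    · simp [Nat.sub_ne_zero_of_lt h]
  have hfactor (t : ℝ) : ∑ i, a i * t ^ w i = t ^ w i₀ * G t := by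
    rw [Finset.mul_sum]
    refine Finset.sum_congr rfl fun i _ => ?_
    rcases lt_or_ge (w i) (w i₀) with h | h
    · simp [hlow i h]
    · rw [← Nat.add_sub_cancel' h, pow_add, Nat.add_sub_cancel_left]
      ring
  have hG : ∀ᶠ t in 𝓝 0, 0 < G t :=
    (continuous_finsetSum _ fun i _ => by fun_prop).continuousAt.eventually
      (eventually_gt_nhds (show 0 < G 0 from hG0 ▸ hpos))
  filter_upwards [nhdsWithin_le_nhds hG, self_mem_nhdsWithin] with t hGt ht
  rw [hfactor]
  exact mul_pos (pow_pos ht _) hGt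

-- The gap `p` lies between the columns `p - 1` and `p`; `gapWeight` enumerates the columns by
-- distance from it, alternating sides: `p - 1, p, p - 2, p + 1, …`.
def gapDist {N : ℕ} (p : Fin (N + 1)) (q : Fin N) : ℕ := if (q : ℕ) < p then p - 1 - q else q - p

def gapWeight {N : ℕ} (p : Fin (N + 1)) (q : Fin N) : ℕ :=
  if (q : ℕ) < p then 2 * (p - 1 - q) else 2 * (q - p) + 1

noncomputable def gapCoeff {N : ℕ} (p : Fin (N + 1)) (t : ℝ) (q : Fin N) : ℝ :=
  (-1) ^ gapDist p q * t ^ gapWeight p q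

lemma gapWeight_injective {N : ℕ} (p : Fin (N + 1)) : Function.Injective (gapWeight p) := by
  intro q q' h
  unfold gapWeight at h
  ext
  split_ifs at h <;> omega

lemma neg_one_pow_add_card_filter_lt_eq_neg_one_pow_gapDist {N k : ℕ} {p : Fin (N + 1)}
    {g : Fin k → Fin N} (hg : Function.Injective g) {q : Fin N} (hq : q ∉ Set.range g)
    (hnear : ∀ v, gapWeight p v < gapWeight p q → v ∈ Set.range g) :
    (-1 : ℝ) ^ (#{l | (g l : ℕ) < p} + #{l | g l < q}) = (-1) ^ gapDist p q := by
  have hp := p.is_le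
  unfold gapDist
  split_ifs with hqp
  · have hsplit := Fin.card_filter_val_lt_add hg (x := q + 1) (y := p) hqp hp fun v h1 h2 =>
      hnear v (by grind [gapWeight])
    have hskip : #{l | (g l : ℕ) < q + 1} = #{l | g l < q} := by
      refine congrArg card (filter_congr fun l _ => ?_)
      have : (g l : ℕ) ≠ q := fun h => hq ⟨l, Fin.ext h⟩
      rw [Fin.lt_def]
      omega
    rw [hsplit, hskip, show (p : ℕ) - (q + 1) = p - 1 - q by omega, add_comm, ← add_assoc,
      ← two_mul, pow_add, pow_mul, neg_one_sq, one_pow, one_mul]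
  · have hsplit := Fin.card_filter_val_lt_add hg (x := p) (y := q) (by omega) q.is_lt.le
      fun v h1 h2 => hnear v (by grind [gapWeight])
    have hfin : #{l | g l < q} = #{l | (g l : ℕ) < q} := rfl
    rw [hfin, hsplit, ← add_assoc, ← two_mul, pow_add, pow_mul, neg_one_sq, one_pow, one_mul]

theorem neg_one_pow_gapDist_mul_det_submatrix_insertNth_pos {m N k : ℕ}
    {A : Matrix (Fin m) (Fin N) ℝ} {r : Fin (k + 1) → Fin m} {e : ℝ}
    (hA : ∀ h : Fin (k + 1) → Fin N, StrictMono h → 0 < e * (A.submatrix r h).det)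
    {p : Fin (N + 1)} {s : Fin (k + 1)} {g : Fin k → Fin N} (hg : StrictMono g)
    (hs : ∀ l, l.castSucc < s ↔ (g l : ℕ) < p) {q : Fin N} (hq : q ∉ Set.range g)
    (hnear : ∀ v, gapWeight p v < gapWeight p q → v ∈ Set.range g) :
    0 < (-1) ^ gapDist p q * (e * (A.submatrix r (s.insertNth q g)).det) := by
  -- `a` is the slot where `q` belongs among the columns `g`.
  have hsorted := Fin.strictMono_insertNth_card_filter_lt hg hq
  set a : Fin (k + 1) := ⟨#{l | g l < q}, _⟩
  have hs_card : #{l | (g l : ℕ) < p} = s := by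
    rw [← filter_congr fun l _ => hs l]
    simp only [Fin.lt_def, Fin.val_castSucc, Fin.card_filter_val_lt]
    exact min_eq_right (Nat.lt_succ_iff.1 s.is_lt)
  have hsq (j : ℕ) : ((-1 : ℝ) ^ j) ^ 2 = 1 := by rw [← pow_mul, pow_mul', neg_one_sq, one_pow]
  have hdet : (A.submatrix r (s.insertNth q g)).det
      = (-1) ^ (s + a : ℕ) * (A.submatrix r (a.insertNth q g)).det := by
    rw [A.det_submatrix_insertNth_s11, A.det_submatrix_insertNth_s11 (s := a), pow_add]
    linear_combination (-(-1) ^ (s : ℕ) * (A.submatrix r (Fin.cons q g)).det) * hsq a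
  rw [← neg_one_pow_add_card_filter_lt_eq_neg_one_pow_gapDist hg.injective hq hnear, hs_card,
    hdet]
  calc 0 < e * (A.submatrix r (a.insertNth q g)).det := hA _ hsorted
    _ = ((-1) ^ (s + a : ℕ)) ^ 2 * (e * (A.submatrix r (a.insertNth q g)).det) := by
      rw [hsq, one_mul]
    _ = _ := by ring

lemma Fin.exists_eq_insertNth_succAbove_comp {N k : ℕ} {p : Fin (N + 1)} {s : Fin (k + 1)}
    {cs : Fin (k + 1) → Fin (N + 1)} (hcs : StrictMono cs) (hs : cs s = p) :
    ∃ g : Fin k → Fin N, StrictMono g ∧ (∀ l, l.castSucc < s ↔ (g l : ℕ) < p) ∧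
      cs = s.insertNth p (p.succAbove ∘ g) := by
  obtain ⟨g, hg⟩ := Fin.exists_succAbove_comp_eq (h := s.removeNth cs)
    fun l h => s.succAbove_ne l (hcs.injective (h.trans hs.symm))
  have hcs_eq : cs = s.insertNth p (p.succAbove ∘ g) := by
    rw [hg, ← hs, Fin.insertNth_self_removeNth]
  rw [hcs_eq, Fin.strictMono_insertNth_iff] at hcs
  obtain ⟨hg_mono, hleft, hright⟩ := hcs
  refine ⟨g, fun a b h => Fin.succAbove_lt_succAbove_iff.1 (hg_mono h), fun l => ?_, hcs_eq⟩
  refine ⟨fun h => ?_, fun h => not_le.1 fun h' => ?_⟩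
  · have := hleft l h
    rwa [Function.comp_apply, Fin.succAbove_lt_iff_castSucc_lt, Fin.lt_def, Fin.val_castSucc]
      at this
  · have := hright l h'
    rw [Function.comp_apply, Fin.lt_succAbove_iff_le_castSucc, Fin.le_def, Fin.val_castSucc]
      at this
    omega

theorem eventually_pos_det_submatrix_insertNth_gapCoeff_insertNth {m N k : ℕ}
    {A : Matrix (Fin m) (Fin N) ℝ} {r : Fin (k + 1) → Fin m} {e : ℝ}
    (hA : ∀ h : Fin (k + 1) → Fin N, StrictMono h → 0 < e * (A.submatrix r h).det)
    (hkN : k < N) (p : Fin (N + 1)) {s : Fin (k + 1)} {g : Fin k → Fin N} (hg : StrictMono g)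
    (hs : ∀ l, l.castSucc < s ↔ (g l : ℕ) < p) :
    ∀ᶠ t in 𝓝[>] 0, 0 < e * ((of fun i => p.insertNth ((A *ᵥ gapCoeff p t) i) (A i)).submatrix r
      (s.insertNth p (p.succAbove ∘ g))).det := by
  obtain ⟨q, hq⟩ : ∃ q, q ∉ Set.range g := by
    by_contra! h
    exact (Fintype.card_le_of_surjective g h).not_gt (by simpa using hkN)
  obtain ⟨q₀, hq₀, hmin⟩ :=
    (univ.filter (· ∉ Set.range g)).exists_min_image (gapWeight p) ⟨q, by simpa using hq⟩
  have hnear (v : Fin N) (hv : gapWeight p v < gapWeight p q₀) : v ∈ Set.range g :=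
    by_contra fun h => (hmin v (by simpa using h)).not_gt hv
  have hrepeat (q : Fin N) (hq : q ∈ Set.range g) :
      (A.submatrix r (s.insertNth q g)).det = 0 := by
    obtain ⟨l, rfl⟩ := hq
    exact det_zero_of_column_eq (s.succAbove_ne l).symm fun i => by simp
  refine (eventually_pos_sum_mul_pow_s11
    (fun q => (-1) ^ gapDist p q * (e * (A.submatrix r (s.insertNth q g)).det))
    (gapWeight_injective p)
    (neg_one_pow_gapDist_mul_det_submatrix_insertNth_pos hA hg hs (by simpa using hq₀) hnear)
    fun q hq => by rw [hrepeat q (hnear q hq), mul_zero, mul_zero]).mono fun t ht => ?_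
  rw [det_submatrix_insertNth_mulVec, mul_sum]
  convert ht using 2 with q
  simp only [gapCoeff]
  ring

theorem eventually_pos_det_submatrix_insertNth_gapCoeff {m N k : ℕ}
    {A : Matrix (Fin m) (Fin N) ℝ} {r : Fin (k + 1) → Fin m} {e : ℝ}
    (hA : ∀ h : Fin (k + 1) → Fin N, StrictMono h → 0 < e * (A.submatrix r h).det)
    (hkN : k < N) (p : Fin (N + 1)) {cs : Fin (k + 1) → Fin (N + 1)} (hcs : StrictMono cs) :
    ∀ᶠ t in 𝓝[>] 0,
      0 < e * ((of fun i => p.insertNth ((A *ᵥ gapCoeff p t) i) (A i)).submatrix r cs).det := by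
  by_cases hp : ∃ s, cs s = p
  · obtain ⟨s, hs⟩ := hp
    obtain ⟨g, hg, hgap, rfl⟩ := Fin.exists_eq_insertNth_succAbove_comp hcs hs
    exact eventually_pos_det_submatrix_insertNth_gapCoeff_insertNth hA hkN p hg hgap
  · push Not at hp
    obtain ⟨g, rfl⟩ := Fin.exists_succAbove_comp_eq hp
    refine Eventually.of_forall fun t => ?_
    have hsub : (of fun i => p.insertNth ((A *ᵥ gapCoeff p t) i) (A i)).submatrix r
        (p.succAbove ∘ g) = A.submatrix r g := by
      ext
      simp
    rw [hsub]
    exact hA g fun a b h => Fin.succAbove_lt_succAbove_iff.1 (hcs h)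

theorem IsSSRp.exists_insertNth {P m N : ℕ} {A : Matrix (Fin m) (Fin N) ℝ} {ε : Fin P → ℝ}
    (hA : IsSSRp P A ε) (hmN : m ≤ N) (p : Fin (N + 1)) :
    ∃ c : Fin m → ℝ, IsSSRp P (of fun i => p.insertNth (c i) (A i)) ε := by
  suffices h : ∀ᶠ t in 𝓝[>] 0, IsSSRp P (of fun i => p.insertNth ((A *ᵥ gapCoeff p t) i) (A i)) ε
    from h.exists.elim fun _ ht => ⟨_, ht⟩
  simp only [IsSSRp, eventually_all]
  intro kk r cs hr hcs
  have hkm : kk.val + 1 ≤ m := by simpa using Fintype.card_le_of_injective r hr.injective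
  exact eventually_pos_det_submatrix_insertNth_gapCoeff (fun h hh => hA kk r h hr hh) (by omega) p
    hcs

theorem stmt_11 (n : ℕ) (ε : Fin (2 * n) → ℝ)
    (A : Matrix (Fin (2 * n)) (Fin (2 * n)) ℝ) (hA : IsSSRp (2 * n) A ε) :
    ∃ c : Fin (2 * n) → ℝ,
      IsSSRp (2 * n)
        ((Matrix.of fun i => Fin.insertNth (⟨n, by omega⟩ : Fin (2 * n + 1)) (c i) (A i)) :
          Matrix (Fin (2 * n)) (Fin (2 * n + 1)) ℝ) ε :=
  hA.exists_insertNth le_rfl _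
end
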